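/- arXiv:2101.05883 — 10 statements merged into one kernel-verified Lean document; each statement's English description precedes it below -/
import Mathlib

section
/- Let ι be an index type, w : ι → ℝ with w ξ ≥ 1 for all ξ, and assume the two-sided Weyl law with exponent Q > 0 (finite level sets, c₁·λ^Q ≤ N(λ) ≤ c₂·λ^Q for λ ≥ 1). Then there exist constants c, C > 0 such that for all Λ ≥ 2: c·log Λ ≤ ∑_{ξ : w ξ ≤ Λ} (w ξ)^{−Q} ≤ C·log Λ. (This logarithmic partial-sum estimate at the critical order m = −Q underlies both the log(1/t) singularity of regularised traces and the Dixmier traceability computations in the paper.) -/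
set_option maxHeartbeats 1000000 in
theorem partial_sum_weight_critical_log_asymp
    {ι : Type*} (w : ι → ℝ) (hw : ∀ ξ, 1 ≤ w ξ)
    (hfin : ∀ lam : ℝ, 1 ≤ lam → {ξ | w ξ ≤ lam}.Finite)
    (Q : ℝ) (hQ : 0 < Q) (c₁ c₂ : ℝ) (hc₁ : 0 < c₁) (hc₂ : 0 < c₂)
    (hN : ∀ lam : ℝ, ∀ _ : 1 ≤ lam,
      c₁ * lam ^ Q ≤ (Nat.card {ξ // w ξ ≤ lam} : ℝ) ∧
      (Nat.card {ξ // w ξ ≤ lam} : ℝ) ≤ c₂ * lam ^ Q) :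
    ∃ c C : ℝ, 0 < c ∧ 0 < C ∧ ∀ Λ : ℝ, ∀ hΛ2 : 2 ≤ Λ,
      c * Real.log Λ ≤ (∑ ξ ∈ (hfin Λ (by linarith)).toFinset, (w ξ) ^ (-Q)) ∧
      (∑ ξ ∈ (hfin Λ (by linarith)).toFinset, (w ξ) ^ (-Q)) ≤ C * Real.log Λ := by
  classical
  -- the ratio R for the geometric decomposition
  set R : ℝ := max 2 ((2 * c₂ / c₁) ^ (1 / Q)) with hRdef
  have hR2 : (2 : ℝ) ≤ R := le_max_left _ _
  have hR1 : (1 : ℝ) < R := by linarith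
  have hR0 : (0 : ℝ) < R := by linarith
  have hbase : (0 : ℝ) < 2 * c₂ / c₁ := by positivity
  have hRQ : 2 * c₂ / c₁ ≤ R ^ Q := by
    calc 2 * c₂ / c₁ = ((2 * c₂ / c₁) ^ (1 / Q)) ^ Q := by
          rw [← Real.rpow_mul hbase.le, one_div_mul_cancel hQ.ne', Real.rpow_one]
      _ ≤ R ^ Q := Real.rpow_le_rpow (Real.rpow_nonneg hbase.le _) (le_max_right _ _) hQ.le
  have hRQpos : (0 : ℝ) < R ^ Q := Real.rpow_pos_of_pos hR0 _
  have hRnQpos : (0 : ℝ) < R ^ (-Q) := Real.rpow_pos_of_pos hR0 _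
  have hRQinv : R ^ (-Q) * R ^ Q = 1 := by
    rw [← Real.rpow_add hR0]; simp
  have hRhalf : c₂ * R ^ (-Q) ≤ c₁ / 2 := by
    have h1 : 2 * c₂ ≤ R ^ Q * c₁ := (div_le_iff₀ hc₁).mp hRQ
    have h2 := mul_le_mul_of_nonneg_right h1 hRnQpos.le
    have h3 : R ^ Q * c₁ * R ^ (-Q) = c₁ := by
      rw [mul_comm (R ^ Q) c₁, mul_assoc, mul_comm (R ^ Q), hRQinv, mul_one]
    rw [h3] at h2
    linarith
  have hlogR : 0 < Real.log R := Real.log_pos hR1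
  -- the partial sum function
  set S : ℝ → ℝ := fun lam =>
    if h : 1 ≤ lam then ∑ ξ ∈ (hfin lam h).toFinset, (w ξ) ^ (-Q) else 0 with hSdef
  have hSval : ∀ (lam : ℝ) (h : 1 ≤ lam),
      S lam = ∑ ξ ∈ (hfin lam h).toFinset, (w ξ) ^ (-Q) := by
    intro lam h
    simp only [hSdef, dif_pos h]
  have hcard : ∀ (lam : ℝ) (h : 1 ≤ lam),
      (((hfin lam h).toFinset.card : ℝ)) = (Nat.card {ξ // w ξ ≤ lam} : ℝ) := by
    intro lam h
    have e : Nat.card {ξ // w ξ ≤ lam} = (hfin lam h).toFinset.card := by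
      rw [← Set.ncard_eq_toFinset_card _ (hfin lam h)]
      rfl
    rw [e]
  have hsub : ∀ (μ lam : ℝ) (hμ : 1 ≤ μ) (hle : μ ≤ lam),
      (hfin μ hμ).toFinset ⊆ (hfin lam (hμ.trans hle)).toFinset := by
    intro μ lam hμ hle
    rw [Set.Finite.toFinset_subset_toFinset]
    intro ξ hξ; exact le_trans hξ hle
  have hterm_pos : ∀ ξ : ι, 0 < (w ξ) ^ (-Q) := by
    intro ξ; exact Real.rpow_pos_of_pos (lt_of_lt_of_le one_pos (hw ξ)) _
  have hmono : ∀ (μ lam : ℝ) (hμ : 1 ≤ μ) (hle : μ ≤ lam), S μ ≤ S lam := by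
    intro μ lam hμ hle
    rw [hSval μ hμ, hSval lam (hμ.trans hle)]
    exact Finset.sum_le_sum_of_subset_of_nonneg (hsub μ lam hμ hle)
      (fun ξ _ _ => (hterm_pos ξ).le)
  -- upper increment
  have hup : ∀ (μ lam : ℝ) (hμ : 1 ≤ μ) (hle : μ ≤ lam),
      S lam ≤ S μ + c₂ * lam ^ Q * μ ^ (-Q) := by
    intro μ lam hμ hle
    have hlam : 1 ≤ lam := hμ.trans hle
    rw [hSval μ hμ, hSval lam hlam]
    set D := (hfin lam hlam).toFinset \ (hfin μ hμ).toFinset with hD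
    have hsplit : (∑ ξ ∈ (hfin lam hlam).toFinset, (w ξ) ^ (-Q)) =
        (∑ ξ ∈ D, (w ξ) ^ (-Q)) + ∑ ξ ∈ (hfin μ hμ).toFinset, (w ξ) ^ (-Q) :=
      (Finset.sum_sdiff (hsub μ lam hμ hle)).symm
    rw [hsplit]
    have hDbound : (∑ ξ ∈ D, (w ξ) ^ (-Q)) ≤ (D.card : ℝ) * μ ^ (-Q) := by
      have h := Finset.sum_le_card_nsmul D (fun ξ => (w ξ) ^ (-Q)) (μ ^ (-Q)) ?_
      · simpa [nsmul_eq_mul] using h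
      · intro ξ hξ
        rw [hD, Finset.mem_sdiff, Set.Finite.mem_toFinset, Set.Finite.mem_toFinset] at hξ
        have hlt : μ < w ξ := lt_of_not_ge hξ.2
        exact Real.rpow_le_rpow_of_nonpos (by linarith) hlt.le (by linarith)
    have hDcard : (D.card : ℝ) ≤ c₂ * lam ^ Q := by
      have h1 : (D.card : ℝ) ≤ ((hfin lam hlam).toFinset.card : ℝ) := by
        exact_mod_cast Finset.card_le_card Finset.sdiff_subset
      rw [hcard lam hlam] at h1
      exact h1.trans (hN lam hlam).2
    have hμQ : (0:ℝ) < μ ^ (-Q) := Real.rpow_pos_of_pos (by linarith) _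
    nlinarith [hDbound, hDcard, hμQ]
  -- lower increment
  have hlo : ∀ (μ lam : ℝ) (hμ : 1 ≤ μ) (hle : μ ≤ lam),
      S μ + (c₁ * lam ^ Q - c₂ * μ ^ Q) * lam ^ (-Q) ≤ S lam := by
    intro μ lam hμ hle
    have hlam : 1 ≤ lam := hμ.trans hle
    rw [hSval μ hμ, hSval lam hlam]
    set D := (hfin lam hlam).toFinset \ (hfin μ hμ).toFinset with hD
    have hsplit : (∑ ξ ∈ (hfin lam hlam).toFinset, (w ξ) ^ (-Q)) =
        (∑ ξ ∈ D, (w ξ) ^ (-Q)) + ∑ ξ ∈ (hfin μ hμ).toFinset, (w ξ) ^ (-Q) :=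
      (Finset.sum_sdiff (hsub μ lam hμ hle)).symm
    rw [hsplit]
    have hDbound : (D.card : ℝ) * lam ^ (-Q) ≤ ∑ ξ ∈ D, (w ξ) ^ (-Q) := by
      have h := Finset.card_nsmul_le_sum D (fun ξ => (w ξ) ^ (-Q)) (lam ^ (-Q)) ?_
      · simpa [nsmul_eq_mul] using h
      · intro ξ hξ
        rw [hD, Finset.mem_sdiff, Set.Finite.mem_toFinset] at hξ
        exact Real.rpow_le_rpow_of_nonpos (lt_of_lt_of_le one_pos (hw ξ)) hξ.1 (by linarith)
    have hDcard : c₁ * lam ^ Q - c₂ * μ ^ Q ≤ (D.card : ℝ) := by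
      have hc : (D.card : ℝ) =
          ((hfin lam hlam).toFinset.card : ℝ) - ((hfin μ hμ).toFinset.card : ℝ) := by
        rw [hD, Finset.card_sdiff_of_subset (hsub μ lam hμ hle)]
        exact_mod_cast Nat.cast_sub (Finset.card_le_card (hsub μ lam hμ hle))
      rw [hc, hcard lam hlam, hcard μ hμ]
      have h1 := (hN lam hlam).1
      have h2 := (hN μ hμ).2
      linarith
    have hlamQ : (0:ℝ) ≤ lam ^ (-Q) := (Real.rpow_pos_of_pos (by linarith) _).le
    have := mul_le_mul_of_nonneg_right hDcard hlamQ
    linarith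
  -- simple lower bound: c₁ ≤ S lam for all lam ≥ 1
  have hSc₁ : ∀ (lam : ℝ) (h : 1 ≤ lam), c₁ ≤ S lam := by
    intro lam h
    rw [hSval lam h]
    have hlam0 : (0:ℝ) < lam := by linarith
    have hinv : lam ^ Q * lam ^ (-Q) = 1 := by
      rw [← Real.rpow_add hlam0]; simp
    have hbound : (((hfin lam h).toFinset.card : ℝ)) * lam ^ (-Q) ≤
        ∑ ξ ∈ (hfin lam h).toFinset, (w ξ) ^ (-Q) := by
      have hh := Finset.card_nsmul_le_sum (hfin lam h).toFinset
        (fun ξ => (w ξ) ^ (-Q)) (lam ^ (-Q)) ?_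
      · simpa [nsmul_eq_mul] using hh
      · intro ξ hξ
        rw [Set.Finite.mem_toFinset] at hξ
        exact Real.rpow_le_rpow_of_nonpos (lt_of_lt_of_le one_pos (hw ξ)) hξ (by linarith)
    have hcardb : c₁ * lam ^ Q ≤ ((hfin lam h).toFinset.card : ℝ) := by
      rw [hcard lam h]; exact (hN lam h).1
    have hlamQ : (0:ℝ) < lam ^ (-Q) := Real.rpow_pos_of_pos hlam0 _
    nlinarith [mul_le_mul_of_nonneg_right hcardb hlamQ.le]
  -- the geometric sequence
  set a : ℕ → ℝ := fun n => R ^ (n : ℝ) with ha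
  have ha1 : ∀ n, 1 ≤ a n := fun n => Real.one_le_rpow hR1.le (Nat.cast_nonneg n)
  have hapos : ∀ n, 0 < a n := fun n => lt_of_lt_of_le one_pos (ha1 n)
  have hamono : ∀ n, a n ≤ a (n + 1) := by
    intro n
    apply Real.rpow_le_rpow_of_exponent_le hR1.le
    push_cast; linarith
  have ha0 : a 0 = 1 := by simp [ha]
  have hkey1 : ∀ n : ℕ, (a (n+1)) ^ Q * (a (n+1)) ^ (-Q) = 1 := by
    intro n
    rw [← Real.rpow_add (hapos (n+1))]; simp
  have hkey2 : ∀ n : ℕ, (a n) ^ Q * (a (n+1)) ^ (-Q) = R ^ (-Q) := by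
    intro n
    simp only [ha]
    rw [← Real.rpow_mul hR0.le, ← Real.rpow_mul hR0.le, ← Real.rpow_add hR0]
    congr 1; push_cast; ring
  have hkey3 : ∀ n : ℕ, (a (n+1)) ^ Q * (a n) ^ (-Q) = R ^ Q := by
    intro n
    simp only [ha]
    rw [← Real.rpow_mul hR0.le, ← Real.rpow_mul hR0.le, ← Real.rpow_add hR0]
    congr 1; push_cast; ring
  -- lower bound along the geometric sequence
  have hlow_n : ∀ n : ℕ, (n : ℝ) * (c₁ / 2) ≤ S (a n) := by
    intro n
    induction n with
    | zero =>
      simp only [Nat.cast_zero, zero_mul]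
      rw [ha0, hSval 1 le_rfl]
      exact Finset.sum_nonneg fun ξ _ => (hterm_pos ξ).le
    | succ n ih =>
      have step := hlo (a n) (a (n+1)) (ha1 n) (hamono n)
      have hc : (c₁ * (a (n+1)) ^ Q - c₂ * (a n) ^ Q) * (a (n+1)) ^ (-Q)
          = c₁ - c₂ * R ^ (-Q) := by
        have h1 := hkey1 n
        have h2 := hkey2 n
        nlinarith [h1, h2]
      rw [hc] at step
      push_cast
      linarith
  -- upper bound along the geometric sequence
  have hup_n : ∀ n : ℕ, S (a n) ≤ c₂ * (1 + (n : ℝ) * R ^ Q) := by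
    intro n
    induction n with
    | zero =>
      simp only [Nat.cast_zero, zero_mul, add_zero, mul_one]
      rw [ha0, hSval 1 le_rfl]
      have hbound : (∑ ξ ∈ (hfin 1 le_rfl).toFinset, (w ξ) ^ (-Q)) ≤
          (((hfin 1 le_rfl).toFinset.card : ℝ)) * 1 := by
        have hh := Finset.sum_le_card_nsmul (hfin 1 le_rfl).toFinset
          (fun ξ => (w ξ) ^ (-Q)) 1 ?_
        · simpa [nsmul_eq_mul] using hh
        · intro ξ _
          exact Real.rpow_le_one_of_one_le_of_nonpos (hw ξ) (by linarith)
      have hcb : (((hfin 1 le_rfl).toFinset.card : ℝ)) ≤ c₂ := by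
        rw [hcard 1 le_rfl]
        have := (hN 1 le_rfl).2
        rwa [Real.one_rpow, mul_one] at this
      linarith
    | succ n ih =>
      have step := hup (a n) (a (n+1)) (ha1 n) (hamono n)
      have hc : c₂ * (a (n+1)) ^ Q * (a n) ^ (-Q) = c₂ * R ^ Q := by
        rw [mul_assoc, hkey3 n]
      rw [hc] at step
      push_cast
      nlinarith [step, ih]
  -- final assembly
  refine ⟨c₁ / (4 * Real.log R), (c₂ + 2 * c₂ * R ^ Q) / Real.log 2, by positivity,
    by positivity, ?_⟩
  intro Λ hΛ2
  have h1Λ : (1:ℝ) ≤ Λ := by linarith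
  have hΛ0 : (0:ℝ) < Λ := by linarith
  set L := Real.logb R Λ with hLdef
  have hL0 : 0 ≤ L := Real.logb_nonneg hR1 h1Λ
  have hRL : R ^ L = Λ := Real.rpow_logb hR0 (ne_of_gt hR1) hΛ0
  have hlogΛ : Real.log Λ = L * Real.log R := by
    rw [hLdef, Real.logb]; field_simp
  have hlog2 : 0 < Real.log 2 := Real.log_pos one_lt_two
  have hlogΛ2 : Real.log 2 ≤ Real.log Λ := Real.log_le_log (by norm_num) hΛ2
  have hlogR2 : Real.log 2 ≤ Real.log R := Real.log_le_log (by norm_num) hR2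
  have hgoal : ∀ (h : 1 ≤ Λ), (∑ ξ ∈ (hfin Λ h).toFinset, (w ξ) ^ (-Q)) = S Λ :=
    fun h => (hSval Λ h).symm
  rw [hgoal h1Λ]
  clear_value S a R
  constructor
  · -- lower bound
    set n : ℕ := ⌊L⌋₊ with hn
    have hnL : (n : ℝ) ≤ L := Nat.floor_le hL0
    have hLn : L - 1 ≤ (n : ℝ) := by
      have := Nat.lt_floor_add_one L
      rw [hn]; push_cast; linarith
    have hanΛ : a n ≤ Λ := by
      simp only [ha]
      rw [← hRL]
      exact Real.rpow_le_rpow_of_exponent_le hR1.le hnL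
    have hS1 : S (a n) ≤ S Λ := hmono (a n) Λ (ha1 n) hanΛ
    have hS2 := hlow_n n
    have hSc := hSc₁ Λ h1Λ
    have heq : c₁ / (4 * Real.log R) * Real.log Λ = c₁ * L / 4 := by
      rw [hlogΛ]; field_simp
    rw [heq]
    by_cases hL2 : 2 ≤ L
    · nlinarith [mul_le_mul_of_nonneg_right hLn (le_of_lt (half_pos hc₁)),
        mul_nonneg hc₁.le (sub_nonneg.mpr hL2), hS1, hS2]
    · push_neg at hL2
      nlinarith [mul_le_mul_of_nonneg_left hL2.le hc₁.le, hSc, hL0]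
  · -- upper bound
    set m : ℕ := ⌊L⌋₊ + 1 with hm
    have hLm : L ≤ (m : ℝ) := by
      have := Nat.lt_floor_add_one L
      rw [hm]; push_cast; linarith
    have hmL : (m : ℝ) ≤ L + 1 := by
      have := Nat.floor_le hL0
      rw [hm]; push_cast; linarith
    have hΛam : Λ ≤ a m := by
      simp only [ha]
      rw [← hRL]
      exact Real.rpow_le_rpow_of_exponent_le hR1.le hLm
    have hS1 : S Λ ≤ S (a m) := hmono Λ (a m) h1Λ hΛam
    have hS2 := hup_n m
    have ht : L ≤ Real.log Λ / Real.log 2 := by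
      rw [le_div_iff₀ hlog2]
      calc L * Real.log 2 ≤ L * Real.log R := mul_le_mul_of_nonneg_left hlogR2 hL0
        _ = Real.log Λ := hlogΛ.symm
    have ht1 : 1 ≤ Real.log Λ / Real.log 2 := by
      rw [le_div_iff₀ hlog2]; linarith
    have hCgoal : (c₂ + 2 * c₂ * R ^ Q) / Real.log 2 * Real.log Λ
        = (c₂ + 2 * c₂ * R ^ Q) * (Real.log Λ / Real.log 2) := by ring
    rw [hCgoal]
    have hub : S Λ ≤ c₂ * (1 + ((L + 1)) * R ^ Q) := by
      have := mul_le_mul_of_nonneg_left hmL (le_of_lt hRQpos)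
      nlinarith [hS1, hS2, hmL, hRQpos, hc₂]
    set t := Real.log Λ / Real.log 2 with htdef
    nlinarith [mul_le_mul_of_nonneg_left ht (mul_pos hc₂ hRQpos).le,
      mul_le_mul_of_nonneg_left ht1 hc₂.le,
      mul_le_mul_of_nonneg_left ht1 (mul_pos hc₂ hRQpos).le]
end

section
/- Let ι be an index type, w : ι → ℝ with w ξ ≥ 1 for all ξ, satisfying the two-sided Weyl law with exponent Q > 0 (finite level sets, c₁·λ^Q ≤ N(λ) ≤ c₂·λ^Q for λ ≥ 1). Let m > 0 and let σ : ι → ℝ satisfy a·(w ξ)^m ≤ σ ξ ≤ b·(w ξ)^m for all ξ, for some constants 0 < a ≤ b (this encodes L-ellipticity together with the symbol estimate |σ(ξ)| ≤ C⟨ξ⟩^m for a positive L-elliptic Fourier multiplier of order m). Then for every t > 0 the family ξ ↦ exp(−t·σ ξ) is summable, and there exist constants c, C > 0 such that for all t ∈ (0,1]: c·t^{−Q/m} ≤ ∑'_ξ exp(−t·σ ξ) ≤ C·t^{−Q/m}. (This is the heat-trace asymptotics Tr(e^{−tA}) ≍ t^{−Q/m} of the paper's Lemma on positive L-elliptic multipliers,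 since Tr(e^{−tA}) = ∑_ξ e^{−tσ(ξ)}.) -/
open Finset Filter

private lemma aux_summable {ρ s a : ℝ} (hρ : 0 < ρ) (hs : 1 < s) (ha : 0 < a) :
    Summable (fun j : ℕ => ρ ^ j * Real.exp (-(a * s ^ j))) := by
  apply summable_of_ratio_norm_eventually_le (r := 1/2) (by norm_num)
  have h1 : Tendsto (fun j : ℕ => a * (s - 1) * s ^ j) atTop atTop :=
    (tendsto_pow_atTop_atTop_of_one_lt hs).const_mul_atTop (by nlinarith)
  have h2 : ∀ᶠ j : ℕ in atTop, 2 * ρ ≤ Real.exp (a * (s - 1) * s ^ j) :=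
    (Real.tendsto_exp_atTop.comp h1).eventually_ge_atTop (2 * ρ)
  filter_upwards [h2] with j hj
  have hs0 : (0:ℝ) < s := lt_trans one_pos hs
  rw [Real.norm_eq_abs, Real.norm_eq_abs, abs_of_pos (by positivity),
    abs_of_pos (by positivity)]
  have e : Real.exp (-(a * s ^ (j+1)))
      = Real.exp (-(a*(s-1)*s^j)) * Real.exp (-(a*s^j)) := by
    rw [← Real.exp_add]; congr 1; rw [pow_succ]; ring
  have hexp : Real.exp (-(a*(s-1)*s^j)) ≤ (2*ρ)⁻¹ := by
    rw [Real.exp_neg]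
    exact inv_anti₀ (by positivity) hj
  calc ρ^(j+1) * Real.exp (-(a * s^(j+1)))
      = (ρ * Real.exp (-(a*(s-1)*s^j))) * (ρ^j * Real.exp (-(a * s^j))) := by
        rw [e, pow_succ]; ring
    _ ≤ (ρ * (2*ρ)⁻¹) * (ρ^j * Real.exp (-(a * s^j))) := by
        apply mul_le_mul_of_nonneg_right _ (by positivity)
        exact mul_le_mul_of_nonneg_left hexp hρ.le
    _ = 1/2 * (ρ^j * Real.exp (-(a * s^j))) := by
        field_simp

private lemma aux_series_bound {ρ s a t : ℝ} (hρ : 1 < ρ) (hs : 0 < s) (ha : 0 < a)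
    (ht : 0 < t) {k₀ : ℕ} (hk₀ : 1 ≤ t * s ^ k₀)
    (hsum : Summable fun j : ℕ => ρ ^ j * Real.exp (-(a * s ^ j))) (n : ℕ) :
    ∑ k ∈ Finset.range n, ρ ^ k * Real.exp (-(t * (a * s ^ k)))
      ≤ ρ ^ k₀ * (1 / (ρ - 1) + ∑' j : ℕ, ρ ^ j * Real.exp (-(a * s ^ j))) := by
  have hρ0 : (0:ℝ) < ρ := lt_trans one_pos hρ
  have hsub : ∑ k ∈ Finset.range n, ρ ^ k * Real.exp (-(t * (a * s ^ k)))
      ≤ ∑ k ∈ Finset.range (k₀ + n), ρ ^ k * Real.exp (-(t * (a * s ^ k))) :=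
    Finset.sum_le_sum_of_subset_of_nonneg
      (Finset.range_subset_range.2 (Nat.le_add_left n k₀)) (fun k _ _ => by positivity)
  rw [Finset.sum_range_add] at hsub
  have hpart1 : ∑ k ∈ Finset.range k₀, ρ ^ k * Real.exp (-(t * (a * s ^ k)))
      ≤ ρ ^ k₀ * (1 / (ρ - 1)) := by
    have h1 : ∑ k ∈ Finset.range k₀, ρ ^ k * Real.exp (-(t * (a * s ^ k)))
        ≤ ∑ k ∈ Finset.range k₀, ρ ^ k := by
      apply Finset.sum_le_sum
      intro k _
      have : Real.exp (-(t * (a * s ^ k))) ≤ 1 :=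
        Real.exp_le_one_iff.2 (neg_nonpos.2 (by positivity))
      calc ρ ^ k * Real.exp (-(t * (a * s ^ k))) ≤ ρ ^ k * 1 :=
            mul_le_mul_of_nonneg_left this (by positivity)
        _ = ρ ^ k := mul_one _
    have h2 : ∑ k ∈ Finset.range k₀, ρ ^ k ≤ ρ ^ k₀ * (1 / (ρ - 1)) := by
      rw [mul_one_div, le_div_iff₀ (by linarith)]
      calc (∑ k ∈ Finset.range k₀, ρ ^ k) * (ρ - 1) = ρ ^ k₀ - 1 := geom_sum_mul ρ k₀
        _ ≤ ρ ^ k₀ := by linarith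
    linarith
  have hpart2 : ∑ j ∈ Finset.range n, ρ ^ (k₀ + j) * Real.exp (-(t * (a * s ^ (k₀ + j))))
      ≤ ρ ^ k₀ * (∑' j : ℕ, ρ ^ j * Real.exp (-(a * s ^ j))) := by
    have hterm : ∀ j ∈ Finset.range n,
        ρ ^ (k₀ + j) * Real.exp (-(t * (a * s ^ (k₀ + j))))
          ≤ ρ ^ k₀ * (ρ ^ j * Real.exp (-(a * s ^ j))) := by
      intro j _
      have hle : a * s ^ j ≤ t * (a * s ^ (k₀ + j)) := by
        have h := mul_le_mul_of_nonneg_right hk₀ (show (0:ℝ) ≤ a * s ^ j by positivity)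
        calc a * s ^ j = 1 * (a * s ^ j) := (one_mul _).symm
          _ ≤ t * s ^ k₀ * (a * s ^ j) := h
          _ = t * (a * s ^ (k₀ + j)) := by rw [pow_add]; ring
      have hexp : Real.exp (-(t * (a * s ^ (k₀ + j)))) ≤ Real.exp (-(a * s ^ j)) :=
        Real.exp_le_exp.2 (by linarith)
      calc ρ ^ (k₀ + j) * Real.exp (-(t * (a * s ^ (k₀ + j))))
          ≤ ρ ^ (k₀ + j) * Real.exp (-(a * s ^ j)) :=
            mul_le_mul_of_nonneg_left hexp (by positivity)
        _ = ρ ^ k₀ * (ρ ^ j * Real.exp (-(a * s ^ j))) := by rw [pow_add]; ring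
    calc ∑ j ∈ Finset.range n, ρ ^ (k₀ + j) * Real.exp (-(t * (a * s ^ (k₀ + j))))
        ≤ ∑ j ∈ Finset.range n, ρ ^ k₀ * (ρ ^ j * Real.exp (-(a * s ^ j))) :=
          Finset.sum_le_sum hterm
      _ = ρ ^ k₀ * ∑ j ∈ Finset.range n, ρ ^ j * Real.exp (-(a * s ^ j)) := by
          rw [Finset.mul_sum]
      _ ≤ ρ ^ k₀ * (∑' j : ℕ, ρ ^ j * Real.exp (-(a * s ^ j))) := by
          apply mul_le_mul_of_nonneg_left _ (by positivity)
          exact Summable.sum_le_tsum _ (fun j _ => by positivity) hsum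
  calc ∑ k ∈ Finset.range n, ρ ^ k * Real.exp (-(t * (a * s ^ k)))
      ≤ _ := hsub
    _ ≤ ρ ^ k₀ * (1 / (ρ - 1)) + ρ ^ k₀ * (∑' j : ℕ, ρ ^ j * Real.exp (-(a * s ^ j))) := by
        exact add_le_add hpart1 hpart2
    _ = ρ ^ k₀ * (1 / (ρ - 1) + ∑' j : ℕ, ρ ^ j * Real.exp (-(a * s ^ j))) := by ring

theorem heat_trace_asymp_elliptic_multiplier
    {ι : Type*} (w : ι → ℝ) (hw : ∀ ξ, 1 ≤ w ξ)
    (hfin : ∀ lam : ℝ, 1 ≤ lam → {ξ | w ξ ≤ lam}.Finite)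
    (Q : ℝ) (hQ : 0 < Q) (c₁ c₂ : ℝ) (hc₁ : 0 < c₁) (hc₂ : 0 < c₂)
    (hN : ∀ lam : ℝ, ∀ _ : 1 ≤ lam,
      c₁ * lam ^ Q ≤ (Nat.card {ξ // w ξ ≤ lam} : ℝ) ∧
      (Nat.card {ξ // w ξ ≤ lam} : ℝ) ≤ c₂ * lam ^ Q)
    (m : ℝ) (hm : 0 < m) (σ : ι → ℝ) (a b : ℝ) (ha : 0 < a) (hab : a ≤ b)
    (hσ : ∀ ξ, a * (w ξ) ^ m ≤ σ ξ ∧ σ ξ ≤ b * (w ξ) ^ m) :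
    (∀ t : ℝ, 0 < t → Summable fun ξ => Real.exp (-t * σ ξ)) ∧
    ∃ c C : ℝ, 0 < c ∧ 0 < C ∧ ∀ t : ℝ, 0 < t → t ≤ 1 →
      c * t ^ (-(Q / m)) ≤ (∑' ξ, Real.exp (-t * σ ξ)) ∧
      (∑' ξ, Real.exp (-t * σ ξ)) ≤ C * t ^ (-(Q / m)) := by
  have hb : 0 < b := lt_of_lt_of_le ha hab
  have hlog2 : (0:ℝ) < Real.log 2 := Real.log_pos one_lt_two
  set ρ : ℝ := (2:ℝ) ^ Q with hρdef
  set s : ℝ := (2:ℝ) ^ m with hsdef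
  have hρ1 : 1 < ρ := by
    rw [hρdef]
    exact (Real.one_lt_rpow_iff_of_pos two_pos).mpr (Or.inl ⟨one_lt_two, hQ⟩)
  have hs1 : 1 < s := by
    rw [hsdef]
    exact (Real.one_lt_rpow_iff_of_pos two_pos).mpr (Or.inl ⟨one_lt_two, hm⟩)
  have hρ0 : (0:ℝ) < ρ := lt_trans one_pos hρ1
  have hs0 : (0:ℝ) < s := lt_trans one_pos hs1
  set D : ℝ := ∑' j : ℕ, ρ ^ j * Real.exp (-(a * s ^ j)) with hDdef
  have hsum0 : Summable (fun j : ℕ => ρ ^ j * Real.exp (-(a * s ^ j))) :=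
    aux_summable hρ0 hs1 ha
  have hD0 : 0 ≤ D := tsum_nonneg (fun j => by positivity)
  -- the key finite-sum bound
  have key : ∀ t : ℝ, 0 < t → ∀ u : Finset ι,
      ∑ ξ ∈ u, Real.exp (-t * σ ξ)
        ≤ (c₂ * ρ) * (ρ ^ (⌈(-Real.log t) / (m * Real.log 2)⌉₊ : ℕ) * (1 / (ρ - 1) + D)) := by
    intro t ht u
    set k₀ : ℕ := ⌈(-Real.log t) / (m * Real.log 2)⌉₊ with hk₀def
    have hk₀ : 1 ≤ t * s ^ k₀ := by
      have h1 : (-Real.log t) / (m * Real.log 2) ≤ (k₀:ℝ) := Nat.le_ceil _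
      have h2 : -Real.log t ≤ (k₀:ℝ) * (m * Real.log 2) := by
        rw [div_le_iff₀ (by positivity)] at h1; linarith
      have hsexp : s ^ k₀ = Real.exp ((k₀:ℝ) * (Real.log 2 * m)) := by
        rw [hsdef, Real.rpow_def_of_pos two_pos, Real.exp_nat_mul]
      rw [hsexp, ← Real.exp_log ht, ← Real.exp_add]
      rw [← Real.exp_zero]
      apply Real.exp_le_exp.2
      have : Real.log 2 * m = m * Real.log 2 := by ring
      rw [this]; linarith
    set g : ι → ℕ := fun ξ => ⌊Real.logb 2 (w ξ)⌋₊ with hgdef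
    set K : ℕ := u.sup g with hKdef
    have hmaps : ∀ ξ ∈ u, g ξ ∈ Finset.range (K+1) := fun ξ hξ =>
      Finset.mem_range.mpr (Nat.lt_succ_of_le (Finset.le_sup hξ))
    have hsplit : ∑ ξ ∈ u, Real.exp (-t * σ ξ)
        = ∑ k ∈ Finset.range (K+1), ∑ ξ ∈ u.filter (fun ξ => g ξ = k),
            Real.exp (-t * σ ξ) :=
      (Finset.sum_fiberwise_of_maps_to hmaps _).symm
    have hfiber : ∀ k ∈ Finset.range (K+1),
        ∑ ξ ∈ u.filter (fun ξ => g ξ = k), Real.exp (-t * σ ξ)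
          ≤ (c₂ * ρ) * (ρ ^ k * Real.exp (-(t * (a * s ^ k)))) := by
      intro k _
      have hwbounds : ∀ ξ ∈ u.filter (fun ξ => g ξ = k),
          (2:ℝ) ^ (k:ℝ) ≤ w ξ ∧ w ξ ≤ (2:ℝ) ^ ((k:ℝ)+1) := by
        intro ξ hξ
        have hgk : g ξ = k := by
          have := (Finset.mem_filter.mp hξ).2
          simpa using this
        have hw1 : (1:ℝ) ≤ w ξ := hw ξ
        have hw0 : (0:ℝ) < w ξ := lt_of_lt_of_le one_pos hw1
        have hlogb0 : 0 ≤ Real.logb 2 (w ξ) := Real.logb_nonneg one_lt_two hw1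
        have hfl : (k:ℝ) ≤ Real.logb 2 (w ξ) := by
          rw [← hgk, hgdef]
          exact_mod_cast Nat.floor_le hlogb0
        have hfl2 : Real.logb 2 (w ξ) < (k:ℝ) + 1 := by
          have h := Nat.lt_floor_add_one (Real.logb 2 (w ξ))
          have hk' : (⌊Real.logb 2 (w ξ)⌋₊ : ℝ) = (k : ℝ) := by
            rw [← hgk, hgdef]
          rw [hk'] at h
          exact h
        constructor
        · calc (2:ℝ) ^ (k:ℝ) ≤ (2:ℝ) ^ Real.logb 2 (w ξ) :=
              (Real.rpow_le_rpow_left_iff one_lt_two).mpr hfl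
            _ = w ξ := Real.rpow_logb two_pos (by norm_num) hw0
        · calc w ξ = (2:ℝ) ^ Real.logb 2 (w ξ) :=
              (Real.rpow_logb two_pos (by norm_num) hw0).symm
            _ ≤ (2:ℝ) ^ ((k:ℝ)+1) :=
              (Real.rpow_le_rpow_left_iff one_lt_two).mpr hfl2.le
      have hcard : ((u.filter (fun ξ => g ξ = k)).card : ℝ) ≤ c₂ * (ρ * ρ ^ k) := by
        set lam : ℝ := (2:ℝ) ^ ((k:ℝ)+1) with hlamdef
        have hlam1 : (1:ℝ) ≤ lam := Real.one_le_rpow one_le_two (by positivity)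
        have hsubset : ↑(u.filter (fun ξ => g ξ = k)) ⊆ {ξ | w ξ ≤ lam} := by
          intro ξ hξ
          exact (hwbounds ξ hξ).2
        have hceq : Nat.card {ξ // w ξ ≤ lam} = {ξ | w ξ ≤ lam}.ncard :=
          Nat.card_coe_set_eq _
        have h1 : (u.filter (fun ξ => g ξ = k)).card ≤ Nat.card {ξ // w ξ ≤ lam} := by
          rw [hceq, ← Set.ncard_coe_finset]
          exact Set.ncard_le_ncard hsubset (hfin lam hlam1)
        have h2 := (hN lam hlam1).2
        have h3 : lam ^ Q = ρ * ρ ^ k := by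
          rw [hlamdef, hρdef, ← Real.rpow_natCast ((2:ℝ) ^ Q) k,
            ← Real.rpow_mul (le_of_lt two_pos), ← Real.rpow_mul (le_of_lt two_pos),
            ← Real.rpow_add two_pos]
          congr 1; ring
        calc ((u.filter (fun ξ => g ξ = k)).card : ℝ)
            ≤ (Nat.card {ξ // w ξ ≤ lam} : ℝ) := by exact_mod_cast h1
          _ ≤ c₂ * lam ^ Q := h2
          _ = c₂ * (ρ * ρ ^ k) := by rw [h3]
      have hterm : ∀ ξ ∈ u.filter (fun ξ => g ξ = k),
          Real.exp (-t * σ ξ) ≤ Real.exp (-(t * (a * s ^ k))) := by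
        intro ξ hξ
        have h2k : (2:ℝ) ^ (k:ℝ) ≤ w ξ := (hwbounds ξ hξ).1
        have hws : s ^ k ≤ (w ξ) ^ m := by
          have heq : s ^ k = ((2:ℝ) ^ (k:ℝ)) ^ m := by
            rw [hsdef, ← Real.rpow_natCast ((2:ℝ) ^ m) k,
              ← Real.rpow_mul (le_of_lt two_pos), ← Real.rpow_mul (le_of_lt two_pos)]
            congr 1; ring
          rw [heq]
          exact Real.rpow_le_rpow (by positivity) h2k hm.le
        have h5 : a * s ^ k ≤ σ ξ :=
          le_trans (mul_le_mul_of_nonneg_left hws ha.le) (hσ ξ).1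
        have h6 := mul_le_mul_of_nonneg_left h5 ht.le
        apply Real.exp_le_exp.2
        rw [neg_mul]
        linarith
      calc ∑ ξ ∈ u.filter (fun ξ => g ξ = k), Real.exp (-t * σ ξ)
          ≤ ∑ ξ ∈ u.filter (fun ξ => g ξ = k), Real.exp (-(t * (a * s ^ k))) :=
            Finset.sum_le_sum hterm
        _ = ((u.filter (fun ξ => g ξ = k)).card : ℝ) * Real.exp (-(t * (a * s ^ k))) := by
            rw [Finset.sum_const, nsmul_eq_mul]
        _ ≤ (c₂ * (ρ * ρ ^ k)) * Real.exp (-(t * (a * s ^ k))) :=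
            mul_le_mul_of_nonneg_right hcard (Real.exp_nonneg _)
        _ = (c₂ * ρ) * (ρ ^ k * Real.exp (-(t * (a * s ^ k)))) := by ring
    calc ∑ ξ ∈ u, Real.exp (-t * σ ξ)
        = ∑ k ∈ Finset.range (K+1), ∑ ξ ∈ u.filter (fun ξ => g ξ = k),
            Real.exp (-t * σ ξ) := hsplit
      _ ≤ ∑ k ∈ Finset.range (K+1), (c₂ * ρ) * (ρ ^ k * Real.exp (-(t * (a * s ^ k)))) :=
          Finset.sum_le_sum hfiber
      _ = (c₂ * ρ) * ∑ k ∈ Finset.range (K+1), ρ ^ k * Real.exp (-(t * (a * s ^ k))) := by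
          rw [Finset.mul_sum]
      _ ≤ (c₂ * ρ) * (ρ ^ k₀ * (1 / (ρ - 1) + D)) := by
          apply mul_le_mul_of_nonneg_left _ (by positivity)
          exact aux_series_bound hρ1 hs0 ha ht hk₀ hsum0 _
  -- summability
  have hsummable : ∀ t : ℝ, 0 < t → Summable fun ξ => Real.exp (-t * σ ξ) := by
    intro t ht
    exact summable_of_sum_le (fun ξ => Real.exp_nonneg _) (key t ht)
  refine ⟨hsummable, ?_⟩
  -- the constant R for the lower bound
  set R : ℝ := max 1 ((2*c₂/c₁) ^ (1/Q)) with hRdef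
  have hR1 : (1:ℝ) ≤ R := le_max_left _ _
  have hR0 : (0:ℝ) < R := lt_of_lt_of_le one_pos hR1
  have hRQ : 2*c₂ ≤ c₁ * R ^ Q := by
    have h0 : (0:ℝ) < 2*c₂/c₁ := by positivity
    have h1 : ((2*c₂/c₁) ^ (1/Q)) ^ Q ≤ R ^ Q :=
      Real.rpow_le_rpow (Real.rpow_nonneg h0.le _) (le_max_right _ _) hQ.le
    have h2 : ((2*c₂/c₁) ^ (1/Q)) ^ Q = 2*c₂/c₁ := by
      rw [← Real.rpow_mul h0.le, one_div, inv_mul_cancel₀ hQ.ne', Real.rpow_one]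
    rw [h2, div_le_iff₀ hc₁] at h1
    linarith
  have hconst : (0:ℝ) < 1 / (ρ - 1) + D :=
    add_pos_of_pos_of_nonneg (div_pos one_pos (by linarith)) hD0
  refine ⟨c₂ * Real.exp (-(b * R ^ m)), (c₂ * ρ) * (ρ * (1 / (ρ - 1) + D)), by positivity,
    mul_pos (mul_pos hc₂ hρ0) (mul_pos hρ0 hconst), ?_⟩
  intro t ht ht1
  constructor
  · -- lower bound
    set lam : ℝ := t ^ (-(1/m)) with hlamdef
    have hlam1 : (1:ℝ) ≤ lam :=
      Real.one_le_rpow_of_pos_of_le_one_of_nonpos ht ht1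
        (neg_nonpos.2 (by positivity))
    have hlam0 : (0:ℝ) < lam := lt_of_lt_of_le one_pos hlam1
    have hRlam1 : (1:ℝ) ≤ R * lam := le_trans hlam1 (le_mul_of_one_le_left hlam0.le hR1)
    have hAB : {ξ | w ξ ≤ lam} ⊆ {ξ | w ξ ≤ R * lam} := by
      intro ξ hξ
      exact le_trans hξ (le_mul_of_one_le_left hlam0.le hR1)
    have hfinB := hfin (R * lam) hRlam1
    have hfinBA : ({ξ | w ξ ≤ R * lam} \ {ξ | w ξ ≤ lam}).Finite :=
      hfinB.subset Set.diff_subset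
    have hcard : ({ξ | w ξ ≤ R * lam} \ {ξ | w ξ ≤ lam}).ncard
        + {ξ | w ξ ≤ lam}.ncard = {ξ | w ξ ≤ R * lam}.ncard :=
      Set.ncard_diff_add_ncard_of_subset hAB hfinB
    have hceqB : Nat.card {ξ // w ξ ≤ R * lam} = {ξ | w ξ ≤ R * lam}.ncard :=
      Nat.card_coe_set_eq _
    have hceqA : Nat.card {ξ // w ξ ≤ lam} = {ξ | w ξ ≤ lam}.ncard :=
      Nat.card_coe_set_eq _
    have hNB := (hN (R * lam) hRlam1).1
    have hNA := (hN lam hlam1).2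
    rw [hceqB] at hNB
    rw [hceqA] at hNA
    have hRlamQ : (R * lam) ^ Q = R ^ Q * lam ^ Q := Real.mul_rpow hR0.le hlam0.le
    have hlamQpos : (0:ℝ) < lam ^ Q := Real.rpow_pos_of_pos hlam0 _
    have hcount : c₂ * lam ^ Q
        ≤ (({ξ | w ξ ≤ R * lam} \ {ξ | w ξ ≤ lam}).ncard : ℝ) := by
      have hc : (({ξ | w ξ ≤ R * lam} \ {ξ | w ξ ≤ lam}).ncard : ℝ)
          = ({ξ | w ξ ≤ R * lam}.ncard : ℝ) - ({ξ | w ξ ≤ lam}.ncard : ℝ) := by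
        rw [← hcard]; push_cast; ring
      have h1 : c₁ * (R ^ Q * lam ^ Q) ≤ ({ξ | w ξ ≤ R * lam}.ncard : ℝ) := by
        rw [← hRlamQ]; exact hNB
      have h2 : (2 * c₂) * lam ^ Q ≤ c₁ * R ^ Q * lam ^ Q :=
        mul_le_mul_of_nonneg_right hRQ hlamQpos.le
      rw [hc]
      nlinarith
    -- each element of the shell contributes at least exp (-(b * R ^ m))
    have hlamm : lam ^ m = t⁻¹ := by
      rw [hlamdef, ← Real.rpow_mul ht.le,
        show -(1/m) * m = -1 by field_simp, Real.rpow_neg_one]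
    have hshell : ∀ ξ ∈ hfinBA.toFinset,
        Real.exp (-(b * R ^ m)) ≤ Real.exp (-t * σ ξ) := by
      intro ξ hξ
      rw [Set.Finite.mem_toFinset] at hξ
      obtain ⟨hξB, -⟩ := hξ
      have hwξ : w ξ ≤ R * lam := hξB
      have hσb := (hσ ξ).2
      have hwm : (w ξ) ^ m ≤ (R * lam) ^ m :=
        Real.rpow_le_rpow (le_trans zero_le_one (hw ξ)) hwξ hm.le
      have hRlamm : (R * lam) ^ m = R ^ m * t⁻¹ := by
        rw [Real.mul_rpow hR0.le hlam0.le, hlamm]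
      have h7 : σ ξ ≤ b * (R ^ m * t⁻¹) := by
        rw [← hRlamm]
        exact le_trans hσb (mul_le_mul_of_nonneg_left hwm hb.le)
      have h8 : t * σ ξ ≤ b * R ^ m := by
        have := mul_le_mul_of_nonneg_left h7 ht.le
        calc t * σ ξ ≤ t * (b * (R ^ m * t⁻¹)) := this
          _ = b * R ^ m * (t * t⁻¹) := by ring
          _ = b * R ^ m := by rw [mul_inv_cancel₀ ht.ne', mul_one]
      apply Real.exp_le_exp.2
      rw [neg_mul]
      linarith
    have hsumge : (hfinBA.toFinset.card : ℝ) * Real.exp (-(b * R ^ m))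
        ≤ ∑ ξ ∈ hfinBA.toFinset, Real.exp (-t * σ ξ) := by
      rw [← nsmul_eq_mul]
      exact Finset.card_nsmul_le_sum _ _ _ hshell
    have hsumtsum : ∑ ξ ∈ hfinBA.toFinset, Real.exp (-t * σ ξ)
        ≤ ∑' ξ, Real.exp (-t * σ ξ) :=
      Summable.sum_le_tsum _ (fun ξ _ => Real.exp_nonneg _) (hsummable t ht)
    have hcardeq : (({ξ | w ξ ≤ R * lam} \ {ξ | w ξ ≤ lam}).ncard : ℝ)
        = (hfinBA.toFinset.card : ℝ) := by
      rw [Set.ncard_eq_toFinset_card _ hfinBA]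
    have hlamQ : lam ^ Q = t ^ (-(Q/m)) := by
      rw [hlamdef, ← Real.rpow_mul ht.le]
      congr 1; field_simp
    calc c₂ * Real.exp (-(b * R ^ m)) * t ^ (-(Q/m))
        = (c₂ * lam ^ Q) * Real.exp (-(b * R ^ m)) := by rw [hlamQ]; ring
      _ ≤ (hfinBA.toFinset.card : ℝ) * Real.exp (-(b * R ^ m)) := by
          apply mul_le_mul_of_nonneg_right _ (Real.exp_nonneg _)
          rw [← hcardeq]; exact hcount
      _ ≤ ∑ ξ ∈ hfinBA.toFinset, Real.exp (-t * σ ξ) := hsumge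
      _ ≤ ∑' ξ, Real.exp (-t * σ ξ) := hsumtsum
  · -- upper bound
    have htsum := Summable.tsum_le_of_sum_le (hsummable t ht) (key t ht)
    have hpow : ρ ^ (⌈(-Real.log t) / (m * Real.log 2)⌉₊ : ℕ) ≤ ρ * t ^ (-(Q/m)) := by
      set x₀ : ℝ := (-Real.log t) / (m * Real.log 2) with hx₀def
      have hx₀ : 0 ≤ x₀ := by
        apply div_nonneg _ (by positivity)
        have := Real.log_nonpos ht.le ht1
        linarith
      have hceil : (⌈x₀⌉₊ : ℝ) < x₀ + 1 := Nat.ceil_lt_add_one hx₀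
      have hρexp : ρ = Real.exp (Real.log 2 * Q) := by
        rw [hρdef, Real.rpow_def_of_pos two_pos]
      have h1 : ρ ^ (⌈x₀⌉₊ : ℕ) = Real.exp ((⌈x₀⌉₊:ℝ) * (Real.log 2 * Q)) := by
        rw [hρexp, Real.exp_nat_mul]
      have h2 : t ^ (-(Q/m)) = Real.exp (Real.log t * (-(Q/m))) :=
        Real.rpow_def_of_pos ht _
      rw [h1, h2, hρexp, ← Real.exp_add]
      apply Real.exp_le_exp.2
      have h3 : (⌈x₀⌉₊:ℝ) * (Real.log 2 * Q) ≤ (x₀ + 1) * (Real.log 2 * Q) :=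
        mul_le_mul_of_nonneg_right hceil.le (by positivity)
      have h4 : x₀ * (Real.log 2 * Q) = Real.log t * (-(Q/m)) := by
        rw [hx₀def]
        field_simp
      nlinarith [h3, h4]
    calc ∑' ξ, Real.exp (-t * σ ξ)
        ≤ (c₂ * ρ) * (ρ ^ (⌈(-Real.log t) / (m * Real.log 2)⌉₊ : ℕ) * (1 / (ρ - 1) + D)) :=
          htsum
      _ ≤ (c₂ * ρ) * ((ρ * t ^ (-(Q/m))) * (1 / (ρ - 1) + D)) := by
          apply mul_le_mul_of_nonneg_left _ (by positivity)
          apply mul_le_mul_of_nonneg_right hpow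
          have : (0:ℝ) < 1 / (ρ - 1) := by
            apply div_pos one_pos; linarith
          linarith
      _ = (c₂ * ρ) * (ρ * (1 / (ρ - 1) + D)) * t ^ (-(Q/m)) := by ring
end

section
/- Let ι be an index type, w : ι → ℝ with w ξ ≥ 1 for all ξ, satisfying the upper Weyl law with exponent Q > 0 (finite level sets, N(λ) ≤ c₂·λ^Q for λ ≥ 1). Let q > 0 and let m be a real number with m > −Q. Then for every t > 0 the family ξ ↦ (w ξ)^m · exp(−t·(w ξ)^q) is summable, and there exists a constant C > 0 such that for all t ∈ (0,1]: ∑'_ξ (w ξ)^m · exp(−t·(w ξ)^q) ≤ C·t^{−(Q+m)/q}. (This is the spectral-sum bound establishing |Tr(A e^{−t𝓜_q})| ≤ C t^{−(Q+m)/q} for operators A of order m > −Q in the paper's trace-expansion theorem, where 𝓜_q = (1+L∘L)^{q/(2ν)} has eigenvalues (w ξ)^q.) -/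
open Real

lemma pow_le_fact_mul_exp (n : ℕ) {x : ℝ} (hx : 0 ≤ x) :
    x ^ n ≤ (n.factorial : ℝ) * Real.exp x := by
  have h := Real.sum_le_exp_of_nonneg hx (n + 1)
  have h1 : x ^ n / (n.factorial : ℝ) ≤ ∑ i ∈ Finset.range (n + 1), x ^ i / (i.factorial : ℝ) := by
    refine Finset.single_le_sum (f := fun i => x ^ i / (i.factorial : ℝ)) ?_
      (Finset.self_mem_range_succ n)
    intro i _
    positivity
  have hn : (0 : ℝ) < (n.factorial : ℝ) := by positivity
  have := h1.trans h
  rw [div_le_iff₀ hn] at this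
  linarith [this]

lemma exp_neg_le (n : ℕ) {x : ℝ} (hx : 0 < x) :
    Real.exp (-x) ≤ (n.factorial : ℝ) * (x ^ n)⁻¹ := by
  have h := pow_le_fact_mul_exp n hx.le
  have hxn : (0 : ℝ) < x ^ n := pow_pos hx n
  have h2 : Real.exp (-x) * x ^ n ≤ (n.factorial : ℝ) := by
    calc Real.exp (-x) * x ^ n
        ≤ Real.exp (-x) * ((n.factorial : ℝ) * Real.exp x) := by
          exact mul_le_mul_of_nonneg_left h (Real.exp_pos (-x)).le
      _ = (n.factorial : ℝ) * (Real.exp (-x) * Real.exp x) := by ring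
      _ = (n.factorial : ℝ) := by rw [← Real.exp_add]; simp
  rw [← div_eq_mul_inv, le_div_iff₀ hxn]
  exact h2

lemma core_sum_bound {b γ : ℝ} (hb : 1 < b) (hγ : 0 < γ) :
    ∃ C : ℝ, 0 < C ∧ ∀ t : ℝ, 0 < t → t ≤ 1 →
      Summable (fun k : ℕ => (b ^ k) ^ γ * Real.exp (-(t * b ^ k))) ∧
      ∑' k : ℕ, (b ^ k) ^ γ * Real.exp (-(t * b ^ k)) ≤ C * t ^ (-γ) := by
  have hb0 : (0 : ℝ) < b := lt_trans one_pos hb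
  set n : ℕ := ⌈γ⌉₊ + 1 with hn
  have hγn : γ + 1 ≤ (n : ℝ) := by
    have := Nat.le_ceil γ
    push_cast [hn]
    linarith
  set r : ℝ := b ^ (γ - (n : ℝ)) with hr
  have hr0 : 0 < r := Real.rpow_pos_of_pos hb0 _
  have hr1 : r < 1 := Real.rpow_lt_one_of_one_lt_of_neg hb (by linarith)
  set a : ℝ := b ^ γ with ha
  have ha1 : 1 < a := (Real.one_lt_rpow_iff_of_pos hb0).2 (Or.inl ⟨hb, hγ⟩)
  have ha0 : 0 < a := lt_trans one_pos ha1
  -- key rpow identities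
  have hpowk : ∀ (z : ℝ) (k : ℕ), ((b : ℝ) ^ k) ^ z = (b ^ z) ^ k := by
    intro z k
    rw [← Real.rpow_natCast b k, ← Real.rpow_mul hb0.le, mul_comm,
      Real.rpow_mul hb0.le, Real.rpow_natCast]
  have hC : 0 < a * a / (a - 1) + (n.factorial : ℝ) / (1 - r) := by
    have h1 : (0:ℝ) < a * a / (a - 1) := div_pos (by positivity) (by linarith)
    have h2 : (0:ℝ) < (n.factorial : ℝ) / (1 - r) := by
      apply div_pos _ (by linarith)
      exact_mod_cast n.factorial_pos
    linarith
  refine ⟨a * a / (a - 1) + (n.factorial : ℝ) / (1 - r), hC, ?_⟩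
  intro t ht0 ht1
  set f : ℕ → ℝ := fun k => (b ^ k) ^ γ * Real.exp (-(t * b ^ k)) with hf
  have hbk0 : ∀ k : ℕ, (0 : ℝ) < b ^ k := fun k => pow_pos hb0 k
  have hf0 : ∀ k, 0 ≤ f k := by
    intro k
    have := (hbk0 k).le
    positivity
  -- upper bound 1 : f k ≤ a ^ k
  have hfa : ∀ k, f k ≤ a ^ k := by
    intro k
    have h1 : Real.exp (-(t * b ^ k)) ≤ 1 := by
      apply Real.exp_le_one_iff.2
      have := (hbk0 k).le
      nlinarith
    calc f k ≤ (b ^ k) ^ γ * 1 := by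
          apply mul_le_mul_of_nonneg_left h1
          positivity
      _ = a ^ k := by rw [mul_one, hpowk]
  -- upper bound 2 : f k ≤ n! * (t^n)⁻¹ * r ^ k
  have hfr : ∀ k, f k ≤ (n.factorial : ℝ) * (t ^ n)⁻¹ * r ^ k := by
    intro k
    have hx : (0 : ℝ) < t * b ^ k := mul_pos ht0 (hbk0 k)
    have h1 : Real.exp (-(t * b ^ k)) ≤ (n.factorial : ℝ) * ((t * b ^ k) ^ n)⁻¹ :=
      exp_neg_le n hx
    have h2 : f k ≤ (b ^ k) ^ γ * ((n.factorial : ℝ) * ((t * b ^ k) ^ n)⁻¹) := by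
      apply mul_le_mul_of_nonneg_left h1
      positivity
    refine h2.trans (le_of_eq ?_)
    have hbkn : ((b : ℝ) ^ k) ^ (n : ℕ) = ((b:ℝ) ^ k) ^ ((n : ℕ) : ℝ) := by
      rw [Real.rpow_natCast]
    have hkey : ((b:ℝ) ^ k) ^ γ * (((b:ℝ) ^ k) ^ (n:ℕ))⁻¹ = r ^ k := by
      rw [hbkn, ← Real.rpow_neg (hbk0 k).le, ← Real.rpow_add (hbk0 k),
        (by ring : γ + -(n:ℝ) = γ - (n:ℝ)), hpowk]
    calc ((b:ℝ) ^ k) ^ γ * ((n.factorial : ℝ) * ((t * b ^ k) ^ n)⁻¹)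
        = (n.factorial : ℝ) * (t ^ n)⁻¹ * (((b:ℝ) ^ k) ^ γ * (((b:ℝ) ^ k) ^ (n:ℕ))⁻¹) := by
          rw [mul_pow, mul_inv]; ring
      _ = (n.factorial : ℝ) * (t ^ n)⁻¹ * r ^ k := by rw [hkey]
  -- summability
  have hgsum : Summable (fun k : ℕ => (n.factorial : ℝ) * (t ^ n)⁻¹ * r ^ k) :=
    (summable_geometric_of_lt_one hr0.le hr1).mul_left _
  have hsum : Summable f := Summable.of_nonneg_of_le hf0 hfr hgsum
  refine ⟨hsum, ?_⟩
  have htpos : (0 : ℝ) < t ^ (-γ) := Real.rpow_pos_of_pos ht0 _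
  -- the splitting index K
  have hex : ∃ k : ℕ, 1 / t ≤ b ^ k := by
    obtain ⟨k, hk⟩ := pow_unbounded_of_one_lt (1 / t) hb
    exact ⟨k, hk.le⟩
  set K : ℕ := Nat.find hex with hKdef
  have hK1 : 1 / t ≤ b ^ K := Nat.find_spec hex
  have hK2 : b ^ K ≤ b / t := by
    rcases Nat.eq_zero_or_pos K with h0 | hpos
    · rw [h0, pow_zero, le_div_iff₀ ht0]
      nlinarith
    · have hmin := Nat.find_min hex (m := K - 1) (by omega)
      push_neg at hmin
      have hlt : b ^ (K - 1) < 1 / t := hmin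
      have hKe : b ^ K = b * b ^ (K - 1) := by
        rw [← pow_succ']
        congr 1
        omega
      rw [hKe]
      calc b * b ^ (K - 1) ≤ b * (1 / t) := by nlinarith [pow_pos hb0 (K - 1)]
        _ = b / t := by ring
  -- split the sum
  have hsplit := (Summable.sum_add_tsum_nat_add (f := f) (K + 1) hsum).symm
  -- head bound
  have hhead : ∑ k ∈ Finset.range (K + 1), f k ≤ a * a / (a - 1) * t ^ (-γ) := by
    have h1 : ∑ k ∈ Finset.range (K + 1), f k ≤ ∑ k ∈ Finset.range (K + 1), a ^ k :=
      Finset.sum_le_sum fun k _ => hfa k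
    have h2 : ∑ k ∈ Finset.range (K + 1), a ^ k = (a ^ (K + 1) - 1) / (a - 1) :=
      geom_sum_eq (ne_of_gt ha1) _
    have h3 : a ^ (K + 1) ≤ a * (a * t ^ (-γ)) := by
      have h4 : a ^ K = ((b : ℝ) ^ K) ^ γ := (hpowk γ K).symm
      have h5 : ((b : ℝ) ^ K) ^ γ ≤ (b / t) ^ γ :=
        Real.rpow_le_rpow (hbk0 K).le hK2 hγ.le
      have h6 : (b / t) ^ γ = a * t ^ (-γ) := by
        rw [Real.div_rpow hb0.le ht0.le, Real.rpow_neg ht0.le, div_eq_mul_inv, ha]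
      have h7 : a ^ K ≤ a * t ^ (-γ) := by
        rw [h4, ← h6]; exact h5
      calc a ^ (K + 1) = a * a ^ K := by ring
        _ ≤ a * (a * t ^ (-γ)) := by nlinarith
    have h8 : (a ^ (K + 1) - 1) / (a - 1) ≤ a * (a * t ^ (-γ)) / (a - 1) := by
      apply div_le_div_of_nonneg_right ?_ (by linarith)
      · linarith
    calc ∑ k ∈ Finset.range (K + 1), f k ≤ (a ^ (K + 1) - 1) / (a - 1) := h1.trans_eq h2
      _ ≤ a * (a * t ^ (-γ)) / (a - 1) := h8
      _ = a * a / (a - 1) * t ^ (-γ) := by ring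
  -- tail bound
  have htail : ∑' j, f (j + (K + 1)) ≤ (n.factorial : ℝ) / (1 - r) * t ^ (-γ) := by
    have hs1 : Summable fun j => f (j + (K + 1)) := (summable_nat_add_iff (K + 1)).2 hsum
    set c : ℝ := (n.factorial : ℝ) * (t ^ n)⁻¹ * r ^ (K + 1) with hc
    have hs2 : Summable fun j : ℕ => c * r ^ j :=
      (summable_geometric_of_lt_one hr0.le hr1).mul_left _
    have h9 : ∀ j : ℕ, f (j + (K + 1)) ≤ c * r ^ j := by
      intro j
      calc f (j + (K + 1)) ≤ (n.factorial : ℝ) * (t ^ n)⁻¹ * r ^ (j + (K + 1)) :=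
            hfr (j + (K + 1))
        _ = c * r ^ j := by rw [hc, pow_add (a := r)]; ring
    have h10 : ∑' j, f (j + (K + 1)) ≤ ∑' j : ℕ, c * r ^ j :=
      Summable.tsum_le_tsum h9 hs1 hs2
    have h11 : ∑' j : ℕ, c * r ^ j = c * (1 - r)⁻¹ := by
      rw [tsum_mul_left, tsum_geometric_of_lt_one hr0.le hr1]
    -- bound c
    have h12 : r ^ (K + 1) ≤ t ^ ((n : ℝ) - γ) := by
      have hK3 : 1 / t ≤ b ^ (K + 1) := by
        refine hK1.trans ?_
        have : (b : ℝ) ^ K * 1 ≤ b ^ K * b := by nlinarith [pow_pos hb0 K]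
        calc (b : ℝ) ^ K = b ^ K * 1 := by ring
          _ ≤ b ^ K * b := this
          _ = b ^ (K + 1) := by ring
      have h13 : ((b : ℝ) ^ (K + 1)) ^ (γ - (n : ℝ)) ≤ (1 / t) ^ (γ - (n : ℝ)) :=
        Real.rpow_le_rpow_of_nonpos (by positivity) hK3 (by linarith)
      have h14 : ((b : ℝ) ^ (K + 1)) ^ (γ - (n : ℝ)) = r ^ (K + 1) := hpowk _ _
      have h15 : ((1 : ℝ) / t) ^ (γ - (n : ℝ)) = t ^ ((n : ℝ) - γ) := by
        rw [one_div, Real.inv_rpow ht0.le, ← Real.rpow_neg ht0.le]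
        congr 1
        ring
      rw [← h14, ← h15]
      exact h13
    have h16 : c ≤ (n.factorial : ℝ) * t ^ (-γ) := by
      have h17 : (t ^ n)⁻¹ * r ^ (K + 1) ≤ (t ^ n)⁻¹ * t ^ ((n : ℝ) - γ) := by
        have h17' : (0:ℝ) ≤ (t ^ n)⁻¹ := by positivity
        exact mul_le_mul_of_nonneg_left h12 h17'
      have h18 : (t ^ n)⁻¹ * t ^ ((n : ℝ) - γ) = t ^ (-γ) := by
        rw [← Real.rpow_natCast t n, ← Real.rpow_neg ht0.le, ← Real.rpow_add ht0]
        congr 1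
        ring
      have hfact : (0:ℝ) ≤ (n.factorial : ℝ) := by positivity
      calc c = (n.factorial : ℝ) * ((t ^ n)⁻¹ * r ^ (K + 1)) := by rw [hc]; ring
        _ ≤ (n.factorial : ℝ) * ((t ^ n)⁻¹ * t ^ ((n : ℝ) - γ)) :=
            mul_le_mul_of_nonneg_left h17 hfact
        _ = (n.factorial : ℝ) * t ^ (-γ) := by rw [h18]
    calc ∑' j, f (j + (K + 1)) ≤ c * (1 - r)⁻¹ := h10.trans_eq h11
      _ ≤ (n.factorial : ℝ) * t ^ (-γ) * (1 - r)⁻¹ := by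
          have hrr : (0:ℝ) ≤ (1 - r)⁻¹ := by
            have : (0:ℝ) < 1 - r := by linarith
            positivity
          exact mul_le_mul_of_nonneg_right h16 hrr
      _ = (n.factorial : ℝ) / (1 - r) * t ^ (-γ) := by ring
  calc ∑' k, f k = ∑ k ∈ Finset.range (K + 1), f k + ∑' j, f (j + (K + 1)) := hsplit
    _ ≤ a * a / (a - 1) * t ^ (-γ) + (n.factorial : ℝ) / (1 - r) * t ^ (-γ) :=
        add_le_add hhead htail
    _ = (a * a / (a - 1) + (n.factorial : ℝ) / (1 - r)) * t ^ (-γ) := by ring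

lemma rpow_pow_comm {x : ℝ} (hx : 0 ≤ x) (z : ℝ) (k : ℕ) :
    (x ^ k) ^ z = (x ^ z) ^ k := by
  rw [← Real.rpow_natCast x k, ← Real.rpow_mul hx, mul_comm,
    Real.rpow_mul hx, Real.rpow_natCast]

theorem heat_trace_upper_bound_order_m
    {ι : Type*} (w : ι → ℝ) (hw : ∀ ξ, 1 ≤ w ξ)
    (hfin : ∀ lam : ℝ, 1 ≤ lam → {ξ | w ξ ≤ lam}.Finite)
    (Q : ℝ) (hQ : 0 < Q) (c₂ : ℝ) (hc₂ : 0 < c₂)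
    (hN : ∀ lam : ℝ, 1 ≤ lam → (Nat.card {ξ // w ξ ≤ lam} : ℝ) ≤ c₂ * lam ^ Q)
    (q : ℝ) (hq : 0 < q) (m : ℝ) (hm : -Q < m) :
    (∀ t : ℝ, 0 < t →
      Summable fun ξ => (w ξ) ^ m * Real.exp (-t * (w ξ) ^ q)) ∧
    ∃ C : ℝ, 0 < C ∧ ∀ t : ℝ, 0 < t → t ≤ 1 →
      (∑' ξ, (w ξ) ^ m * Real.exp (-t * (w ξ) ^ q)) ≤ C * t ^ (-((Q + m) / q)) := by
  classical
  have hw0 : ∀ ξ, (0:ℝ) < w ξ := fun ξ => lt_of_lt_of_le one_pos (hw ξ)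
  set γ : ℝ := (Q + m) / q with hγdef
  have hγ : 0 < γ := div_pos (by linarith) hq
  have hqγ : q * γ = Q + m := by
    rw [hγdef]; field_simp
  set b : ℝ := (2:ℝ) ^ q with hbdef
  have hb : 1 < b := (Real.one_lt_rpow_iff_of_pos two_pos).2 (Or.inl ⟨one_lt_two, hq⟩)
  have hb0 : (0:ℝ) < b := lt_trans one_pos hb
  obtain ⟨C₀, hC₀, hcore⟩ := core_sum_bound hb hγ
  have hbγ : b ^ γ = (2:ℝ) ^ (Q + m) := by
    rw [hbdef, ← Real.rpow_mul (by norm_num : (0:ℝ) ≤ 2), hqγ]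
  -- shell function
  have hex : ∀ ξ, ∃ k : ℕ, w ξ < 2 ^ (k + 1) := by
    intro ξ
    obtain ⟨k, hk⟩ := pow_unbounded_of_one_lt (w ξ) (one_lt_two (α := ℝ))
    exact ⟨k, hk.trans_le (pow_le_pow_right₀ one_le_two (Nat.le_succ k))⟩
  set sh : ι → ℕ := fun ξ => Nat.find (hex ξ) with hshdef
  have hsh1 : ∀ ξ, w ξ < 2 ^ (sh ξ + 1) := fun ξ => Nat.find_spec (hex ξ)
  have hsh2 : ∀ ξ, (2:ℝ) ^ (sh ξ) ≤ w ξ := by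
    intro ξ
    rcases Nat.eq_zero_or_pos (sh ξ) with h0 | hpos
    · rw [h0, pow_zero]; exact hw ξ
    · have hmin := Nat.find_min (hex ξ) (m := sh ξ - 1) (Nat.sub_lt hpos one_pos)
      push_neg at hmin
      have he : sh ξ - 1 + 1 = sh ξ := Nat.succ_pred_eq_of_pos hpos
      rwa [he] at hmin
  -- the comparison function on ℕ
  set D : ℝ := c₂ * (2:ℝ) ^ Q * (2:ℝ) ^ |m| with hDdef
  have hD : 0 < D := by
    have := Real.rpow_pos_of_pos (two_pos (α := ℝ)) Q
    have := Real.rpow_pos_of_pos (two_pos (α := ℝ)) |m|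
    positivity
  -- pointwise shell bound
  have hshell : ∀ t : ℝ, 0 < t → ∀ ξ,
      w ξ ^ m * Real.exp (-t * w ξ ^ q) ≤
        (2:ℝ) ^ |m| * ((2:ℝ) ^ m) ^ (sh ξ) * Real.exp (-(t * b ^ (sh ξ))) := by
    intro t ht ξ
    have h2k : (0:ℝ) < (2:ℝ) ^ (sh ξ) := by positivity
    have hA : b ^ (sh ξ) ≤ w ξ ^ q := by
      have h1 : ((2:ℝ) ^ (sh ξ)) ^ q ≤ w ξ ^ q :=
        Real.rpow_le_rpow h2k.le (hsh2 ξ) hq.le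
      rwa [_root_.rpow_pow_comm (by norm_num : (0:ℝ) ≤ 2), ← hbdef] at h1
    have hexp : Real.exp (-t * w ξ ^ q) ≤ Real.exp (-(t * b ^ (sh ξ))) := by
      apply Real.exp_le_exp.2
      rw [neg_mul]
      apply neg_le_neg
      exact mul_le_mul_of_nonneg_left hA ht.le
    have hB : w ξ ^ m ≤ (2:ℝ) ^ |m| * ((2:ℝ) ^ m) ^ (sh ξ) := by
      rcases le_or_gt 0 m with hm0 | hm0
      · have h1 : w ξ ^ m ≤ ((2:ℝ) ^ (sh ξ + 1)) ^ m :=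
          Real.rpow_le_rpow (hw0 ξ).le (hsh1 ξ).le hm0
        have h2 : ((2:ℝ) ^ (sh ξ + 1)) ^ m = ((2:ℝ) ^ m) ^ (sh ξ + 1) :=
          rpow_pow_comm (by norm_num) m (sh ξ + 1)
        have h3 : ((2:ℝ) ^ m) ^ (sh ξ + 1) = (2:ℝ) ^ m * ((2:ℝ) ^ m) ^ (sh ξ) := by
          rw [pow_succ]; ring
        rw [abs_of_nonneg hm0]
        calc w ξ ^ m ≤ ((2:ℝ) ^ (sh ξ + 1)) ^ m := h1
          _ = (2:ℝ) ^ m * ((2:ℝ) ^ m) ^ (sh ξ) := by rw [h2, h3]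
      · have h1 : w ξ ^ m ≤ ((2:ℝ) ^ (sh ξ)) ^ m :=
          Real.rpow_le_rpow_of_nonpos h2k (hsh2 ξ) hm0.le
        have h2 : ((2:ℝ) ^ (sh ξ)) ^ m = ((2:ℝ) ^ m) ^ (sh ξ) :=
          rpow_pow_comm (by norm_num) m (sh ξ)
        have h3 : (1:ℝ) ≤ (2:ℝ) ^ |m| :=
          Real.one_le_rpow one_le_two (abs_nonneg m)
        have h4 : (0:ℝ) < ((2:ℝ) ^ m) ^ (sh ξ) :=
          pow_pos (Real.rpow_pos_of_pos two_pos m) _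
        calc w ξ ^ m ≤ ((2:ℝ) ^ m) ^ (sh ξ) := by rw [← h2]; exact h1
          _ = 1 * ((2:ℝ) ^ m) ^ (sh ξ) := by ring
          _ ≤ (2:ℝ) ^ |m| * ((2:ℝ) ^ m) ^ (sh ξ) :=
            mul_le_mul_of_nonneg_right h3 h4.le
    calc w ξ ^ m * Real.exp (-t * w ξ ^ q)
        ≤ w ξ ^ m * Real.exp (-(t * b ^ (sh ξ))) := by
          apply mul_le_mul_of_nonneg_left hexp
          exact (Real.rpow_pos_of_pos (hw0 ξ) m).le
      _ ≤ (2:ℝ) ^ |m| * ((2:ℝ) ^ m) ^ (sh ξ) * Real.exp (-(t * b ^ (sh ξ))) :=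
          mul_le_mul_of_nonneg_right hB (Real.exp_pos _).le
  -- card of each fiber
  have hcard : ∀ (k : ℕ) (S : Finset ι), (∀ ξ ∈ S, sh ξ = k) →
      (S.card : ℝ) ≤ c₂ * ((2:ℝ) ^ Q) ^ (k + 1) := by
    intro k S hS
    have hlam : (1:ℝ) ≤ (2:ℝ) ^ (k + 1) := one_le_pow₀ one_le_two
    have hfin' := hfin ((2:ℝ) ^ (k + 1)) hlam
    have hsub : S ⊆ hfin'.toFinset := by
      intro ξ hξ
      rw [Set.Finite.mem_toFinset]
      have := hsh1 ξ
      rw [hS ξ hξ] at this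
      exact le_of_lt this
    have h1 : S.card ≤ hfin'.toFinset.card := Finset.card_le_card hsub
    have h2 : Nat.card {ξ // w ξ ≤ (2:ℝ) ^ (k + 1)} = hfin'.toFinset.card := by
      have h2' := Nat.card_coe_set_eq {ξ | w ξ ≤ (2:ℝ) ^ (k + 1)}
      rw [Set.ncard_eq_toFinset_card _ hfin'] at h2'
      exact h2'
    have h3 := hN ((2:ℝ) ^ (k + 1)) hlam
    have h4 : ((2:ℝ) ^ (k + 1)) ^ Q = ((2:ℝ) ^ Q) ^ (k + 1) :=
      rpow_pow_comm (by norm_num) Q (k + 1)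
    calc (S.card : ℝ) ≤ (Nat.card {ξ // w ξ ≤ (2:ℝ) ^ (k + 1)} : ℝ) := by
          rw [h2]; exact_mod_cast h1
      _ ≤ c₂ * ((2:ℝ) ^ (k + 1)) ^ Q := h3
      _ = c₂ * ((2:ℝ) ^ Q) ^ (k + 1) := by rw [h4]
  -- the main finite-sum bound for t ∈ (0,1]
  have hmain : ∀ t : ℝ, 0 < t → t ≤ 1 → ∀ S : Finset ι,
      ∑ ξ ∈ S, w ξ ^ m * Real.exp (-t * w ξ ^ q) ≤ D * (C₀ * t ^ (-γ)) := by
    intro t ht0 ht1 S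
    obtain ⟨hcsum, hctsum⟩ := hcore t ht0 ht1
    set fk : ℕ → ℝ := fun k => (b ^ k) ^ γ * Real.exp (-(t * b ^ k)) with hfk
    have hfk0 : ∀ k, 0 ≤ fk k := by
      intro k
      have : (0:ℝ) < b ^ k := pow_pos hb0 k
      positivity
    have hDfk : ∀ k : ℕ,
        c₂ * ((2:ℝ) ^ Q) ^ (k + 1) * ((2:ℝ) ^ |m| * ((2:ℝ) ^ m) ^ k * Real.exp (-(t * b ^ k)))
          = D * fk k := by
      intro k
      have h1 : (b ^ k : ℝ) ^ γ = ((2:ℝ) ^ (Q + m)) ^ k := by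
        rw [_root_.rpow_pow_comm hb0.le, hbγ]
      have h2 : ((2:ℝ) ^ (Q + m)) ^ k = ((2:ℝ) ^ Q) ^ k * ((2:ℝ) ^ m) ^ k := by
        rw [← mul_pow, ← Real.rpow_add two_pos]
      show _ = D * ((b ^ k) ^ γ * Real.exp (-(t * b ^ k)))
      rw [h1, h2, hDdef, pow_succ]
      ring
    have hfiber : ∀ k ∈ S.image sh,
        ∑ ξ ∈ S.filter (fun ξ => sh ξ = k), w ξ ^ m * Real.exp (-t * w ξ ^ q) ≤ D * fk k := by
      intro k _
      set T := S.filter (fun ξ => sh ξ = k) with hT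
      have hTk : ∀ ξ ∈ T, sh ξ = k := by
        intro ξ hξ
        exact (Finset.mem_filter.1 hξ).2
      have hval : ∀ ξ ∈ T, w ξ ^ m * Real.exp (-t * w ξ ^ q) ≤
          (2:ℝ) ^ |m| * ((2:ℝ) ^ m) ^ k * Real.exp (-(t * b ^ k)) := by
        intro ξ hξ
        have := hshell t ht0 ξ
        rwa [hTk ξ hξ] at this
      have h5 := Finset.sum_le_card_nsmul T _ _ hval
      rw [nsmul_eq_mul] at h5
      have hvnn : (0:ℝ) ≤ (2:ℝ) ^ |m| * ((2:ℝ) ^ m) ^ k * Real.exp (-(t * b ^ k)) := by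
        have := Real.rpow_pos_of_pos (two_pos (α := ℝ)) |m|
        have := pow_pos (Real.rpow_pos_of_pos (two_pos (α := ℝ)) m) k
        positivity
      calc ∑ ξ ∈ T, w ξ ^ m * Real.exp (-t * w ξ ^ q)
          ≤ (T.card : ℝ) * ((2:ℝ) ^ |m| * ((2:ℝ) ^ m) ^ k * Real.exp (-(t * b ^ k))) := h5
        _ ≤ c₂ * ((2:ℝ) ^ Q) ^ (k + 1) *
              ((2:ℝ) ^ |m| * ((2:ℝ) ^ m) ^ k * Real.exp (-(t * b ^ k))) :=
            mul_le_mul_of_nonneg_right (hcard k T hTk) hvnn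
        _ = D * fk k := hDfk k
    calc ∑ ξ ∈ S, w ξ ^ m * Real.exp (-t * w ξ ^ q)
        = ∑ k ∈ S.image sh, ∑ ξ ∈ S.filter (fun ξ => sh ξ = k),
            w ξ ^ m * Real.exp (-t * w ξ ^ q) :=
          (Finset.sum_fiberwise_of_maps_to (fun ξ hξ => Finset.mem_image_of_mem _ hξ) _).symm
      _ ≤ ∑ k ∈ S.image sh, D * fk k := Finset.sum_le_sum hfiber
      _ = D * ∑ k ∈ S.image sh, fk k := by rw [Finset.mul_sum]
      _ ≤ D * (C₀ * t ^ (-γ)) := by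
          apply mul_le_mul_of_nonneg_left _ hD.le
          calc ∑ k ∈ S.image sh, fk k ≤ ∑' k, fk k :=
                Summable.sum_le_tsum _ (fun k _ => hfk0 k) hcsum
            _ ≤ C₀ * t ^ (-γ) := hctsum
  have hnn : ∀ t ξ, (0:ℝ) ≤ w ξ ^ m * Real.exp (-t * w ξ ^ q) := by
    intro t ξ
    have := Real.rpow_pos_of_pos (hw0 ξ) m
    positivity
  have hsummable : ∀ t : ℝ, 0 < t →
      Summable fun ξ => w ξ ^ m * Real.exp (-t * w ξ ^ q) := by
    intro t ht0
    rcases le_or_gt t 1 with ht1 | ht1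
    · exact summable_of_sum_le (fun ξ => hnn t ξ) (hmain t ht0 ht1)
    · have hone : Summable fun ξ => w ξ ^ m * Real.exp (-(1:ℝ) * w ξ ^ q) :=
        summable_of_sum_le (fun ξ => hnn 1 ξ) (hmain 1 one_pos le_rfl)
      apply Summable.of_nonneg_of_le (fun ξ => hnn t ξ) _ hone
      intro ξ
      apply mul_le_mul_of_nonneg_left _ (Real.rpow_pos_of_pos (hw0 ξ) m).le
      apply Real.exp_le_exp.2
      have hwq : (0:ℝ) ≤ w ξ ^ q := (Real.rpow_pos_of_pos (hw0 ξ) q).le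
      nlinarith
  refine ⟨hsummable, D * C₀, by positivity, ?_⟩
  intro t ht0 ht1
  calc (∑' ξ, w ξ ^ m * Real.exp (-t * w ξ ^ q)) ≤ D * (C₀ * t ^ (-γ)) :=
        Summable.tsum_le_of_sum_le (hsummable t ht0) (hmain t ht0 ht1)
    _ = D * C₀ * t ^ (-γ) := by ring
end

section
/- Let ι be an index type, w : ι → ℝ with w ξ ≥ 1 for all ξ, satisfying the upper Weyl law with exponent Q > 0 (finite level sets, N(λ) ≤ c₂·λ^Q for λ ≥ 1), and let q > 0. Then there exists a constant C > 0 such that for all t ∈ (0, 1/2]: ∑'_ξ (w ξ)^{−Q} · exp(−t·(w ξ)^q) ≤ C·log(1/t). (This is the critical-order case m = −Q of the paper's trace-expansion theorem: the regularised trace |Tr(A e^{−t𝓜_q})| of an operator of order −Q has at most a logarithmic singularity −c·(1/q)·log t as t → 0⁺.) -/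
open Finset Real

lemma geom_partial (r : ℝ) (h0 : 0 ≤ r) (h1 : r < 1) (n : ℕ) :
    ∑ i ∈ Finset.range n, r ^ i ≤ (1 - r)⁻¹ := by
  calc ∑ i ∈ Finset.range n, r ^ i ≤ ∑' i : ℕ, r ^ i :=
        Summable.sum_le_tsum _ (fun i _ => pow_nonneg h0 i) (summable_geometric_of_lt_one h0 h1)
    _ = (1 - r)⁻¹ := tsum_geometric_of_lt_one h0 h1

lemma key_exp_sum (a : ℝ) (ha : 1 < a) :
    ∃ C : ℝ, 0 < C ∧ ∀ t : ℝ, 0 < t → t ≤ 1 / 2 → ∀ n : ℕ,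
      ∑ k ∈ Finset.range n, Real.exp (-t * a ^ k) ≤ C * Real.log (1 / t) := by
  have ha0 : 0 < a := lt_trans one_pos ha
  have hla : 0 < Real.log a := Real.log_pos ha
  have hl2 : 0 < Real.log 2 := Real.log_pos one_lt_two
  set B : ℝ := Real.exp (-1) * (1 - a⁻¹)⁻¹ with hB
  have hB0 : 0 < B := by
    apply mul_pos (Real.exp_pos _)
    have : a⁻¹ < 1 := inv_lt_one_of_one_lt₀ ha
    exact inv_pos.2 (sub_pos.2 this)
  refine ⟨(Real.log a)⁻¹ + (1 + B) / Real.log 2, by positivity, ?_⟩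
  intro t ht ht2 n
  have hinv : (2 : ℝ) ≤ 1 / t := by
    rw [le_div_iff₀ ht]; linarith
  have hL2 : Real.log 2 ≤ Real.log (1 / t) := Real.log_le_log two_pos hinv
  set L : ℝ := Real.log (1 / t) with hLdef
  have hL0 : 0 < L := lt_of_lt_of_le hl2 hL2
  set m : ℕ := ⌈L / Real.log a⌉₊ with hm
  -- a ^ m ≥ 1 / t
  have ham : 1 / t ≤ a ^ m := by
    have h1 : L / Real.log a ≤ (m : ℝ) := Nat.le_ceil _
    have h2 : L ≤ (m : ℝ) * Real.log a := by
      rw [div_le_iff₀ hla] at h1; exact h1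
    calc 1 / t = Real.exp L := (Real.exp_log (by positivity)).symm
      _ ≤ Real.exp ((m : ℝ) * Real.log a) := Real.exp_le_exp.2 h2
      _ = a ^ m := by rw [Real.exp_nat_mul, Real.exp_log ha0]
  -- tail term bound
  have tail : ∀ j : ℕ, Real.exp (-t * a ^ (m + j)) ≤ Real.exp (-1) * (a⁻¹) ^ j := by
    intro j
    have h1 : (1 : ℝ) ≤ t * a ^ m := by
      rw [div_le_iff₀ ht] at ham
      linarith [ham]
    have haj : (1 : ℝ) + j * Real.log a ≤ a ^ j := by
      calc (1 : ℝ) + j * Real.log a ≤ Real.exp ((j : ℝ) * Real.log a) :=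
            Real.add_one_le_exp _ |>.trans_eq' (by ring_nf)
        _ = a ^ j := by rw [Real.exp_nat_mul, Real.exp_log ha0]
    have h2 : (1 : ℝ) + j * Real.log a ≤ t * a ^ (m + j) := by
      have := mul_le_mul h1 haj (by positivity) (le_of_lt (by positivity : (0:ℝ) < t * a ^ m))
      rw [one_mul] at this
      calc (1 : ℝ) + j * Real.log a ≤ a ^ j := haj
        _ = 1 * a ^ j := (one_mul _).symm
        _ ≤ (t * a ^ m) * a ^ j := by
            apply mul_le_mul_of_nonneg_right h1 (by positivity)
        _ = t * a ^ (m + j) := by rw [pow_add]; ring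
    calc Real.exp (-t * a ^ (m + j)) ≤ Real.exp (-(1 + j * Real.log a)) := by
          apply Real.exp_le_exp.2; linarith
      _ = Real.exp (-1) * (a⁻¹) ^ j := by
          have hj : Real.exp (-((j : ℝ) * Real.log a)) = (a⁻¹) ^ j := by
            rw [Real.exp_neg, Real.exp_nat_mul, Real.exp_log ha0, inv_pow]
          rw [neg_add, Real.exp_add, hj]
  have head : ∀ k : ℕ, Real.exp (-t * a ^ k) ≤ 1 := by
    intro k
    apply Real.exp_le_one_iff.2
    have : 0 < a ^ k := pow_pos ha0 k
    nlinarith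
  have main : ∑ k ∈ Finset.range n, Real.exp (-t * a ^ k) ≤ m + B := by
    rcases le_or_gt n m with h | h
    · calc ∑ k ∈ Finset.range n, Real.exp (-t * a ^ k) ≤ ∑ k ∈ Finset.range n, 1 :=
            Finset.sum_le_sum (fun k _ => head k)
        _ = (n : ℝ) := by simp
        _ ≤ (m : ℝ) + B := by nlinarith [hB0, (Nat.cast_le (α := ℝ)).2 h]
    · rw [← Finset.sum_range_add_sum_Ico _ h.le]
      have h1 : ∑ k ∈ Finset.range m, Real.exp (-t * a ^ k) ≤ (m : ℝ) := by
        calc _ ≤ ∑ k ∈ Finset.range m, (1:ℝ) := Finset.sum_le_sum (fun k _ => head k)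
          _ = (m : ℝ) := by simp
      have h2 : ∑ k ∈ Finset.Ico m n, Real.exp (-t * a ^ k) ≤ B := by
        rw [Finset.sum_Ico_eq_sum_range]
        calc ∑ j ∈ Finset.range (n - m), Real.exp (-t * a ^ (m + j))
            ≤ ∑ j ∈ Finset.range (n - m), Real.exp (-1) * (a⁻¹) ^ j :=
              Finset.sum_le_sum (fun j _ => tail j)
          _ = Real.exp (-1) * ∑ j ∈ Finset.range (n - m), (a⁻¹) ^ j := by
              rw [Finset.mul_sum]
          _ ≤ Real.exp (-1) * (1 - a⁻¹)⁻¹ := by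
              apply mul_le_mul_of_nonneg_left _ (Real.exp_pos _).le
              exact geom_partial _ (by positivity) (inv_lt_one_of_one_lt₀ ha) _
          _ = B := rfl
      linarith
  have hmL : (m : ℝ) ≤ L / Real.log a + 1 := le_of_lt (Nat.ceil_lt_add_one (by positivity))
  calc ∑ k ∈ Finset.range n, Real.exp (-t * a ^ k) ≤ m + B := main
    _ ≤ L / Real.log a + 1 + B := by linarith
    _ ≤ L / Real.log a + ((1 + B) / Real.log 2) * L := by
        have h3 : (1 : ℝ) + B ≤ ((1 + B) / Real.log 2) * L := by
          rw [div_mul_eq_mul_div, le_div_iff₀ hl2]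
          nlinarith
        linarith
    _ = ((Real.log a)⁻¹ + (1 + B) / Real.log 2) * L := by field_simp

theorem heat_trace_upper_bound_critical_order
    {ι : Type*} (w : ι → ℝ) (hw : ∀ ξ, 1 ≤ w ξ)
    (hfin : ∀ lam : ℝ, 1 ≤ lam → {ξ | w ξ ≤ lam}.Finite)
    (Q : ℝ) (hQ : 0 < Q) (c₂ : ℝ) (hc₂ : 0 < c₂)
    (hN : ∀ lam : ℝ, 1 ≤ lam → (Nat.card {ξ // w ξ ≤ lam} : ℝ) ≤ c₂ * lam ^ Q)
    (q : ℝ) (hq : 0 < q) :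
    ∃ C : ℝ, 0 < C ∧ ∀ t : ℝ, 0 < t → t ≤ 1 / 2 →
      (∑' ξ, (w ξ) ^ (-Q) * Real.exp (-t * (w ξ) ^ q)) ≤ C * Real.log (1 / t) := by
  classical
  have ha : (1 : ℝ) < (2:ℝ) ^ q := by
    rw [Real.one_lt_rpow_iff_of_pos two_pos]; exact Or.inl ⟨one_lt_two, hq⟩
  obtain ⟨C', hC'0, hC'⟩ := key_exp_sum ((2:ℝ) ^ q) ha
  have h2Q : (0:ℝ) < (2:ℝ) ^ Q := Real.rpow_pos_of_pos two_pos Q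
  refine ⟨c₂ * (2:ℝ) ^ Q * C', by positivity, ?_⟩
  intro t ht ht2
  have hl2 : 0 < Real.log 2 := Real.log_pos one_lt_two
  have hinv : (2 : ℝ) ≤ 1 / t := by rw [le_div_iff₀ ht]; linarith
  have hL0 : 0 < Real.log (1 / t) := lt_of_lt_of_le hl2 (Real.log_le_log two_pos hinv)
  apply tsum_le_of_sum_le' (by positivity)
  intro s
  set key : ι → ℕ := fun ξ => ⌊Real.logb 2 (w ξ)⌋₊ with hkeydef
  set K : ℕ := s.sup key + 1 with hK
  have hmaps : ∀ ξ ∈ s, key ξ ∈ Finset.range K := fun ξ hξ =>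
    Finset.mem_range.2 (Nat.lt_succ_of_le (Finset.le_sup hξ))
  rw [← Finset.sum_fiberwise_of_maps_to hmaps]
  have fiber_bound : ∀ k ∈ Finset.range K,
      (∑ ξ ∈ s.filter (fun ξ => key ξ = k), (w ξ) ^ (-Q) * Real.exp (-t * (w ξ) ^ q))
        ≤ c₂ * (2:ℝ) ^ Q * Real.exp (-t * ((2:ℝ) ^ q) ^ k) := by
    intro k _
    set F := s.filter (fun ξ => key ξ = k) with hF
    have hwk : ∀ ξ ∈ F, (2:ℝ) ^ (k:ℝ) ≤ w ξ ∧ w ξ ≤ (2:ℝ) ^ ((k:ℝ) + 1) := by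
      intro ξ hξ
      have hkξ : key ξ = k := (Finset.mem_filter.1 hξ).2
      have hw0 : (0:ℝ) < w ξ := lt_of_lt_of_le one_pos (hw ξ)
      have hlb0 : 0 ≤ Real.logb 2 (w ξ) := Real.logb_nonneg one_lt_two (hw ξ)
      have heq : (2:ℝ) ^ Real.logb 2 (w ξ) = w ξ :=
        Real.rpow_logb two_pos (by norm_num) hw0
      constructor
      · have h1 : (k:ℝ) ≤ Real.logb 2 (w ξ) := by
          rw [← hkξ]; exact Nat.floor_le hlb0
        calc (2:ℝ) ^ (k:ℝ) ≤ (2:ℝ) ^ Real.logb 2 (w ξ) :=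
              Real.rpow_le_rpow_of_exponent_le one_le_two h1
          _ = w ξ := heq
      · have h1 : Real.logb 2 (w ξ) < (k:ℝ) + 1 := by
          rw [← hkξ]; exact Nat.lt_floor_add_one _
        calc w ξ = (2:ℝ) ^ Real.logb 2 (w ξ) := heq.symm
          _ ≤ (2:ℝ) ^ ((k:ℝ) + 1) :=
              Real.rpow_le_rpow_of_exponent_le one_le_two h1.le
    have h2k : (0:ℝ) < (2:ℝ) ^ (k:ℝ) := Real.rpow_pos_of_pos two_pos _
    -- per-term bound
    have hterm : ∀ ξ ∈ F, (w ξ) ^ (-Q) * Real.exp (-t * (w ξ) ^ q)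
        ≤ ((2:ℝ) ^ (k:ℝ)) ^ (-Q) * Real.exp (-t * ((2:ℝ) ^ (k:ℝ)) ^ q) := by
      intro ξ hξ
      obtain ⟨hlo, _⟩ := hwk ξ hξ
      have h1 : (w ξ) ^ (-Q) ≤ ((2:ℝ) ^ (k:ℝ)) ^ (-Q) :=
        Real.rpow_le_rpow_of_nonpos h2k hlo (neg_nonpos.2 hQ.le)
      have h2 : Real.exp (-t * (w ξ) ^ q) ≤ Real.exp (-t * ((2:ℝ) ^ (k:ℝ)) ^ q) := by
        apply Real.exp_le_exp.2
        have := Real.rpow_le_rpow h2k.le hlo hq.le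
        nlinarith
      have hp1 : (0:ℝ) ≤ (w ξ) ^ (-Q) := Real.rpow_nonneg (by linarith [hw ξ]) _
      exact mul_le_mul h1 h2 (Real.exp_pos _).le (Real.rpow_nonneg h2k.le _)
    -- cardinality bound
    have hlam1 : (1:ℝ) ≤ (2:ℝ) ^ ((k:ℝ) + 1) :=
      Real.one_le_rpow one_le_two (by positivity)
    have hcard : (F.card : ℝ) ≤ c₂ * ((2:ℝ) ^ ((k:ℝ) + 1)) ^ Q := by
      have hsub : (↑F : Set ι) ⊆ {ξ | w ξ ≤ (2:ℝ) ^ ((k:ℝ) + 1)} := by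
        intro ξ hξ; exact (hwk ξ hξ).2
      have hfin' := hfin _ hlam1
      have h1 : F.card ≤ Nat.card {ξ // w ξ ≤ (2:ℝ) ^ ((k:ℝ) + 1)} := by
        have h2 : Nat.card {ξ // w ξ ≤ (2:ℝ) ^ ((k:ℝ) + 1)} =
            Set.ncard {ξ | w ξ ≤ (2:ℝ) ^ ((k:ℝ) + 1)} := Nat.card_coe_set_eq _
        rw [h2, ← Set.ncard_coe_finset F]
        exact Set.ncard_le_ncard hsub hfin'
      calc (F.card : ℝ) ≤ (Nat.card {ξ // w ξ ≤ (2:ℝ) ^ ((k:ℝ) + 1)} : ℝ) := by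
            exact_mod_cast h1
        _ ≤ c₂ * ((2:ℝ) ^ ((k:ℝ) + 1)) ^ Q := hN _ hlam1
    -- rpow algebra
    have hpow : ((2:ℝ) ^ ((k:ℝ) + 1)) ^ Q * ((2:ℝ) ^ (k:ℝ)) ^ (-Q) = (2:ℝ) ^ Q := by
      rw [← Real.rpow_mul (by norm_num : (0:ℝ) ≤ 2),
          ← Real.rpow_mul (by norm_num : (0:ℝ) ≤ 2),
          ← Real.rpow_add two_pos]
      congr 1; ring
    have hexp : ((2:ℝ) ^ (k:ℝ)) ^ q = ((2:ℝ) ^ q) ^ k := by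
      rw [← Real.rpow_natCast ((2:ℝ) ^ q) k,
          ← Real.rpow_mul (by norm_num : (0:ℝ) ≤ 2),
          ← Real.rpow_mul (by norm_num : (0:ℝ) ≤ 2)]
      congr 1; ring
    calc (∑ ξ ∈ F, (w ξ) ^ (-Q) * Real.exp (-t * (w ξ) ^ q))
        ≤ F.card • (((2:ℝ) ^ (k:ℝ)) ^ (-Q) * Real.exp (-t * ((2:ℝ) ^ (k:ℝ)) ^ q)) :=
          Finset.sum_le_card_nsmul F _ _ hterm
      _ = (F.card : ℝ) * (((2:ℝ) ^ (k:ℝ)) ^ (-Q) * Real.exp (-t * ((2:ℝ) ^ (k:ℝ)) ^ q)) := by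
          rw [nsmul_eq_mul]
      _ ≤ (c₂ * ((2:ℝ) ^ ((k:ℝ) + 1)) ^ Q) *
            (((2:ℝ) ^ (k:ℝ)) ^ (-Q) * Real.exp (-t * ((2:ℝ) ^ (k:ℝ)) ^ q)) := by
          apply mul_le_mul_of_nonneg_right hcard
          exact mul_nonneg (Real.rpow_nonneg h2k.le _) (Real.exp_pos _).le
      _ = c₂ * (((2:ℝ) ^ ((k:ℝ) + 1)) ^ Q * ((2:ℝ) ^ (k:ℝ)) ^ (-Q)) *
            Real.exp (-t * ((2:ℝ) ^ (k:ℝ)) ^ q) := by ring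
      _ = c₂ * (2:ℝ) ^ Q * Real.exp (-t * ((2:ℝ) ^ q) ^ k) := by rw [hpow, hexp]
  calc (∑ k ∈ Finset.range K, ∑ ξ ∈ s.filter (fun ξ => key ξ = k),
          (w ξ) ^ (-Q) * Real.exp (-t * (w ξ) ^ q))
      ≤ ∑ k ∈ Finset.range K, c₂ * (2:ℝ) ^ Q * Real.exp (-t * ((2:ℝ) ^ q) ^ k) :=
        Finset.sum_le_sum fiber_bound
    _ = c₂ * (2:ℝ) ^ Q * ∑ k ∈ Finset.range K, Real.exp (-t * ((2:ℝ) ^ q) ^ k) := by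
        rw [Finset.mul_sum]
    _ ≤ c₂ * (2:ℝ) ^ Q * (C' * Real.log (1 / t)) := by
        apply mul_le_mul_of_nonneg_left (hC' t ht ht2 K) (by positivity)
    _ = c₂ * (2:ℝ) ^ Q * C' * Real.log (1 / t) := by ring
end

section
/- Let ι be an index type, w : ι → ℝ with w ξ ≥ 1 for all ξ, satisfying the two-sided Weyl law with exponent Q > 0 (finite level sets, c₁·λ^Q ≤ N(λ) ≤ c₂·λ^Q for λ ≥ 1). Let q > 0 and let σ : ι → ℝ satisfy a·(w ξ)^{−Q} ≤ σ ξ ≤ b·(w ξ)^{−Q} for all ξ, for some constants 0 < a ≤ b. Then there exist constants c, C > 0 such that for all t ∈ (0, 1/2]: c·log(1/t) ≤ ∑'_ξ σ ξ · exp(−t·(w ξ)^q) ≤ C·log(1/t). (This is the critical-order two-sided asymptotic Tr(A e^{−t𝓜_q}) ∼ −c_Q·(1/q)·log t of the paper's theorem for self-adjoint L and positive L-elliptic symbols of order −Q.) -/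
open Real Finset

private lemma geom_inv_bound {r : ℝ} (h0 : 0 ≤ r) (h1 : r < 1) (n : ℕ) :
    ∑ i ∈ Finset.range n, r ^ i ≤ (1 - r)⁻¹ := by
  have h1r : 0 < 1 - r := by linarith
  rw [geom_sum_eq (by linarith : r ≠ 1)]
  have heq : (r ^ n - 1) / (r - 1) = (1 - r ^ n) / (1 - r) := by
    rw [← neg_div_neg_eq]; ring_nf
  rw [heq]
  have hrn : 0 ≤ r ^ n := pow_nonneg h0 n
  rw [div_le_iff₀ h1r, inv_mul_cancel₀ h1r.ne']
  linarith

private lemma expsum_bound {β t : ℝ} (hβ : 1 < β) (ht : 0 < t) (ht1 : t ≤ 1) (m : ℕ) :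
    ∑ n ∈ Finset.range m, Real.exp (-(t * β ^ n)) ≤
      (Real.log (1 / t) / Real.log β + 1) + (Real.exp 1)⁻¹ * (1 - β⁻¹)⁻¹ := by
  have hβ0 : 0 < β := by linarith
  set L := Real.log (1 / t) with hL
  have hL0 : 0 ≤ L := Real.log_nonneg (by rw [le_div_iff₀ ht]; linarith)
  have hlogβ : 0 < Real.log β := Real.log_pos hβ
  set K := ⌈L / Real.log β⌉₊ with hK
  have htβK : 1 ≤ t * β ^ K := by
    have h1 : L / Real.log β ≤ (K : ℝ) := Nat.le_ceil _
    have h2 : L ≤ (K : ℝ) * Real.log β := by rwa [div_le_iff₀ hlogβ] at h1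
    have h3 : (1 : ℝ) / t ≤ β ^ K := by
      have h4 := Real.exp_le_exp.mpr h2
      rwa [hL, Real.exp_log (by positivity), ← Real.log_pow, Real.exp_log (by positivity)] at h4
    calc (1 : ℝ) = t * (1 / t) := by field_simp
      _ ≤ t * β ^ K := by gcongr
  have tail : ∀ n, K ≤ n → Real.exp (-(t * β ^ n)) ≤ (Real.exp 1)⁻¹ * β⁻¹ ^ (n - K) := by
    intro n hn
    have hsplit : β ^ n = β ^ K * β ^ (n - K) := by rw [← pow_add]; congr 1; omega
    have h1 : β ^ (n - K) ≤ t * β ^ n := by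
      rw [hsplit, ← mul_assoc]
      nlinarith [pow_pos hβ0 (n - K)]
    have h2 : 1 + ((n - K : ℕ) : ℝ) * Real.log β ≤ β ^ (n - K) := by
      have h3 := Real.add_one_le_exp (((n - K : ℕ) : ℝ) * Real.log β)
      rw [← Real.log_pow, Real.exp_log (by positivity)] at h3
      rw [Real.log_pow] at h3
      linarith
    calc Real.exp (-(t * β ^ n)) ≤ Real.exp (-(1 + ((n - K : ℕ) : ℝ) * Real.log β)) := by
          apply Real.exp_le_exp.mpr; linarith
      _ = (Real.exp 1)⁻¹ * β⁻¹ ^ (n - K) := by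
          rw [neg_add, Real.exp_add, Real.exp_neg, Real.exp_neg, ← Real.log_pow,
            Real.exp_log (by positivity), inv_pow]
  have hmono : ∑ n ∈ Finset.range m, Real.exp (-(t * β ^ n)) ≤
      ∑ n ∈ Finset.range (max m K), Real.exp (-(t * β ^ n)) := by
    apply Finset.sum_le_sum_of_subset_of_nonneg
    · exact Finset.range_subset_range.mpr (le_max_left m K)
    · intro i _ _; positivity
  refine hmono.trans ?_
  rw [Finset.range_eq_Ico, ← Finset.sum_Ico_consecutive _ (Nat.zero_le K) (le_max_right m K)]
  have hfirst : ∑ n ∈ Finset.Ico 0 K, Real.exp (-(t * β ^ n)) ≤ L / Real.log β + 1 := by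
    rw [Nat.Ico_zero_eq_range]
    have h1 : ∑ n ∈ Finset.range K, Real.exp (-(t * β ^ n)) ≤
        ∑ _n ∈ Finset.range K, (1 : ℝ) := by
      apply Finset.sum_le_sum
      intro i _
      rw [Real.exp_le_one_iff]
      have : 0 < β ^ i := pow_pos hβ0 i
      nlinarith
    rw [Finset.sum_const, Finset.card_range, nsmul_eq_mul, mul_one] at h1
    have h2 : (K : ℝ) < L / Real.log β + 1 := Nat.ceil_lt_add_one (by positivity)
    linarith
  have hsecond : ∑ n ∈ Finset.Ico K (max m K), Real.exp (-(t * β ^ n)) ≤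
      (Real.exp 1)⁻¹ * (1 - β⁻¹)⁻¹ := by
    have h1 : ∑ n ∈ Finset.Ico K (max m K), Real.exp (-(t * β ^ n)) ≤
        ∑ n ∈ Finset.Ico K (max m K), (Real.exp 1)⁻¹ * β⁻¹ ^ (n - K) := by
      apply Finset.sum_le_sum
      intro i hi
      exact tail i (Finset.mem_Ico.mp hi).1
    refine h1.trans ?_
    rw [Finset.sum_Ico_eq_sum_range]
    have h2 : ∀ k, K + k - K = k := fun k => by omega
    have h3 : ∑ k ∈ Finset.range (max m K - K), (Real.exp 1)⁻¹ * β⁻¹ ^ (K + k - K) =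
        (Real.exp 1)⁻¹ * ∑ k ∈ Finset.range (max m K - K), β⁻¹ ^ k := by
      rw [Finset.mul_sum]
      exact Finset.sum_congr rfl fun k _ => by rw [h2]
    rw [h3]
    have hβinv0 : 0 ≤ β⁻¹ := by positivity
    have hβinv1 : β⁻¹ < 1 := inv_lt_one_of_one_lt₀ hβ
    have hg := geom_inv_bound hβinv0 hβinv1 (max m K - K)
    have hexp : (0:ℝ) ≤ (Real.exp 1)⁻¹ := by positivity
    exact mul_le_mul_of_nonneg_left hg hexp
  linarith

set_option maxHeartbeats 2000000 in
theorem heat_trace_two_sided_asymp_critical_order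
    {ι : Type*} (w : ι → ℝ) (hw : ∀ ξ, 1 ≤ w ξ)
    (hfin : ∀ lam : ℝ, 1 ≤ lam → {ξ | w ξ ≤ lam}.Finite)
    (Q : ℝ) (hQ : 0 < Q) (c₁ c₂ : ℝ) (hc₁ : 0 < c₁) (hc₂ : 0 < c₂)
    (hN : ∀ lam : ℝ, ∀ _ : 1 ≤ lam,
      c₁ * lam ^ Q ≤ (Nat.card {ξ // w ξ ≤ lam} : ℝ) ∧
      (Nat.card {ξ // w ξ ≤ lam} : ℝ) ≤ c₂ * lam ^ Q)
    (q : ℝ) (hq : 0 < q)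
    (σ : ι → ℝ) (a b : ℝ) (ha : 0 < a) (hab : a ≤ b)
    (hσ : ∀ ξ, a * (w ξ) ^ (-Q) ≤ σ ξ ∧ σ ξ ≤ b * (w ξ) ^ (-Q)) :
    ∃ c C : ℝ, 0 < c ∧ 0 < C ∧ ∀ t : ℝ, 0 < t → t ≤ 1 / 2 →
      c * Real.log (1 / t) ≤ (∑' ξ, σ ξ * Real.exp (-t * (w ξ) ^ q)) ∧
      (∑' ξ, σ ξ * Real.exp (-t * (w ξ) ^ q)) ≤ C * Real.log (1 / t) := by
  classical
  have hb : 0 < b := lt_of_lt_of_le ha hab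
  have hwpos : ∀ ξ, 0 < w ξ := fun ξ => lt_of_lt_of_le one_pos (hw ξ)
  -- basic: c₁ ≤ c₂
  have hc12 : c₁ ≤ c₂ := by
    have h := hN 1 le_rfl
    rw [Real.one_rpow, mul_one, mul_one] at h
    linarith [h.1, h.2]
  -- the base Mb and shell ratio M
  set Mb : ℝ := 2 * c₂ / c₁ with hMb_def
  have hMb2 : (2 : ℝ) ≤ Mb := by
    rw [hMb_def, le_div_iff₀ hc₁]; nlinarith
  have hMb0 : 0 < Mb := by linarith
  have hc₁Mb : c₁ * Mb = 2 * c₂ := by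
    rw [hMb_def]; field_simp
  set M : ℝ := Mb ^ (1 / Q) with hM_def
  have hM1 : 1 < M :=
    (Real.one_lt_rpow_iff_of_pos hMb0).mpr (Or.inl ⟨by linarith, by positivity⟩)
  have hM0 : 0 < M := by linarith
  have hMQ1 : M ^ Q = Mb := by
    rw [hM_def, ← Real.rpow_mul hMb0.le, one_div, inv_mul_cancel₀ hQ.ne', Real.rpow_one]
  have hMkQ : ∀ k : ℕ, ((M ^ k : ℝ)) ^ Q = Mb ^ k := by
    intro k
    rw [← Real.rpow_natCast M k, ← Real.rpow_mul hM0.le, mul_comm, Real.rpow_mul hM0.le,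
      hMQ1, Real.rpow_natCast]
  set β : ℝ := M ^ q with hβ_def
  have hβ1 : 1 < β :=
    (Real.one_lt_rpow_iff_of_pos hM0).mpr (Or.inl ⟨hM1, hq⟩)
  have hβ0 : 0 < β := by linarith
  have hMkq : ∀ k : ℕ, ((M ^ k : ℝ)) ^ q = β ^ k := by
    intro k
    rw [← Real.rpow_natCast M k, ← Real.rpow_mul hM0.le, mul_comm, Real.rpow_mul hM0.le,
      ← hβ_def, Real.rpow_natCast]
  have hMk1 : ∀ k : ℕ, (1 : ℝ) ≤ M ^ k := fun k => one_le_pow₀ hM1.le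
  -- finite level sets as finsets
  set S : ℕ → Set ι := fun k => {ξ | w ξ ≤ M ^ k} with hS_def
  have hSfin : ∀ k, (S k).Finite := fun k => hfin _ (hMk1 k)
  set F : ℕ → Finset ι := fun k => (hSfin k).toFinset with hF_def
  have hmemF : ∀ k ξ, ξ ∈ F k ↔ w ξ ≤ M ^ k := by
    intro k ξ; simp [hF_def, hS_def]
  have hcardF : ∀ k : ℕ, ((F k).card : ℝ) = (Nat.card {ξ // w ξ ≤ M ^ k} : ℝ) := by
    intro k
    congr 1
    rw [← Set.ncard_eq_toFinset_card (S k) (hSfin k)]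
    exact (Nat.card_coe_set_eq (S k)).symm
  have hFlb : ∀ k : ℕ, c₁ * Mb ^ k ≤ ((F k).card : ℝ) := by
    intro k
    rw [hcardF k]
    have := (hN (M ^ k) (hMk1 k)).1
    rwa [hMkQ k] at this
  have hFub : ∀ k : ℕ, ((F k).card : ℝ) ≤ c₂ * Mb ^ k := by
    intro k
    rw [hcardF k]
    have := (hN (M ^ k) (hMk1 k)).2
    rwa [hMkQ k] at this
  have hFsub : ∀ k : ℕ, F k ⊆ F (k + 1) := by
    intro k ξ hξ
    rw [hmemF] at hξ ⊢
    exact hξ.trans (pow_le_pow_right₀ hM1.le (Nat.le_succ k))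
  -- pointwise positivity of the summand
  have hσpos : ∀ ξ, 0 < σ ξ := by
    intro ξ
    have h1 := (hσ ξ).1
    have h2 : (0 : ℝ) < a * w ξ ^ (-Q) := mul_pos ha (Real.rpow_pos_of_pos (hwpos ξ) _)
    linarith
  have hfnonneg : ∀ (t : ℝ) (ξ : ι), 0 ≤ σ ξ * Real.exp (-t * w ξ ^ q) := by
    intro t ξ
    exact mul_nonneg (hσpos ξ).le (Real.exp_nonneg _)
  -- pointwise upper bound on the summand in shell n
  have hpt_upper : ∀ (t : ℝ), 0 < t → ∀ (n : ℕ) (ξ : ι), M ^ n ≤ w ξ →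
      σ ξ * Real.exp (-t * w ξ ^ q) ≤ b * (Mb ^ n)⁻¹ * Real.exp (-(t * β ^ n)) := by
    intro t ht n ξ hξ
    have h1 : σ ξ ≤ b * (Mb ^ n)⁻¹ := by
      have h2 := (hσ ξ).2
      have h3 : (w ξ) ^ (-Q) ≤ (M ^ n) ^ (-Q) :=
        Real.rpow_le_rpow_of_nonpos (by positivity) hξ (by linarith)
      have h4 : ((M ^ n : ℝ)) ^ (-Q) = (Mb ^ n)⁻¹ := by
        rw [Real.rpow_neg (by positivity), hMkQ n]
      calc σ ξ ≤ b * (w ξ) ^ (-Q) := h2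
        _ ≤ b * (M ^ n) ^ (-Q) := by gcongr
        _ = b * (Mb ^ n)⁻¹ := by rw [h4]
    have h5 : Real.exp (-t * w ξ ^ q) ≤ Real.exp (-(t * β ^ n)) := by
      apply Real.exp_le_exp.mpr
      have h6 : β ^ n ≤ w ξ ^ q := by
        rw [← hMkq n]
        exact Real.rpow_le_rpow (by positivity) hξ hq.le
      nlinarith
    have hbn : (0:ℝ) ≤ b * (Mb ^ n)⁻¹ :=
      mul_nonneg hb.le (inv_nonneg.mpr (pow_nonneg hMb0.le n))
    exact mul_le_mul h1 h5 (Real.exp_nonneg _) hbn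
  -- pointwise lower bound on the summand in shell n (when t * β^(n+1) ≤ 1)
  have hpt_lower : ∀ (t : ℝ), 0 < t → ∀ (n : ℕ) (ξ : ι), w ξ ≤ M ^ n → t * β ^ n ≤ 1 →
      a * (Mb ^ n)⁻¹ * (Real.exp 1)⁻¹ ≤ σ ξ * Real.exp (-t * w ξ ^ q) := by
    intro t ht n ξ hξ htn
    have h1 : a * (Mb ^ n)⁻¹ ≤ σ ξ := by
      have h2 := (hσ ξ).1
      have h3 : ((M ^ n : ℝ)) ^ (-Q) ≤ (w ξ) ^ (-Q) :=
        Real.rpow_le_rpow_of_nonpos (hwpos ξ) hξ (by linarith)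
      have h4 : ((M ^ n : ℝ)) ^ (-Q) = (Mb ^ n)⁻¹ := by
        rw [Real.rpow_neg (by positivity), hMkQ n]
      calc a * (Mb ^ n)⁻¹ = a * (M ^ n) ^ (-Q) := by rw [h4]
        _ ≤ a * (w ξ) ^ (-Q) := by gcongr
        _ ≤ σ ξ := h2
    have h5 : (Real.exp 1)⁻¹ ≤ Real.exp (-t * w ξ ^ q) := by
      rw [← Real.exp_neg]
      apply Real.exp_le_exp.mpr
      have h6 : w ξ ^ q ≤ β ^ n := by
        rw [← hMkq n]
        exact Real.rpow_le_rpow (hwpos ξ).le hξ hq.le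
      have h7 : t * w ξ ^ q ≤ t * β ^ n := by nlinarith
      nlinarith
    calc a * (Mb ^ n)⁻¹ * (Real.exp 1)⁻¹ ≤ σ ξ * (Real.exp 1)⁻¹ := by
          have : (0:ℝ) < (Real.exp 1)⁻¹ := by positivity
          nlinarith
      _ ≤ σ ξ * Real.exp (-t * w ξ ^ q) := by
          have := hσpos ξ; nlinarith
  -- key constants
  have hlogβ : 0 < Real.log β := Real.log_pos hβ1
  have hlog2 : 0 < Real.log 2 := Real.log_pos (by norm_num)
  set E : ℝ := (Real.exp 1)⁻¹ * (1 - β⁻¹)⁻¹ with hE_def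
  have hE0 : 0 ≤ E := by
    have : 0 < 1 - β⁻¹ := by
      have := inv_lt_one_of_one_lt₀ hβ1; linarith
    positivity
  set C : ℝ := b * c₂ * Mb * (1 / Real.log β + (1 + E) / Real.log 2) with hC_def
  have hC0 : 0 < C := by
    have h1 : 0 < 1 / Real.log β := by positivity
    have h2 : 0 ≤ (1 + E) / Real.log 2 := by positivity
    have : 0 < 1 / Real.log β + (1 + E) / Real.log 2 := by linarith
    positivity
  -- UPPER bound on any finite partial sum
  have key_upper : ∀ t : ℝ, 0 < t → t ≤ 1 / 2 → ∀ s : Finset ι,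
      ∑ ξ ∈ s, σ ξ * Real.exp (-t * w ξ ^ q) ≤ C * Real.log (1 / t) := by
    intro t ht ht2 s
    set L := Real.log (1 / t) with hL
    have hLlog2 : Real.log 2 ≤ L := by
      rw [hL]
      apply Real.log_le_log (by norm_num)
      rw [le_div_iff₀ ht]; linarith
    have hL0 : 0 < L := lt_of_lt_of_le hlog2 hLlog2
    set idx : ι → ℕ := fun ξ => ⌊Real.log (w ξ) / Real.log M⌋₊ with hidx_def
    have hlogM : 0 < Real.log M := Real.log_pos hM1
    have hidx_lower : ∀ ξ, M ^ (idx ξ) ≤ w ξ := by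
      intro ξ
      have h0 : 0 ≤ Real.log (w ξ) / Real.log M := by
        have := Real.log_nonneg (hw ξ); positivity
      have h1 : ((idx ξ : ℕ) : ℝ) ≤ Real.log (w ξ) / Real.log M := Nat.floor_le h0
      have h2 : ((idx ξ : ℕ) : ℝ) * Real.log M ≤ Real.log (w ξ) := by
        rwa [← le_div_iff₀ hlogM]
      have h3 := Real.exp_le_exp.mpr h2
      rwa [Real.exp_nat_mul, Real.exp_log hM0, Real.exp_log (hwpos ξ)] at h3
    have hidx_upper : ∀ ξ, w ξ ≤ M ^ (idx ξ + 1) := by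
      intro ξ
      have h1 : Real.log (w ξ) / Real.log M < (idx ξ : ℝ) + 1 := Nat.lt_floor_add_one _
      have h2 : Real.log (w ξ) < ((idx ξ : ℝ) + 1) * Real.log M := by
        rwa [div_lt_iff₀ hlogM] at h1
      have h3 := Real.exp_le_exp.mpr h2.le
      rw [Real.exp_log (hwpos ξ)] at h3
      have h4 : (((idx ξ + 1 : ℕ) : ℝ)) * Real.log M = ((idx ξ : ℝ) + 1) * Real.log M := by
        push_cast; ring
      calc w ξ ≤ Real.exp (((idx ξ : ℝ) + 1) * Real.log M) := h3
        _ = M ^ (idx ξ + 1) := by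
            rw [← h4, Real.exp_nat_mul, Real.exp_log hM0]
    set m : ℕ := s.sup idx + 1 with hm_def
    have hmaps : ∀ ξ ∈ s, idx ξ ∈ Finset.range m := by
      intro ξ hξ
      rw [Finset.mem_range, hm_def]
      exact Nat.lt_succ_of_le (Finset.le_sup hξ)
    rw [← Finset.sum_fiberwise_of_maps_to hmaps (fun ξ => σ ξ * Real.exp (-t * w ξ ^ q))]
    have hfiber : ∀ n ∈ Finset.range m,
        ∑ ξ ∈ s.filter (fun ξ => idx ξ = n), σ ξ * Real.exp (-t * w ξ ^ q) ≤
          b * c₂ * Mb * Real.exp (-(t * β ^ n)) := by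
      intro n _
      set fib := s.filter (fun ξ => idx ξ = n) with hfib_def
      have hsub : fib ⊆ F (n + 1) := by
        intro ξ hξ
        rw [hfib_def, Finset.mem_filter] at hξ
        rw [hmemF]
        calc w ξ ≤ M ^ (idx ξ + 1) := hidx_upper ξ
          _ = M ^ (n + 1) := by rw [hξ.2]
      have hcard : ((fib.card : ℕ) : ℝ) ≤ c₂ * Mb ^ (n + 1) :=
        le_trans (by exact_mod_cast Finset.card_le_card hsub) (hFub (n + 1))
      have hterm : ∀ ξ ∈ fib, σ ξ * Real.exp (-t * w ξ ^ q) ≤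
          b * (Mb ^ n)⁻¹ * Real.exp (-(t * β ^ n)) := by
        intro ξ hξ
        rw [hfib_def, Finset.mem_filter] at hξ
        exact hpt_upper t ht n ξ (hξ.2 ▸ hidx_lower ξ)
      have hsum := Finset.sum_le_card_nsmul fib _ _ hterm
      rw [nsmul_eq_mul] at hsum
      refine hsum.trans ?_
      have hMbn : (0:ℝ) < Mb ^ n := by positivity
      have hexp : (0:ℝ) < Real.exp (-(t * β ^ n)) := Real.exp_pos _
      have h1 : (fib.card : ℝ) * (b * (Mb ^ n)⁻¹ * Real.exp (-(t * β ^ n))) ≤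
          (c₂ * Mb ^ (n + 1)) * (b * (Mb ^ n)⁻¹ * Real.exp (-(t * β ^ n))) := by
        apply mul_le_mul_of_nonneg_right hcard
        positivity
      refine h1.trans (le_of_eq ?_)
      have : Mb ^ (n + 1) * (Mb ^ n)⁻¹ = Mb := by
        rw [pow_succ]; field_simp
      field_simp
      ring
    have htotal : ∑ n ∈ Finset.range m,
        ∑ ξ ∈ s.filter (fun ξ => idx ξ = n), σ ξ * Real.exp (-t * w ξ ^ q) ≤
        b * c₂ * Mb * ∑ n ∈ Finset.range m, Real.exp (-(t * β ^ n)) := by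
      rw [Finset.mul_sum]
      exact Finset.sum_le_sum hfiber
    refine htotal.trans ?_
    have hexpsum := expsum_bound hβ1 ht (by linarith) m
    have hbc : (0:ℝ) < b * c₂ * Mb := by positivity
    have h2 : b * c₂ * Mb * ∑ n ∈ Finset.range m, Real.exp (-(t * β ^ n)) ≤
        b * c₂ * Mb * ((L / Real.log β + 1) + E) := by
      apply mul_le_mul_of_nonneg_left _ hbc.le
      rw [hE_def]
      exact hexpsum
    refine h2.trans ?_
    rw [hC_def]
    have h3 : L / Real.log β + 1 + E ≤ (1 / Real.log β + (1 + E) / Real.log 2) * L := by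
      have h4 : 1 + E ≤ ((1 + E) / Real.log 2) * L := by
        rw [div_mul_eq_mul_div, le_div_iff₀ hlog2]
        nlinarith
      have h5 : L / Real.log β = (1 / Real.log β) * L := by ring
      linarith [h5 ▸ le_refl (L / Real.log β)]
    nlinarith
  -- summability
  have hsummable : ∀ t : ℝ, 0 < t → t ≤ 1 / 2 →
      Summable (fun ξ => σ ξ * Real.exp (-t * w ξ ^ q)) := by
    intro t ht ht2
    exact summable_of_sum_le (fun ξ => hfnonneg t ξ) (key_upper t ht ht2)
  -- a point with w ξ₀ ≤ 1
  have hξ₀ : ∃ ξ₀, w ξ₀ ≤ 1 := by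
    by_contra hcon
    push_neg at hcon
    have hempty : {ξ | w ξ ≤ (1:ℝ)} = ∅ := by
      ext ξ; simp only [Set.mem_setOf_eq, Set.mem_empty_iff_false, iff_false]
      exact not_le.mpr (hcon ξ)
    have h1 := (hN 1 le_rfl).1
    rw [Real.one_rpow, mul_one] at h1
    have h2 : Nat.card {ξ // w ξ ≤ (1:ℝ)} = 0 := by
      have : IsEmpty {ξ // w ξ ≤ (1:ℝ)} := by
        constructor; rintro ⟨ξ, hξ⟩
        exact absurd hξ (not_le.mpr (hcon ξ))
      exact Nat.card_of_isEmpty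
    rw [h2] at h1
    norm_num at h1
    linarith
  obtain ⟨ξ₀, hwξ₀⟩ := hξ₀
  have hwξ₀1 : w ξ₀ = 1 := le_antisymm hwξ₀ (hw ξ₀)
  -- shell finsets for the lower bound
  set T : ℕ → Finset ι := fun n => F (n + 1) \ F n with hT_def
  have hcardT : ∀ n : ℕ, c₂ * Mb ^ n ≤ ((T n).card : ℝ) := by
    intro n
    have h1 : (T n).card = (F (n + 1)).card - (F n).card :=
      Finset.card_sdiff_of_subset (hFsub n)
    have h2 : (F n).card ≤ (F (n + 1)).card := Finset.card_le_card (hFsub n)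
    have h3 : ((T n).card : ℝ) = ((F (n + 1)).card : ℝ) - ((F n).card : ℝ) := by
      rw [h1, Nat.cast_sub h2]
    rw [h3]
    have h4 := hFlb (n + 1)
    have h5 := hFub n
    have h6 : c₁ * Mb ^ (n + 1) = 2 * c₂ * Mb ^ n := by
      rw [pow_succ]; nlinarith [hc₁Mb]
    nlinarith
  have hmemT : ∀ n ξ, ξ ∈ T n → w ξ ≤ M ^ (n + 1) := by
    intro n ξ hξ
    rw [hT_def] at hξ
    simp only [Finset.mem_sdiff] at hξ
    exact (hmemF (n + 1) ξ).mp hξ.1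
  -- lower-bound constants
  set c₀ : ℝ := a * c₂ * Mb⁻¹ * (Real.exp 1)⁻¹ with hc₀_def
  have hc₀0 : 0 < c₀ := by positivity
  set α : ℝ := Real.log β with hα_def
  have hα0 : 0 < α := hlogβ
  set cc : ℝ := min (c₀ / (2 * α)) (a * (Real.exp 1)⁻¹ / (2 * α)) with hcc_def
  have hcc0 : 0 < cc := lt_min (by positivity) (by positivity)
  refine ⟨cc, C, hcc0, hC0, fun t ht ht2 => ?_⟩
  have hsum := hsummable t ht ht2
  set L := Real.log (1 / t) with hL
  have hLlog2 : Real.log 2 ≤ L := by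
    rw [hL]
    apply Real.log_le_log (by norm_num)
    rw [le_div_iff₀ ht]; linarith
  have hL0 : 0 < L := lt_of_lt_of_le hlog2 hLlog2
  constructor
  · -- LOWER bound
    set K : ℕ := ⌊L / α⌋₊ with hK_def
    have hβK : ∀ n : ℕ, n ≤ K → t * β ^ n ≤ 1 := by
      intro n hn
      have h1 : (K : ℝ) ≤ L / α := Nat.floor_le (by positivity)
      have h2 : (K : ℝ) * α ≤ L := by rwa [← le_div_iff₀ hα0]
      have h3 : (n : ℝ) * α ≤ L := by
        have : (n : ℝ) ≤ (K : ℝ) := by exact_mod_cast hn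
        nlinarith
      have h4 : β ^ n ≤ 1 / t := by
        have h5 := Real.exp_le_exp.mpr h3
        rw [hα_def, ← Real.log_pow, Real.exp_log (by positivity), hL,
          Real.exp_log (by positivity)] at h5
        exact h5
      rw [le_div_iff₀ ht] at h4
      linarith
    -- shell sum lower bound
    have hshell : ∀ n : ℕ, n < K →
        c₀ ≤ ∑ ξ ∈ T n, σ ξ * Real.exp (-t * w ξ ^ q) := by
      intro n hn
      have hterm : ∀ ξ ∈ T n, a * (Mb ^ (n+1))⁻¹ * (Real.exp 1)⁻¹ ≤
          σ ξ * Real.exp (-t * w ξ ^ q) := by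
        intro ξ hξ
        exact hpt_lower t ht (n + 1) ξ (hmemT n ξ hξ) (hβK (n + 1) hn)
      have hsum2 := Finset.card_nsmul_le_sum (T n) _ _ hterm
      rw [nsmul_eq_mul] at hsum2
      refine le_trans ?_ hsum2
      have h1 : c₂ * Mb ^ n * (a * (Mb ^ (n+1))⁻¹ * (Real.exp 1)⁻¹) ≤
          ((T n).card : ℝ) * (a * (Mb ^ (n+1))⁻¹ * (Real.exp 1)⁻¹) := by
        apply mul_le_mul_of_nonneg_right (hcardT n)
        positivity
      refine le_trans (le_of_eq ?_) h1
      rw [hc₀_def, pow_succ]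
      field_simp
    -- sum over disjoint shells
    have hdisj : (↑(Finset.range K) : Set ℕ).PairwiseDisjoint T := by
      intro i _ j _ hij
      rw [Function.onFun, Finset.disjoint_left]
      intro ξ hξi hξj
      rcases lt_or_gt_of_ne hij with h | h
      · -- i < j : ξ ∈ T i means w ξ ≤ M^(i+1) ≤ M^j, but ξ ∈ T j means ¬ w ξ ≤ M^j
        have h1 : w ξ ≤ M ^ j := by
          have := hmemT i ξ hξi
          refine this.trans (pow_le_pow_right₀ hM1.le (by omega))
        rw [hT_def] at hξj
        simp only [Finset.mem_sdiff] at hξj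
        exact hξj.2 ((hmemF j ξ).mpr h1)
      · have h1 : w ξ ≤ M ^ i := by
          have := hmemT j ξ hξj
          refine this.trans (pow_le_pow_right₀ hM1.le (by omega))
        rw [hT_def] at hξi
        simp only [Finset.mem_sdiff] at hξi
        exact hξi.2 ((hmemF i ξ).mpr h1)
    have hU : (K : ℝ) * c₀ ≤ ∑' ξ, σ ξ * Real.exp (-t * w ξ ^ q) := by
      have h1 : ∑ ξ ∈ (Finset.range K).biUnion T, σ ξ * Real.exp (-t * w ξ ^ q) =
          ∑ n ∈ Finset.range K, ∑ ξ ∈ T n, σ ξ * Real.exp (-t * w ξ ^ q) :=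
        Finset.sum_biUnion hdisj
      have h2 : (K : ℝ) * c₀ ≤
          ∑ n ∈ Finset.range K, ∑ ξ ∈ T n, σ ξ * Real.exp (-t * w ξ ^ q) := by
        have h3 : ∑ n ∈ Finset.range K, c₀ ≤
            ∑ n ∈ Finset.range K, ∑ ξ ∈ T n, σ ξ * Real.exp (-t * w ξ ^ q) :=
          Finset.sum_le_sum (fun n hn => hshell n (Finset.mem_range.mp hn))
        rwa [Finset.sum_const, Finset.card_range, nsmul_eq_mul] at h3
      calc (K : ℝ) * c₀ ≤ ∑ n ∈ Finset.range K, ∑ ξ ∈ T n, σ ξ * Real.exp (-t * w ξ ^ q) := h2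
        _ = ∑ ξ ∈ (Finset.range K).biUnion T, σ ξ * Real.exp (-t * w ξ ^ q) := h1.symm
        _ ≤ ∑' ξ, σ ξ * Real.exp (-t * w ξ ^ q) :=
            Summable.sum_le_tsum _ (fun ξ _ => hfnonneg t ξ) hsum
    have hsingle : a * (Real.exp 1)⁻¹ ≤ ∑' ξ, σ ξ * Real.exp (-t * w ξ ^ q) := by
      have h1 : a * (Real.exp 1)⁻¹ ≤ σ ξ₀ * Real.exp (-t * w ξ₀ ^ q) := by
        have h2 : a ≤ σ ξ₀ := by
          have := (hσ ξ₀).1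
          rwa [hwξ₀1, Real.one_rpow, mul_one] at this
        have h3 : (Real.exp 1)⁻¹ ≤ Real.exp (-t * w ξ₀ ^ q) := by
          rw [← Real.exp_neg]
          apply Real.exp_le_exp.mpr
          rw [hwξ₀1, Real.one_rpow]
          nlinarith
        calc a * (Real.exp 1)⁻¹ ≤ σ ξ₀ * (Real.exp 1)⁻¹ := by
              have : (0:ℝ) < (Real.exp 1)⁻¹ := by positivity
              nlinarith
          _ ≤ σ ξ₀ * Real.exp (-t * w ξ₀ ^ q) := by
              have := hσpos ξ₀; nlinarith
      exact h1.trans (Summable.le_tsum hsum ξ₀ (fun j _ => hfnonneg t j))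
    -- combine
    by_cases hcase : L ≤ 2 * α
    · have h1 : cc * L ≤ (a * (Real.exp 1)⁻¹ / (2 * α)) * L :=
        mul_le_mul_of_nonneg_right (min_le_right _ _) hL0.le
      have h2 : (a * (Real.exp 1)⁻¹ / (2 * α)) * L ≤ a * (Real.exp 1)⁻¹ := by
        rw [div_mul_eq_mul_div, div_le_iff₀ (by positivity)]
        have : (0:ℝ) < a * (Real.exp 1)⁻¹ := by positivity
        nlinarith
      linarith
    · push_neg at hcase
      have hKge : L / (2 * α) ≤ (K : ℝ) := by
        have h1 : L / α - 1 < (K : ℝ) := by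
          have := Nat.sub_one_lt_floor (L / α)
          rwa [hK_def]
        have h2 : L / (2 * α) ≤ L / α - 1 := by
          rw [div_sub' hα0.ne', div_le_div_iff₀ (by positivity) hα0]
          nlinarith
        linarith
      have h1 : cc * L ≤ (c₀ / (2 * α)) * L :=
        mul_le_mul_of_nonneg_right (min_le_left _ _) hL0.le
      have h2 : (c₀ / (2 * α)) * L ≤ (K : ℝ) * c₀ := by
        rw [div_mul_eq_mul_div, div_le_iff₀ (by positivity)]
        have h3 : L ≤ (K : ℝ) * (2 * α) := by
          rwa [div_le_iff₀ (by positivity)] at hKge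
        nlinarith [mul_le_mul_of_nonneg_left h3 hc₀0.le]
      linarith
  · -- UPPER bound on tsum
    exact Summable.tsum_le_of_sum_le hsum (key_upper t ht ht2)
end

section
/- Let ι be an index type, w : ι → ℝ with w ξ ≥ 1 for all ξ, satisfying the upper Weyl law with exponent Q > 0 (finite level sets, N(λ) ≤ c₂·λ^Q for λ ≥ 1). Let q > 0, let m > −Q, and let ψ : ℝ → ℝ be a nonnegative bounded function with support contained in [0, R] for some R > 0. Then for every t > 0 only finitely many terms of ξ ↦ (w ξ)^m · ψ(t·(w ξ)^q) are nonzero, and there exists a constant C > 0 such that for all t ∈ (0,1]: ∑'_ξ (w ξ)^m · ψ(t·(w ξ)^q) ≤ C·t^{−(Q+m)/q}. (This is the spectral-sum bound behind the paper's regularised-trace theorem |Tr(A ψ(tE))| ≤ C t^{−(Q+m)/q} for operators A of order m > −Q, a compactly supported cutoff ψ, and a positive L-elliptic multiplier E of order q with eigenvalues comparable to (w ξ)^q.) -/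
theorem regularised_trace_bound_order_m
    {ι : Type*} (w : ι → ℝ) (hw : ∀ ξ, 1 ≤ w ξ)
    (hfin : ∀ lam : ℝ, 1 ≤ lam → {ξ | w ξ ≤ lam}.Finite)
    (Q : ℝ) (hQ : 0 < Q) (c₂ : ℝ) (hc₂ : 0 < c₂)
    (hN : ∀ lam : ℝ, 1 ≤ lam → (Nat.card {ξ // w ξ ≤ lam} : ℝ) ≤ c₂ * lam ^ Q)
    (q : ℝ) (hq : 0 < q) (m : ℝ) (hm : -Q < m)
    (ψ : ℝ → ℝ) (hψ0 : ∀ x, 0 ≤ ψ x) (B : ℝ) (hψB : ∀ x, ψ x ≤ B)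
    (R : ℝ) (hR : 0 < R) (hsupp : Function.support ψ ⊆ Set.Icc 0 R) :
    (∀ t : ℝ, 0 < t →
      (Function.support fun ξ => (w ξ) ^ m * ψ (t * (w ξ) ^ q)).Finite) ∧
    ∃ C : ℝ, 0 < C ∧ ∀ t : ℝ, 0 < t → t ≤ 1 →
      (∑' ξ, (w ξ) ^ m * ψ (t * (w ξ) ^ q)) ≤ C * t ^ (-((Q + m) / q)) := by
  classical
  have hQm : 0 < Q + m := by linarith
  have hB0 : 0 ≤ B := le_trans (hψ0 0) (hψB 0)
  -- the geometric ratio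
  set a : ℝ := (2 : ℝ) ^ (Q + m) with ha_def
  have ha1 : 1 < a := by
    rw [ha_def, Real.one_lt_rpow_iff_of_pos (by norm_num)]
    exact Or.inl ⟨one_lt_two, hQm⟩
  have ha0 : 0 < a := lt_trans one_pos ha1
  set D : ℝ := (2 : ℝ) ^ |m| with hD_def
  have hD1 : (1 : ℝ) ≤ D := Real.one_le_rpow one_le_two (abs_nonneg m)
  have hD0 : 0 < D := lt_of_lt_of_le one_pos hD1
  set C₀ : ℝ := c₂ * D * (a * a) / (a - 1) with hC₀_def
  have hC₀ : 0 < C₀ := by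
    apply div_pos (by positivity) (by linarith)
  -- counting via the Weyl law
  have hcard : ∀ lam : ℝ, ∀ h : 1 ≤ lam,
      (((hfin lam h).toFinset.card : ℝ)) ≤ c₂ * lam ^ Q := by
    intro lam h
    have := hN lam h
    rwa [show (Nat.card {ξ // w ξ ≤ lam}) = (hfin lam h).toFinset.card by
      rw [← Set.ncard_eq_toFinset_card _ (hfin lam h)]
      exact Nat.card_coe_set_eq _] at this
  -- the key dyadic bound
  have key : ∀ Λ : ℝ, ∀ hΛ : 1 ≤ Λ,
      (∑ ξ ∈ (hfin Λ hΛ).toFinset, (w ξ) ^ m) ≤ C₀ * Λ ^ (Q + m) := by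
    intro Λ hΛ
    set L : ℕ := Nat.log 2 ⌊Λ⌋₊ with hL_def
    set K : ℕ := L + 1 with hK_def
    have hfloorΛ : 1 ≤ ⌊Λ⌋₊ := Nat.le_floor (by exact_mod_cast hΛ)
    -- fibering function: dyadic level
    set f : ι → ℕ := fun ξ => Nat.log 2 ⌊w ξ⌋₊ with hf_def
    have hmaps : ∀ ξ ∈ (hfin Λ hΛ).toFinset, f ξ ∈ Finset.range K := by
      intro ξ hξ
      rw [Set.Finite.mem_toFinset] at hξ
      have : ⌊w ξ⌋₊ ≤ ⌊Λ⌋₊ := Nat.floor_mono hξ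
      simp only [Finset.mem_range, hK_def]
      exact Nat.lt_succ_of_le (Nat.log_mono_right this)
    rw [← Finset.sum_fiberwise_of_maps_to hmaps]
    -- bound each fiber
    have hfiber : ∀ k ∈ Finset.range K,
        (∑ ξ ∈ (hfin Λ hΛ).toFinset.filter (fun ξ => f ξ = k), (w ξ) ^ m)
          ≤ c₂ * D * a ^ (k + 1) := by
      intro k _
      have h2k1 : (1 : ℝ) ≤ (2 : ℝ) ^ (k + 1) := one_le_pow₀ one_le_two
      have hpos2 : (0 : ℝ) < (2 : ℝ) ^ (k + 1) := by positivity
      -- pointwise bound on the shell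
      have hpt : ∀ ξ ∈ (hfin Λ hΛ).toFinset.filter (fun ξ => f ξ = k),
          (w ξ) ^ m ≤ D * ((2 : ℝ) ^ (k + 1)) ^ m := by
        intro ξ hξ
        rw [Finset.mem_filter] at hξ
        have hwξ0 : (0 : ℝ) < w ξ := lt_of_lt_of_le one_pos (hw ξ)
        have hn1 : 1 ≤ ⌊w ξ⌋₊ := Nat.le_floor (by exact_mod_cast hw ξ)
        have hlow : (2 : ℝ) ^ k ≤ w ξ := by
          have h1 : (2 : ℕ) ^ k ≤ ⌊w ξ⌋₊ := by
            rw [← hξ.2]; exact Nat.pow_log_le_self 2 (by omega)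
          calc (2 : ℝ) ^ k = ((2 ^ k : ℕ) : ℝ) := by push_cast; ring
            _ ≤ (⌊w ξ⌋₊ : ℝ) := by exact_mod_cast h1
            _ ≤ w ξ := Nat.floor_le hwξ0.le
        have hhigh : w ξ ≤ (2 : ℝ) ^ (k + 1) := by
          have h1 : ⌊w ξ⌋₊ < 2 ^ (k + 1) := by
            rw [← hξ.2]; exact Nat.lt_pow_succ_log_self (by norm_num) _
          have h2 : (⌊w ξ⌋₊ : ℝ) + 1 ≤ (2 : ℝ) ^ (k + 1) := by
            have : ⌊w ξ⌋₊ + 1 ≤ 2 ^ (k + 1) := h1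
            calc (⌊w ξ⌋₊ : ℝ) + 1 = ((⌊w ξ⌋₊ + 1 : ℕ) : ℝ) := by push_cast; ring
              _ ≤ ((2 ^ (k + 1) : ℕ) : ℝ) := by exact_mod_cast this
              _ = (2 : ℝ) ^ (k + 1) := by push_cast; ring
          exact le_trans (Nat.lt_floor_add_one (w ξ)).le h2
        rcases le_or_gt 0 m with hm0 | hm0
        · calc (w ξ) ^ m ≤ ((2 : ℝ) ^ (k + 1)) ^ m :=
              Real.rpow_le_rpow hwξ0.le hhigh hm0
            _ ≤ D * ((2 : ℝ) ^ (k + 1)) ^ m := by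
              nlinarith [Real.rpow_nonneg hpos2.le m]
        · have h2k : (0 : ℝ) < (2 : ℝ) ^ k := by positivity
          have hstep : (w ξ) ^ m ≤ ((2 : ℝ) ^ k) ^ m :=
            Real.rpow_le_rpow_of_nonpos h2k hlow hm0.le
          have heq : ((2 : ℝ) ^ k) ^ m = D * ((2 : ℝ) ^ (k + 1)) ^ m := by
            have h2 : ((2 : ℝ) ^ (k + 1)) ^ m = (2 : ℝ) ^ m * ((2 : ℝ) ^ k) ^ m := by
              rw [pow_succ, mul_comm ((2:ℝ)^k) 2, Real.mul_rpow (by norm_num) h2k.le]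
            have hD' : D = (2 : ℝ) ^ (-m) := by
              rw [hD_def, abs_of_neg hm0]
            rw [h2, hD', ← mul_assoc, ← Real.rpow_add (by norm_num : (0:ℝ) < 2)]
            simp
          rw [heq] at hstep; exact hstep
      have hsub : (hfin Λ hΛ).toFinset.filter (fun ξ => f ξ = k)
          ⊆ (hfin ((2:ℝ) ^ (k+1)) h2k1).toFinset := by
        intro ξ hξ
        rw [Finset.mem_filter] at hξ
        rw [Set.Finite.mem_toFinset]
        -- need w ξ ≤ 2^(k+1)
        have hn1 : 1 ≤ ⌊w ξ⌋₊ := Nat.le_floor (by exact_mod_cast hw ξ)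
        have h1 : ⌊w ξ⌋₊ < 2 ^ (k + 1) := by
          rw [← hξ.2]; exact Nat.lt_pow_succ_log_self (by norm_num) _
        have h2 : (⌊w ξ⌋₊ : ℝ) + 1 ≤ (2 : ℝ) ^ (k + 1) := by
          have : ⌊w ξ⌋₊ + 1 ≤ 2 ^ (k + 1) := h1
          calc (⌊w ξ⌋₊ : ℝ) + 1 = ((⌊w ξ⌋₊ + 1 : ℕ) : ℝ) := by push_cast; ring
            _ ≤ ((2 ^ (k + 1) : ℕ) : ℝ) := by exact_mod_cast this
            _ = (2 : ℝ) ^ (k + 1) := by push_cast; ring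
        exact le_trans (Nat.lt_floor_add_one (w ξ)).le h2
      have hcard' : (((hfin Λ hΛ).toFinset.filter (fun ξ => f ξ = k)).card : ℝ)
          ≤ c₂ * ((2 : ℝ) ^ (k + 1)) ^ Q := by
        calc (((hfin Λ hΛ).toFinset.filter (fun ξ => f ξ = k)).card : ℝ)
            ≤ ((hfin ((2:ℝ) ^ (k+1)) h2k1).toFinset.card : ℝ) := by
              exact_mod_cast Finset.card_le_card hsub
          _ ≤ c₂ * ((2 : ℝ) ^ (k + 1)) ^ Q := hcard _ h2k1
      have hval0 : 0 ≤ D * ((2 : ℝ) ^ (k + 1)) ^ m := by positivity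
      calc (∑ ξ ∈ (hfin Λ hΛ).toFinset.filter (fun ξ => f ξ = k), (w ξ) ^ m)
          ≤ ((hfin Λ hΛ).toFinset.filter (fun ξ => f ξ = k)).card
              • (D * ((2 : ℝ) ^ (k + 1)) ^ m) :=
            Finset.sum_le_card_nsmul _ _ _ hpt
        _ = (((hfin Λ hΛ).toFinset.filter (fun ξ => f ξ = k)).card : ℝ)
              * (D * ((2 : ℝ) ^ (k + 1)) ^ m) := by rw [nsmul_eq_mul]
        _ ≤ (c₂ * ((2 : ℝ) ^ (k + 1)) ^ Q) * (D * ((2 : ℝ) ^ (k + 1)) ^ m) := by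
            apply mul_le_mul_of_nonneg_right hcard' hval0
        _ = c₂ * D * (((2 : ℝ) ^ (k + 1)) ^ Q * ((2 : ℝ) ^ (k + 1)) ^ m) := by ring
        _ = c₂ * D * a ^ (k + 1) := by
            rw [← Real.rpow_add hpos2, show ((2:ℝ) ^ (k+1)) ^ (Q+m) = a ^ (k+1) by
              rw [← Real.rpow_natCast 2 (k+1), ← Real.rpow_mul (by norm_num),
                mul_comm, Real.rpow_mul (by norm_num), Real.rpow_natCast]]
    have hsum := Finset.sum_le_sum hfiber
    -- geometric sum
    have hgeom : (∑ k ∈ Finset.range K, c₂ * D * a ^ (k + 1))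
        ≤ C₀ * Λ ^ (Q + m) := by
      have hsum_eq : (∑ k ∈ Finset.range K, c₂ * D * a ^ (k + 1))
          = c₂ * D * a * ((a ^ K - 1) / (a - 1)) := by
        rw [← geom_sum_eq ha1.ne' K, Finset.mul_sum]
        apply Finset.sum_congr rfl
        intro k _; ring
      rw [hsum_eq]
      have haL : a ^ L ≤ Λ ^ (Q + m) := by
        have h2L : (2 : ℝ) ^ L ≤ Λ := by
          calc (2 : ℝ) ^ L = ((2 ^ L : ℕ) : ℝ) := by push_cast; ring
            _ ≤ (⌊Λ⌋₊ : ℝ) := by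
                exact_mod_cast Nat.pow_log_le_self 2 (by omega)
            _ ≤ Λ := Nat.floor_le (by linarith)
        calc a ^ L = ((2 : ℝ) ^ L) ^ (Q + m) := by
              rw [← Real.rpow_natCast 2 L, ← Real.rpow_mul (by norm_num),
                mul_comm, Real.rpow_mul (by norm_num), Real.rpow_natCast]
          _ ≤ Λ ^ (Q + m) := Real.rpow_le_rpow (by positivity) h2L hQm.le
      have haK : a ^ K = a ^ L * a := by rw [hK_def, pow_succ]
      calc c₂ * D * a * ((a ^ K - 1) / (a - 1))
          ≤ c₂ * D * a * (a ^ K / (a - 1)) := by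
            gcongr
            · linarith
        _ = C₀ * a ^ L := by rw [haK, hC₀_def]; ring
        _ ≤ C₀ * Λ ^ (Q + m) := mul_le_mul_of_nonneg_left haL hC₀.le
    exact le_trans hsum hgeom
    -- support control
  have hsupp' : ∀ t : ℝ, 0 < t → ∀ ξ, ¬ w ξ ≤ max 1 ((R / t) ^ q⁻¹) →
      (w ξ) ^ m * ψ (t * (w ξ) ^ q) = 0 := by
    intro t ht ξ hξ
    suffices h : ψ (t * (w ξ) ^ q) = 0 by rw [h, mul_zero]
    by_contra hne
    have hmem := hsupp (Function.mem_support.mpr hne)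
    have h1 : t * (w ξ) ^ q ≤ R := hmem.2
    have hw0 : (0 : ℝ) ≤ w ξ := le_trans zero_le_one (hw ξ)
    have hwq : (w ξ) ^ q ≤ R / t := by
      rw [le_div_iff₀ ht, mul_comm]; exact h1
    have hle : w ξ ≤ (R / t) ^ q⁻¹ := by
      have h2 := Real.rpow_le_rpow (Real.rpow_nonneg hw0 q) hwq
        (inv_nonneg.mpr hq.le)
      rwa [Real.rpow_rpow_inv hw0 hq.ne'] at h2
    exact hξ (le_trans hle (le_max_right _ _))
  constructor
  · intro t ht
    apply (hfin (max 1 ((R / t) ^ q⁻¹)) (le_max_left _ _)).subset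
    intro ξ hξ
    simp only [Set.mem_setOf_eq]
    by_contra hc
    exact hξ (hsupp' t ht ξ hc)
  · have he0 : 0 ≤ (Q + m) / q := div_nonneg hQm.le hq.le
    refine ⟨C₀ * (B + 1) * max 1 (R ^ ((Q + m) / q)), by positivity, ?_⟩
    intro t ht ht1
    have hΛ1 : (1 : ℝ) ≤ max 1 ((R / t) ^ q⁻¹) := le_max_left _ _
    have htsum : (∑' ξ, (w ξ) ^ m * ψ (t * (w ξ) ^ q))
        = ∑ ξ ∈ (hfin _ hΛ1).toFinset, (w ξ) ^ m * ψ (t * (w ξ) ^ q) := by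
      apply tsum_eq_sum
      intro ξ hξ
      rw [Set.Finite.mem_toFinset] at hξ
      exact hsupp' t ht ξ hξ
    have htpow0 : (0 : ℝ) < t ^ (-((Q + m) / q)) := Real.rpow_pos_of_pos ht _
    have htpow1 : (1 : ℝ) ≤ t ^ (-((Q + m) / q)) := by
      rw [show (1 : ℝ) = t ^ (0 : ℝ) from (Real.rpow_zero t).symm]
      exact Real.rpow_le_rpow_of_exponent_ge ht ht1 (by linarith)
    have hΛpow : (max 1 ((R / t) ^ q⁻¹)) ^ (Q + m)
        ≤ max 1 (R ^ ((Q + m) / q)) * t ^ (-((Q + m) / q)) := by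
      rcases max_choice 1 ((R / t) ^ q⁻¹) with hmax | hmax
      · rw [hmax, Real.one_rpow]
        calc (1 : ℝ) ≤ t ^ (-((Q + m) / q)) := htpow1
          _ ≤ max 1 (R ^ ((Q + m) / q)) * t ^ (-((Q + m) / q)) :=
            le_mul_of_one_le_left htpow0.le (le_max_left _ _)
      · rw [hmax, ← Real.rpow_mul (div_nonneg hR.le ht.le),
          show q⁻¹ * (Q + m) = (Q + m) / q by ring,
          Real.div_rpow hR.le ht.le, div_eq_mul_inv,
          ← Real.rpow_neg ht.le]
        exact mul_le_mul_of_nonneg_right (le_max_right _ _) htpow0.le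
    rw [htsum]
    calc (∑ ξ ∈ (hfin _ hΛ1).toFinset, (w ξ) ^ m * ψ (t * (w ξ) ^ q))
        ≤ ∑ ξ ∈ (hfin _ hΛ1).toFinset, (B + 1) * (w ξ) ^ m := by
          apply Finset.sum_le_sum
          intro ξ _
          have hw0 : (0 : ℝ) ≤ w ξ := le_trans zero_le_one (hw ξ)
          have hwm : (0 : ℝ) ≤ (w ξ) ^ m := Real.rpow_nonneg hw0 m
          calc (w ξ) ^ m * ψ (t * (w ξ) ^ q)
              ≤ (w ξ) ^ m * (B + 1) :=
                mul_le_mul_of_nonneg_left (le_trans (hψB _) (by linarith)) hwm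
            _ = (B + 1) * (w ξ) ^ m := mul_comm _ _
      _ = (B + 1) * ∑ ξ ∈ (hfin _ hΛ1).toFinset, (w ξ) ^ m := by
          rw [Finset.mul_sum]
      _ ≤ (B + 1) * (C₀ * (max 1 ((R / t) ^ q⁻¹)) ^ (Q + m)) := by
          apply mul_le_mul_of_nonneg_left (key _ hΛ1) (by linarith)
      _ ≤ (B + 1) * (C₀ * (max 1 (R ^ ((Q + m) / q)) * t ^ (-((Q + m) / q)))) := by
          apply mul_le_mul_of_nonneg_left
            (mul_le_mul_of_nonneg_left hΛpow hC₀.le) (by linarith)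
      _ = C₀ * (B + 1) * max 1 (R ^ ((Q + m) / q)) * t ^ (-((Q + m) / q)) := by
          ring
end

section
/- Let ι be an index type, w : ι → ℝ with w ξ ≥ 1 for all ξ, satisfying the upper Weyl law with exponent Q > 0 (finite level sets, N(λ) ≤ c₂·λ^Q for λ ≥ 1). Let q > 0 and let ψ : ℝ → ℝ be a nonnegative bounded function whose support is contained in an interval [a, R] with 0 < a < R (so ψ vanishes in a neighborhood of 0, corresponding to ψ ∈ L¹(ℝ⁺₀ ; ds/s) ∩ C₀^∞). Then there exists a constant C > 0, independent of t, such that for every t > 0: ∑'_ξ (w ξ)^{−Q} · ψ(t·(w ξ)^q) ≤ C. (This is the critical-order case m = −Q of the paper's regularised-trace theorem: the trace Tr(A ψ(tE)) of an operator of order −Q against a cutoff integrable with respect to ds/s is bounded uniformly in t.) -/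
/-!
Only the indices with `a ≤ t * w ξ ^ q ≤ R` contribute. Each of them has
`w ξ ^ (-Q) ≤ (t / a) ^ (Q / q)`, and there are at most `N((R / t) ^ (1 / q)) ≤ c₂ (R / t) ^ (Q / q)`
of them, so the sum is at most `c₂ B (R / a) ^ (Q / q)`: at the critical order `-Q` the powers
of `t` cancel exactly.
-/

open Set Real

lemma tsum_le_ncard_mul_of_support_subset {ι : Type*} {f : ι → ℝ} {s : Set ι} (hs : s.Finite)
    (hf : Function.support f ⊆ s) {b : ℝ} (hfb : ∀ ξ, f ξ ≤ b) :
    ∑' ξ, f ξ ≤ s.ncard * b := by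
  rw [tsum_eq_sum' (s := hs.toFinset) (by simpa using hf), ncard_eq_toFinset_card s hs,
    ← nsmul_eq_mul]
  exact Finset.sum_le_card_nsmul _ _ _ fun ξ _ => hfb ξ

lemma rpow_neg_le_of_le_mul_rpow {x t a q Q : ℝ} (hx : 0 ≤ x) (ht : 0 < t) (ha : 0 < a)
    (hq : 0 < q) (hQ : 0 ≤ Q) (h : a ≤ t * x ^ q) : x ^ (-Q) ≤ (t / a) ^ (Q / q) := by
  have hax : a / t ≤ x ^ q := (div_le_iff₀' ht).2 h
  calc x ^ (-Q) = (x ^ q) ^ (-(Q / q)) := by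
        rw [← rpow_mul hx]; congr 1; field_simp
    _ ≤ (a / t) ^ (-(Q / q)) :=
        rpow_le_rpow_of_nonpos (by positivity) hax (neg_nonpos.2 (by positivity))
    _ = (t / a) ^ (Q / q) := by
        rw [rpow_neg (by positivity), ← inv_rpow (by positivity), inv_div]

lemma le_rpow_inv_of_mul_rpow_le {x t R q : ℝ} (hx : 0 ≤ x) (ht : 0 < t) (hR : 0 ≤ R)
    (hq : 0 < q) (h : t * x ^ q ≤ R) : x ≤ (R / t) ^ q⁻¹ :=
  (le_rpow_inv_iff_of_pos hx (by positivity) hq).2 ((le_div_iff₀' ht).2 h)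

section WeylLaw

variable {ι : Type*} {w : ι → ℝ}

lemma sublevel_eq_empty_of_lt_one (hw : ∀ ξ, 1 ≤ w ξ) {lam : ℝ} (hlam : lam < 1) :
    {ξ | w ξ ≤ lam} = ∅ :=
  eq_empty_of_forall_notMem fun ξ hξ => (hlam.trans_le (hw ξ)).not_ge hξ

lemma sublevel_finite (hw : ∀ ξ, 1 ≤ w ξ)
    (hfin : ∀ lam : ℝ, 1 ≤ lam → {ξ | w ξ ≤ lam}.Finite) (lam : ℝ) :
    {ξ | w ξ ≤ lam}.Finite := by
  rcases le_or_gt 1 lam with hlam | hlam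
  · exact hfin lam hlam
  · rw [sublevel_eq_empty_of_lt_one hw hlam]
    exact finite_empty

lemma ncard_sublevel_le_of_weyl (hw : ∀ ξ, 1 ≤ w ξ) {Q c₂ : ℝ} (hc₂ : 0 ≤ c₂)
    (hN : ∀ lam : ℝ, 1 ≤ lam → (Nat.card {ξ // w ξ ≤ lam} : ℝ) ≤ c₂ * lam ^ Q)
    {lam : ℝ} (hlam : 0 ≤ lam) :
    ({ξ | w ξ ≤ lam}.ncard : ℝ) ≤ c₂ * lam ^ Q := by
  rcases le_or_gt 1 lam with hlam1 | hlam1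
  · exact hN lam hlam1
  · rw [sublevel_eq_empty_of_lt_one hw hlam1, ncard_empty, Nat.cast_zero]
    positivity

end WeylLaw

theorem regularised_trace_bound_critical_order
    {ι : Type*} (w : ι → ℝ) (hw : ∀ ξ, 1 ≤ w ξ)
    (hfin : ∀ lam : ℝ, 1 ≤ lam → {ξ | w ξ ≤ lam}.Finite)
    (Q : ℝ) (hQ : 0 < Q) (c₂ : ℝ) (hc₂ : 0 < c₂)
    (hN : ∀ lam : ℝ, 1 ≤ lam → (Nat.card {ξ // w ξ ≤ lam} : ℝ) ≤ c₂ * lam ^ Q)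
    (q : ℝ) (hq : 0 < q)
    (ψ : ℝ → ℝ) (hψ0 : ∀ x, 0 ≤ ψ x) (B : ℝ) (hψB : ∀ x, ψ x ≤ B)
    (a R : ℝ) (ha : 0 < a) (haR : a < R)
    (hsupp : Function.support ψ ⊆ Set.Icc a R) :
    ∃ C : ℝ, 0 < C ∧ ∀ t : ℝ, 0 < t →
      (∑' ξ, (w ξ) ^ (-Q) * ψ (t * (w ξ) ^ q)) ≤ C := by
  have hB : 0 ≤ B := (hψ0 0).trans (hψB 0)
  have hR : 0 ≤ R := (ha.trans haR).le
  have hw0 : ∀ ξ, 0 ≤ w ξ := fun ξ => zero_le_one.trans (hw ξ)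
  refine ⟨c₂ * B * (R / a) ^ (Q / q) + 1, by positivity, fun t ht => ?_⟩
  have hsupp_t : Function.support (fun ξ => w ξ ^ (-Q) * ψ (t * w ξ ^ q)) ⊆
      {ξ | w ξ ≤ (R / t) ^ q⁻¹} := fun ξ hξ =>
    le_rpow_inv_of_mul_rpow_le (hw0 ξ) ht hR hq (hsupp (right_ne_zero_of_mul hξ)).2
  have hterm : ∀ ξ, w ξ ^ (-Q) * ψ (t * w ξ ^ q) ≤ (t / a) ^ (Q / q) * B := by
    intro ξ
    by_cases hξ : ψ (t * w ξ ^ q) = 0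
    · rw [hξ, mul_zero]; positivity
    · exact mul_le_mul (rpow_neg_le_of_le_mul_rpow (hw0 ξ) ht ha hq hQ.le (hsupp hξ).1)
        (hψB _) (hψ0 _) (by positivity)
  calc ∑' ξ, w ξ ^ (-Q) * ψ (t * w ξ ^ q)
      ≤ {ξ | w ξ ≤ (R / t) ^ q⁻¹}.ncard * ((t / a) ^ (Q / q) * B) :=
        tsum_le_ncard_mul_of_support_subset (sublevel_finite hw hfin _) hsupp_t hterm
    _ ≤ c₂ * ((R / t) ^ q⁻¹) ^ Q * ((t / a) ^ (Q / q) * B) := by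
        gcongr
        exact ncard_sublevel_le_of_weyl hw hc₂.le hN (by positivity)
    _ = c₂ * B * (R / a) ^ (Q / q) := by
        rw [← rpow_mul (by positivity), inv_mul_eq_div,
          show R / a = R / t * (t / a) by field_simp, mul_rpow (by positivity) (by positivity)]
        ring
    _ ≤ c₂ * B * (R / a) ^ (Q / q) + 1 := le_add_of_nonneg_right zero_le_one
end

section
/- Let ι be an index type, w : ι → ℝ with w ξ ≥ 1 for all ξ, satisfying the two-sided Weyl law with exponent Q > 0 (finite level sets, c₁·λ^Q ≤ N(λ) ≤ c₂·λ^Q for λ ≥ 1). Then for a real number m the following are equivalent: (i) for every p > 1 the family ξ ↦ (w ξ)^{m·p} is summable; (ii) m ≤ −Q. (This is the summability characterisation underlying the paper's Dixmier-traceability lemma: a positive L-elliptic Fourier multiplier of order m has Tr(A^p) < ∞ for all p > 1 exactly when m ≤ −Q.) -/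
open Finset in
/-- Key summability lemma: if counts grow at most like `c₂ λ^Q` and `s > Q`,
then `w ^ (-s)` is summable. -/
lemma aux_summable_s11 {ι : Type*} (w : ι → ℝ) (hw : ∀ ξ, 1 ≤ w ξ)
    (hfin : ∀ lam : ℝ, 1 ≤ lam → {ξ | w ξ ≤ lam}.Finite)
    (Q : ℝ) (hQ : 0 < Q) (c₂ : ℝ) (hc₂ : 0 < c₂)
    (hN : ∀ lam : ℝ, (h : 1 ≤ lam) → ((hfin lam h).toFinset.card : ℝ) ≤ c₂ * lam ^ Q)
    (t : ℝ) (ht : t < -Q) : Summable fun ξ => (w ξ) ^ t := by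
  classical
  set r : ℝ := (2 : ℝ) ^ (Q + t) with hr
  have hr0 : 0 < r := Real.rpow_pos_of_pos (by norm_num) _
  have hr1 : r < 1 := by
    have : Q + t < 0 := by linarith
    calc r < (2:ℝ) ^ (0:ℝ) := Real.rpow_lt_rpow_of_exponent_lt (by norm_num) this
    _ = 1 := Real.rpow_zero 2
  apply summable_of_sum_le (c := c₂ * 2 ^ Q * (1 - r)⁻¹)
  · intro ξ
    exact Real.rpow_nonneg (by linarith [hw ξ]) _
  intro u
  -- dyadic level function
  set g : ι → ℕ := fun ξ => Nat.log 2 ⌊w ξ⌋₊ with hg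
  have hwpos : ∀ ξ, (0:ℝ) < w ξ := fun ξ => lt_of_lt_of_le one_pos (hw ξ)
  have hfl : ∀ ξ, 1 ≤ ⌊w ξ⌋₊ := fun ξ => Nat.le_floor (by simpa using hw ξ)
  have hlow : ∀ ξ, ((2:ℝ) ^ (g ξ) : ℝ) ≤ w ξ := by
    intro ξ
    have h1 : (2:ℕ) ^ (g ξ) ≤ ⌊w ξ⌋₊ := Nat.pow_log_le_self 2 (Nat.one_le_iff_ne_zero.mp (hfl ξ))
    calc ((2:ℝ) ^ (g ξ)) = ((2^(g ξ) : ℕ) : ℝ) := by push_cast; ring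
    _ ≤ (⌊w ξ⌋₊ : ℝ) := by exact_mod_cast h1
    _ ≤ w ξ := Nat.floor_le (hwpos ξ).le
  have hhigh : ∀ ξ, w ξ < (2:ℝ) ^ (g ξ + 1) := by
    intro ξ
    have h1 : ⌊w ξ⌋₊ < 2 ^ (g ξ + 1) := Nat.lt_pow_succ_log_self (by norm_num) _
    calc w ξ < (⌊w ξ⌋₊ : ℝ) + 1 := Nat.lt_floor_add_one _
    _ ≤ ((2 ^ (g ξ + 1) : ℕ) : ℝ) := by exact_mod_cast h1
    _ = (2:ℝ) ^ (g ξ + 1) := by push_cast; ring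
  -- choose K bounding g on u
  obtain ⟨K, hK⟩ : ∃ K, ∀ ξ ∈ u, g ξ < K := by
    refine ⟨(u.image g).sup id + 1, fun ξ hξ => ?_⟩
    have := Finset.le_sup (f := id) (Finset.mem_image_of_mem g hξ)
    simpa using Nat.lt_succ_of_le this
  have hsplit : ∑ ξ ∈ u, (w ξ) ^ t
      = ∑ k ∈ range K, ∑ ξ ∈ u.filter (fun ξ => g ξ = k), (w ξ) ^ t := by
    rw [Finset.sum_fiberwise_of_maps_to (fun ξ hξ => Finset.mem_range.mpr (hK ξ hξ))]
  rw [hsplit]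
  have hfiber : ∀ k, ∑ ξ ∈ u.filter (fun ξ => g ξ = k), (w ξ) ^ t
      ≤ c₂ * 2 ^ Q * r ^ k := by
    intro k
    have hcard : ((u.filter (fun ξ => g ξ = k)).card : ℝ) ≤ c₂ * ((2:ℝ)^(k+1)) ^ Q := by
      have hlam : (1:ℝ) ≤ (2:ℝ)^(k+1) := one_le_pow₀ (by norm_num)
      have hsub : ((u.filter (fun ξ => g ξ = k)) : Set ι) ⊆ {ξ | w ξ ≤ (2:ℝ)^(k+1)} := by
        intro ξ hξ
        simp only [Finset.coe_filter, Set.mem_setOf_eq] at hξ ⊢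
        have := hhigh ξ
        rw [hξ.2] at this
        exact this.le
      have hle : (u.filter (fun ξ => g ξ = k)).card ≤ (hfin _ hlam).toFinset.card := by
        apply Finset.card_le_card
        intro ξ hξ
        exact (hfin _ hlam).mem_toFinset.mpr (hsub hξ)
      calc ((u.filter (fun ξ => g ξ = k)).card : ℝ)
          ≤ ((hfin _ hlam).toFinset.card : ℝ) := by exact_mod_cast hle
      _ ≤ c₂ * ((2:ℝ)^(k+1)) ^ Q := hN _ hlam
    have hterm : ∀ ξ ∈ u.filter (fun ξ => g ξ = k), (w ξ) ^ t ≤ ((2:ℝ)^k) ^ t := by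
      intro ξ hξ
      simp only [Finset.mem_filter] at hξ
      have h2k : (0:ℝ) < (2:ℝ)^k := by positivity
      have := hlow ξ; rw [hξ.2] at this
      exact Real.rpow_le_rpow_of_nonpos h2k this (by linarith)
    calc ∑ ξ ∈ u.filter (fun ξ => g ξ = k), (w ξ) ^ t
        ≤ ∑ _ξ ∈ u.filter (fun ξ => g ξ = k), ((2:ℝ)^k) ^ t := Finset.sum_le_sum hterm
    _ = ((u.filter (fun ξ => g ξ = k)).card : ℝ) * ((2:ℝ)^k) ^ t := by
        rw [Finset.sum_const, nsmul_eq_mul]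
    _ ≤ c₂ * ((2:ℝ)^(k+1)) ^ Q * ((2:ℝ)^k) ^ t := by
        apply mul_le_mul_of_nonneg_right hcard
        positivity
    _ = c₂ * 2 ^ Q * r ^ k := by
        rw [hr]
        rw [show ((2:ℝ)^(k+1)) = (2:ℝ) ^ ((k:ℝ)+1) by
              rw [← Real.rpow_natCast 2 (k+1)]; push_cast; ring_nf,
            show ((2:ℝ)^k) = (2:ℝ) ^ (k:ℝ) by rw [← Real.rpow_natCast],
            ← Real.rpow_natCast ((2:ℝ) ^ (Q + t)) k,
            ← Real.rpow_mul (by norm_num), ← Real.rpow_mul (by norm_num),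
            ← Real.rpow_mul (by norm_num)]
        rw [mul_assoc, mul_assoc, ← Real.rpow_add (by norm_num : (0:ℝ) < 2),
            ← Real.rpow_add (by norm_num : (0:ℝ) < 2)]
        congr 1
        ring
  calc ∑ k ∈ range K, ∑ ξ ∈ u.filter (fun ξ => g ξ = k), (w ξ) ^ t
      ≤ ∑ k ∈ range K, c₂ * 2 ^ Q * r ^ k := Finset.sum_le_sum fun k _ => hfiber k
  _ = c₂ * 2 ^ Q * ∑ k ∈ range K, r ^ k := by rw [Finset.mul_sum]
  _ ≤ c₂ * 2 ^ Q * (1 - r)⁻¹ := by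
      apply mul_le_mul_of_nonneg_left _ (by positivity)
      exact Summable.sum_le_tsum (range K) (fun k _ => by positivity)
        (summable_geometric_of_lt_one hr0.le hr1) |>.trans_eq
        (tsum_geometric_of_lt_one hr0.le hr1)

theorem dixmier_summability_characterisation
    {ι : Type*} (w : ι → ℝ) (hw : ∀ ξ, 1 ≤ w ξ)
    (hfin : ∀ lam : ℝ, 1 ≤ lam → {ξ | w ξ ≤ lam}.Finite)
    (Q : ℝ) (hQ : 0 < Q) (c₁ c₂ : ℝ) (hc₁ : 0 < c₁) (hc₂ : 0 < c₂)
    (hN : ∀ lam : ℝ, ∀ _ : 1 ≤ lam,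
      c₁ * lam ^ Q ≤ (Nat.card {ξ // w ξ ≤ lam} : ℝ) ∧
      (Nat.card {ξ // w ξ ≤ lam} : ℝ) ≤ c₂ * lam ^ Q)
    (m : ℝ) :
    (∀ p : ℝ, 1 < p → Summable fun ξ => (w ξ) ^ (m * p)) ↔ m ≤ -Q := by
  classical
  have hcard : ∀ lam : ℝ, ∀ h : 1 ≤ lam,
      ((hfin lam h).toFinset.card : ℝ) = (Nat.card {ξ // w ξ ≤ lam} : ℝ) := by
    intro lam h
    have h2 : Nat.card {ξ // w ξ ≤ lam} = (hfin lam h).toFinset.card :=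
      Nat.card_eq_card_finite_toFinset (hfin lam h)
    rw [h2]
  constructor
  · -- summability for all p > 1 implies m ≤ -Q
    intro hs
    by_contra hm
    push_neg at hm   -- -Q < m
    set p : ℝ := if m < 0 then (1 - Q/m)/2 else 2 with hp
    have hp1 : 1 < p := by
      rw [hp]; split_ifs with h
      · have h1 : Q/m < -1 := by
          rw [div_lt_iff_of_neg h]; linarith
        linarith
      · norm_num
    set t : ℝ := m * p with htdef
    have htQ : -Q < t := by
      rw [htdef, hp]; split_ifs with h
      · have hm0 : m ≠ 0 := ne_of_lt h
        have he : m * ((1 - Q/m)/2) = (m - Q)/2 := by field_simp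
        rw [he]
        linarith
      · have : 0 ≤ m := le_of_not_gt h
        nlinarith
    have hsum := hs p hp1
    rw [← htdef] at hsum
    set f : ι → ℝ := fun ξ => (w ξ) ^ t with hf
    have hf0 : ∀ ξ, 0 ≤ f ξ := fun ξ => Real.rpow_nonneg (by linarith [hw ξ]) _
    set ε : ℝ := Q + min t 0 with hε
    have hε0 : 0 < ε := by
      rcases le_or_gt t 0 with h | h
      · rw [hε, min_eq_left h]; linarith
      · rw [hε, min_eq_right h.le]; simpa using hQ
    set T : ℝ := ∑' ξ, f ξ with hT
    set lam : ℝ := (T/c₁ + 1) ^ (1/ε) with hlam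
    have hT0 : 0 ≤ T := tsum_nonneg hf0
    have hbase : (1:ℝ) ≤ T/c₁ + 1 := by
      have := div_nonneg hT0 hc₁.le; linarith
    have hlam1 : 1 ≤ lam := Real.one_le_rpow hbase (by positivity)
    have hlamε : lam ^ ε = T/c₁ + 1 := by
      rw [hlam, ← Real.rpow_mul (by linarith), one_div, inv_mul_cancel₀ hε0.ne',
        Real.rpow_one]
    set u : Finset ι := (hfin lam hlam1).toFinset with hu
    have hterm : ∀ ξ ∈ u, lam ^ (min t 0) ≤ f ξ := by
      intro ξ hξ
      have hξ' : w ξ ≤ lam := by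
        rw [hu, Set.Finite.mem_toFinset] at hξ; exact hξ
      rcases le_or_gt t 0 with h | h
      · rw [min_eq_left h, hf]
        exact Real.rpow_le_rpow_of_nonpos (lt_of_lt_of_le one_pos (hw ξ)) hξ' h
      · rw [min_eq_right h.le, Real.rpow_zero, hf]
        exact Real.one_le_rpow (hw ξ) h.le
    have hsumlb : c₁ * lam ^ ε ≤ ∑ ξ ∈ u, f ξ := by
      have h1 : (u.card : ℝ) * lam ^ (min t 0) ≤ ∑ ξ ∈ u, f ξ := by
        have := Finset.card_nsmul_le_sum u f (lam ^ (min t 0)) hterm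
        rwa [nsmul_eq_mul] at this
      have h2 : c₁ * lam ^ Q ≤ (u.card : ℝ) := by
        rw [hu, hcard lam hlam1]; exact (hN lam hlam1).1
      have h3 : (0:ℝ) < lam ^ (min t 0) := Real.rpow_pos_of_pos (by linarith) _
      calc c₁ * lam ^ ε = (c₁ * lam ^ Q) * lam ^ (min t 0) := by
            rw [hε, Real.rpow_add (by linarith)]; ring
      _ ≤ (u.card : ℝ) * lam ^ (min t 0) := mul_le_mul_of_nonneg_right h2 h3.le
      _ ≤ ∑ ξ ∈ u, f ξ := h1
    have hub : ∑ ξ ∈ u, f ξ ≤ T := Summable.sum_le_tsum u (fun ξ _ => hf0 ξ) hsum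
    rw [hlamε] at hsumlb
    have : c₁ * (T/c₁ + 1) = T + c₁ := by field_simp
    rw [this] at hsumlb
    linarith
  · -- m ≤ -Q implies summability for all p > 1
    intro hm p hp
    apply aux_summable_s11 w hw hfin Q hQ c₂ hc₂
    · intro lam h
      rw [hcard lam h]; exact (hN lam h).2
    · -- m * p < -Q
      have h1 : m * p ≤ -Q * p := mul_le_mul_of_nonneg_right hm (by linarith)
      have h2 : -Q * p < -Q := by nlinarith
      linarith
end

section
/- Let ι be an index type, w : ι → ℝ with w ξ ≥ 1 for all ξ, satisfying the two-sided Weyl law with exponent Q > 0 (finite level sets, c₁·λ^Q ≤ N(λ) ≤ c₂·λ^Q for λ ≥ 1). Then there exist constants c, C > 0 such that for every p ∈ (1, 2]: c ≤ (p − 1) · ∑'_ξ (w ξ)^{−Q·p} ≤ C. (Via the Hardy–Littlewood Tauberian formula Tr_ω(A) = lim_{p→1⁺} (p−1)Tr(A^p), this is the computation showing in the paper's Dixmier lemma that a nonzero positive L-elliptic multiplier of critical order −Q has finite, strictly positive Dixmier trace.) -/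
/-!
Layer-cake (Abel) summation: for `s > 0`, writing `w ξ ^ (-s) = s ∫_{w ξ}^∞ t ^ (-s - 1) dt` and
summing over `ξ` gives `∑ w ξ ^ (-s) = s ∫_1^∞ N(t) t ^ (-s - 1) dt`. Inserting
`c₁ t ^ Q ≤ N(t) ≤ c₂ t ^ Q` and `∫_1^∞ t ^ (Q - s - 1) dt = 1 / (s - Q)` traps the sum between
`cᵢ s / (s - Q)`, and for `s = Q p` the factor `(p - 1) s / (s - Q)` is exactly `p ∈ (1, 2]`.
-/

open Set MeasureTheory
open scoped ENNReal

theorem lintegral_Ici_rpow_of_lt {r c : ℝ} (hr : r < -1) (hc : 0 < c) :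
    ∫⁻ t in Ici c, ENNReal.ofReal (t ^ r) = ENNReal.ofReal (-c ^ (r + 1) / (r + 1)) := by
  rw [← setLIntegral_congr Ioi_ae_eq_Ici, ← integral_Ioi_rpow_of_lt hr hc,
    ofReal_integral_eq_lintegral_ofReal (integrableOn_Ioi_rpow_of_lt hr hc)]
  filter_upwards [ae_restrict_mem measurableSet_Ioi] with t ht
  exact Real.rpow_nonneg (hc.trans ht).le r

theorem ofReal_rpow_neg_eq_mul_lintegral {x s : ℝ} (hx : 0 < x) (hs : 0 < s) :
    ENNReal.ofReal (x ^ (-s)) =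
      ENNReal.ofReal s * ∫⁻ t in Ici x, ENNReal.ofReal (t ^ (-s - 1)) := by
  rw [lintegral_Ici_rpow_of_lt (by linarith) hx, ← ENNReal.ofReal_mul hs.le]
  congr 1
  rw [sub_add_cancel]
  field_simp

theorem lintegral_Ici_one_mul_rpow_mul_rpow {c Q s : ℝ} (hc : 0 ≤ c) (hQs : Q < s) :
    ∫⁻ t in Ici 1, ENNReal.ofReal (c * t ^ Q) * ENNReal.ofReal (t ^ (-s - 1)) =
      ENNReal.ofReal (c / (s - Q)) := by
  have hpow : EqOn (fun t ↦ ENNReal.ofReal (c * t ^ Q) * ENNReal.ofReal (t ^ (-s - 1)))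
      (fun t ↦ ENNReal.ofReal c * ENNReal.ofReal (t ^ (Q - s - 1))) (Ici 1) := fun t ht ↦ by
    have ht : (0 : ℝ) < t := zero_lt_one.trans_le ht
    dsimp only
    rw [← ENNReal.ofReal_mul (by positivity), mul_assoc, ← Real.rpow_add ht,
      ENNReal.ofReal_mul hc]
    ring_nf
  rw [setLIntegral_congr_fun measurableSet_Ici hpow, lintegral_const_mul _ (by fun_prop),
    lintegral_Ici_rpow_of_lt (by linarith) one_pos, Real.one_rpow, ← ENNReal.ofReal_mul hc]
  congr 1
  rw [show Q - s - 1 + 1 = -(s - Q) by ring, div_neg, neg_div, neg_neg, mul_one_div]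

theorem tsum_indicator_Ici_eq_encard_mul {ι : Type*} (w : ι → ℝ) (g : ℝ → ℝ≥0∞) (t : ℝ) :
    ∑' ξ, (Ici (w ξ)).indicator g t = {ξ | w ξ ≤ t}.encard * g t := by
  rw [← ENNReal.tsum_set_const, tsum_subtype (f := fun _ ↦ g t)]
  rfl

theorem tsum_ofReal_rpow_neg_eq_mul_lintegral_encard {ι : Type*} [Countable ι] (w : ι → ℝ)
    {a s : ℝ} (ha : 0 < a) (hw : ∀ ξ, a ≤ w ξ) (hs : 0 < s) :
    ∑' ξ, ENNReal.ofReal (w ξ ^ (-s)) =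
      ENNReal.ofReal s * ∫⁻ t in Ici a, {ξ | w ξ ≤ t}.encard * ENNReal.ofReal (t ^ (-s - 1)) := by
  set g : ℝ → ℝ≥0∞ := fun t ↦ ENNReal.ofReal (t ^ (-s - 1))
  have hg : Measurable g := by fun_prop
  calc ∑' ξ, ENNReal.ofReal (w ξ ^ (-s))
      = ∑' ξ, ENNReal.ofReal s * ∫⁻ t in Ici a, (Ici (w ξ)).indicator g t := by
        refine tsum_congr fun ξ ↦ ?_
        rw [ofReal_rpow_neg_eq_mul_lintegral (ha.trans_le (hw ξ)) hs,
          lintegral_indicator measurableSet_Ici, Measure.restrict_restrict measurableSet_Ici,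
          inter_eq_left.2 (Ici_subset_Ici.2 (hw ξ))]
    _ = ENNReal.ofReal s * ∫⁻ t in Ici a, ∑' ξ, (Ici (w ξ)).indicator g t := by
        rw [ENNReal.tsum_mul_left,
          lintegral_tsum fun ξ ↦ (hg.indicator measurableSet_Ici).aemeasurable]
    _ = _ := by simp_rw [tsum_indicator_Ici_eq_encard_mul, g]

theorem countable_of_finite_sublevel {ι : Type*} (w : ι → ℝ) {a : ℝ}
    (hfin : ∀ t, a ≤ t → {ξ | w ξ ≤ t}.Finite) : Countable ι := by
  have hcover : ⋃ n : ℕ, {ξ | w ξ ≤ max a n} = univ :=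
    eq_univ_of_forall fun ξ ↦ mem_iUnion.2 <|
      (exists_nat_ge (w ξ)).imp fun _ hn ↦ hn.trans (le_max_right _ _)
  rw [← countable_univ_iff, ← hcover]
  exact countable_iUnion fun n ↦ (hfin _ (le_max_left _ _)).countable

theorem Set.Finite.encard_toENNReal_eq_natCard {α : Type*} {s : Set α} (hs : s.Finite) :
    (s.encard : ℝ≥0∞) = Nat.card s := by
  rw [← hs.cast_ncard_eq, ENat.toENNReal_coe, Nat.card_coe_set_eq]

section WeylLaw

variable {ι : Type*} (w : ι → ℝ) {Q s c : ℝ}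

theorem ofReal_le_tsum_ofReal_rpow_neg [Countable ι] (hw : ∀ ξ, 1 ≤ w ξ) (hs : 0 < s)
    (hQs : Q < s) (hc : 0 ≤ c) (hN : ∀ t, 1 ≤ t → c * t ^ Q ≤ Nat.card {ξ // w ξ ≤ t}) :
    ENNReal.ofReal (c * s / (s - Q)) ≤ ∑' ξ, ENNReal.ofReal (w ξ ^ (-s)) := by
  rw [tsum_ofReal_rpow_neg_eq_mul_lintegral_encard w one_pos hw hs, mul_comm c, mul_div_assoc,
    ENNReal.ofReal_mul hs.le, ← lintegral_Ici_one_mul_rpow_mul_rpow hc hQs]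
  refine mul_le_mul_right (setLIntegral_mono' measurableSet_Ici fun t ht ↦ ?_) _
  refine mul_le_mul_left ?_ _
  rcases Set.finite_or_infinite {ξ | w ξ ≤ t} with hfin | hinf
  · rw [hfin.encard_toENNReal_eq_natCard, ← ENNReal.ofReal_natCast]
    exact ENNReal.ofReal_le_ofReal (hN t ht)
  · simp [hinf.encard_eq]

theorem tsum_ofReal_rpow_neg_le [Countable ι] (hw : ∀ ξ, 1 ≤ w ξ)
    (hfin : ∀ t, 1 ≤ t → {ξ | w ξ ≤ t}.Finite) (hs : 0 < s) (hQs : Q < s) (hc : 0 ≤ c)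
    (hN : ∀ t, 1 ≤ t → Nat.card {ξ // w ξ ≤ t} ≤ c * t ^ Q) :
    ∑' ξ, ENNReal.ofReal (w ξ ^ (-s)) ≤ ENNReal.ofReal (c * s / (s - Q)) := by
  rw [tsum_ofReal_rpow_neg_eq_mul_lintegral_encard w one_pos hw hs, mul_comm c, mul_div_assoc,
    ENNReal.ofReal_mul hs.le, ← lintegral_Ici_one_mul_rpow_mul_rpow hc hQs]
  refine mul_le_mul_right (setLIntegral_mono' measurableSet_Ici fun t ht ↦ ?_) _
  refine mul_le_mul_left ?_ _
  rw [(hfin t ht).encard_toENNReal_eq_natCard, ← ENNReal.ofReal_natCast]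
  exact ENNReal.ofReal_le_ofReal (hN t ht)

theorem tsum_rpow_neg_bounds_of_card_bounds (hw : ∀ ξ, 1 ≤ w ξ)
    (hfin : ∀ t, 1 ≤ t → {ξ | w ξ ≤ t}.Finite) (hs : 0 < s) (hQs : Q < s) {c₁ c₂ : ℝ}
    (hc₁ : 0 ≤ c₁) (hc₂ : 0 ≤ c₂)
    (hN : ∀ t, 1 ≤ t →
      c₁ * t ^ Q ≤ Nat.card {ξ // w ξ ≤ t} ∧ Nat.card {ξ // w ξ ≤ t} ≤ c₂ * t ^ Q) :
    c₁ * s / (s - Q) ≤ ∑' ξ, w ξ ^ (-s) ∧ ∑' ξ, w ξ ^ (-s) ≤ c₂ * s / (s - Q) := by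
  have : Countable ι := countable_of_finite_sublevel w hfin
  have hlo := ofReal_le_tsum_ofReal_rpow_neg w hw hs hQs hc₁ fun t ht ↦ (hN t ht).1
  have hhi := tsum_ofReal_rpow_neg_le w hw hfin hs hQs hc₂ fun t ht ↦ (hN t ht).2
  have hnonneg : ∀ ξ, 0 ≤ w ξ ^ (-s) := fun ξ ↦ Real.rpow_nonneg (zero_le_one.trans (hw ξ)) _
  have hsum : Summable fun ξ ↦ w ξ ^ (-s) := by
    simpa [ENNReal.toReal_ofReal (hnonneg _)] using
      ENNReal.summable_toReal (hhi.trans_lt ENNReal.ofReal_lt_top).ne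
  rw [← ENNReal.ofReal_tsum_of_nonneg hnonneg hsum] at hlo hhi
  exact ⟨(ENNReal.ofReal_le_ofReal_iff (tsum_nonneg hnonneg)).1 hlo,
    (ENNReal.ofReal_le_ofReal_iff (div_nonneg (mul_nonneg hc₂ hs.le) (sub_pos.2 hQs).le)).1 hhi⟩

end WeylLaw

theorem dixmier_trace_critical_order_two_sided
    {ι : Type*} (w : ι → ℝ) (hw : ∀ ξ, 1 ≤ w ξ)
    (hfin : ∀ lam : ℝ, 1 ≤ lam → {ξ | w ξ ≤ lam}.Finite)
    (Q : ℝ) (hQ : 0 < Q) (c₁ c₂ : ℝ) (hc₁ : 0 < c₁) (hc₂ : 0 < c₂)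
    (hN : ∀ lam : ℝ, ∀ _ : 1 ≤ lam,
      c₁ * lam ^ Q ≤ (Nat.card {ξ // w ξ ≤ lam} : ℝ) ∧
      (Nat.card {ξ // w ξ ≤ lam} : ℝ) ≤ c₂ * lam ^ Q) :
    ∃ c C : ℝ, 0 < c ∧ 0 < C ∧ ∀ p : ℝ, 1 < p → p ≤ 2 →
      c ≤ (p - 1) * (∑' ξ, (w ξ) ^ (-Q * p)) ∧
      (p - 1) * (∑' ξ, (w ξ) ^ (-Q * p)) ≤ C := by
  refine ⟨c₁, 2 * c₂, hc₁, by positivity, fun p hp1 hp2 ↦ ?_⟩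
  have hQp : Q < Q * p := lt_mul_of_one_lt_right hQ hp1
  obtain ⟨hlo, hhi⟩ :=
    tsum_rpow_neg_bounds_of_card_bounds w hw hfin (by positivity) hQp hc₁.le hc₂.le hN
  have hscale : ∀ c, (p - 1) * (c * (Q * p) / (Q * p - Q)) = c * p := fun c ↦ by
    have hp : p - 1 ≠ 0 := by linarith
    field_simp
  rw [neg_mul]
  constructor
  · calc c₁ ≤ c₁ * p := le_mul_of_one_le_right hc₁.le hp1.le
      _ = (p - 1) * (c₁ * (Q * p) / (Q * p - Q)) := (hscale c₁).symm
      _ ≤ _ := mul_le_mul_of_nonneg_left hlo (by linarith)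
  · calc (p - 1) * ∑' ξ, w ξ ^ (-(Q * p)) ≤ (p - 1) * (c₂ * (Q * p) / (Q * p - Q)) :=
          mul_le_mul_of_nonneg_left hhi (by linarith)
      _ = c₂ * p := hscale c₂
      _ ≤ 2 * c₂ := by nlinarith
end

section
/- Let ι be an index type, w : ι → ℝ with w ξ ≥ 1 for all ξ, satisfying the upper Weyl law with exponent Q > 0 (finite level sets, N(λ) ≤ c₂·λ^Q for λ ≥ 1). Let m < −Q. Then the function p ↦ (p − 1) · ∑'_ξ (w ξ)^{m·p} tends to 0 as p tends to 1 from the right (limit along the filter 𝓝[>] 1). (Via the Tauberian formula Tr_ω(A) = lim_{p→1⁺}(p−1)Tr(A^p), this is the paper's claim that the Dixmier trace of a positive multiplier of order m < −Q vanishes.) -/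
/-!
Split the index set into the dyadic shells `2 ^ n ≤ w ξ < 2 ^ (n + 1)`. By the Weyl law the `n`-th
shell has at most `c₂ 2 ^ ((n + 1) Q)` elements, each contributing at most `2 ^ (n m)` to
`∑ w ξ ^ m`, so the shells are dominated by the geometric series `c₂ 2 ^ Q ∑ (2 ^ (Q + m)) ^ n`,
which converges because `m < -Q`. For `p ≥ 1` the sum `∑ w ξ ^ (m p)` is at most `∑ w ξ ^ m`,
hence `(p - 1) ∑ w ξ ^ (m p) = O(p - 1)`.
-/

open Finset Filter Topology

lemma two_pow_log_floor_le {x : ℝ} (hx : 1 ≤ x) : (2 : ℝ) ^ Nat.log 2 ⌊x⌋₊ ≤ x := by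
  have h := Int.zpow_log_le_self (b := 2) (r := x) one_lt_two (by linarith)
  rwa [Int.log_of_one_le_right _ hx, zpow_natCast, Nat.cast_ofNat] at h

lemma lt_two_pow_log_floor_succ {x : ℝ} (hx : 1 ≤ x) : x < (2 : ℝ) ^ (Nat.log 2 ⌊x⌋₊ + 1) := by
  have h := Int.lt_zpow_succ_log_self (b := 2) one_lt_two x
  rwa [Int.log_of_one_le_right _ hx, ← Int.natCast_succ, zpow_natCast, Nat.cast_ofNat] at h

lemma two_pow_succ_rpow_mul_two_pow_rpow (n : ℕ) (Q m : ℝ) :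
    ((2 : ℝ) ^ (n + 1)) ^ Q * ((2 : ℝ) ^ n) ^ m = 2 ^ Q * ((2 : ℝ) ^ (Q + m)) ^ n := by
  rw [pow_succ, Real.mul_rpow (by positivity) zero_le_two, mul_comm _ ((2 : ℝ) ^ Q), mul_assoc,
    ← Real.rpow_add (by positivity), Real.rpow_pow_comm zero_le_two]

section WeylLaw

variable {ι : Type*} {w : ι → ℝ} {Q c₂ : ℝ}

lemma card_le_of_forall_le (hfin : ∀ lam : ℝ, 1 ≤ lam → {ξ | w ξ ≤ lam}.Finite)
    (hN : ∀ lam : ℝ, 1 ≤ lam → (Nat.card {ξ // w ξ ≤ lam} : ℝ) ≤ c₂ * lam ^ Q)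
    {s : Finset ι} {lam : ℝ} (hlam : 1 ≤ lam) (hs : ∀ ξ ∈ s, w ξ ≤ lam) :
    (#s : ℝ) ≤ c₂ * lam ^ Q := by
  have hcard : #s ≤ Nat.card {ξ // w ξ ≤ lam} :=
    calc #s = (s : Set ι).ncard := (Set.ncard_coe_finset s).symm
      _ ≤ {ξ | w ξ ≤ lam}.ncard := Set.ncard_le_ncard hs (hfin lam hlam)
      _ = Nat.card {ξ // w ξ ≤ lam} := (Nat.card_coe_set_eq _).symm
  exact (Nat.cast_le.mpr hcard).trans (hN lam hlam)

lemma sum_rpow_le_of_forall_mem_dyadic (hfin : ∀ lam : ℝ, 1 ≤ lam → {ξ | w ξ ≤ lam}.Finite)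
    (hN : ∀ lam : ℝ, 1 ≤ lam → (Nat.card {ξ // w ξ ≤ lam} : ℝ) ≤ c₂ * lam ^ Q)
    {m : ℝ} (hm : m ≤ 0) {s : Finset ι} (n : ℕ)
    (hs : ∀ ξ ∈ s, 2 ^ n ≤ w ξ ∧ w ξ ≤ 2 ^ (n + 1)) :
    ∑ ξ ∈ s, w ξ ^ m ≤ c₂ * 2 ^ Q * ((2 : ℝ) ^ (Q + m)) ^ n :=
  calc ∑ ξ ∈ s, w ξ ^ m ≤ #s * ((2 : ℝ) ^ n) ^ m := by
        simpa using sum_le_card_nsmul s _ _ fun ξ hξ ↦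
          Real.rpow_le_rpow_of_nonpos (by positivity) (hs ξ hξ).1 hm
    _ ≤ c₂ * ((2 : ℝ) ^ (n + 1)) ^ Q * ((2 : ℝ) ^ n) ^ m := by
        gcongr
        exact card_le_of_forall_le hfin hN (one_le_pow₀ one_le_two) fun ξ hξ ↦ (hs ξ hξ).2
    _ = c₂ * 2 ^ Q * ((2 : ℝ) ^ (Q + m)) ^ n := by
        rw [mul_assoc, two_pow_succ_rpow_mul_two_pow_rpow, mul_assoc]

lemma sum_rpow_le_of_weyl (hw : ∀ ξ, 1 ≤ w ξ)
    (hfin : ∀ lam : ℝ, 1 ≤ lam → {ξ | w ξ ≤ lam}.Finite)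
    (hN : ∀ lam : ℝ, 1 ≤ lam → (Nat.card {ξ // w ξ ≤ lam} : ℝ) ≤ c₂ * lam ^ Q)
    (hQ : 0 < Q) {m : ℝ} (hm : m < -Q) (s : Finset ι) :
    ∑ ξ ∈ s, w ξ ^ m ≤ c₂ * 2 ^ Q * (1 - 2 ^ (Q + m))⁻¹ := by
  have hc₂ : 0 ≤ c₂ := by simpa using (Nat.cast_nonneg _).trans (hN 1 le_rfl)
  set r : ℝ := 2 ^ (Q + m)
  have hr0 : 0 ≤ r := by positivity
  have hr1 : r < 1 := Real.rpow_lt_one_of_one_lt_of_neg one_lt_two (by linarith)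
  set shell : ι → ℕ := fun ξ ↦ Nat.log 2 ⌊w ξ⌋₊
  have hmaps : ∀ ξ ∈ s, shell ξ ∈ range (s.sup shell + 1) := fun ξ hξ ↦
    mem_range.mpr (Nat.lt_succ_of_le (le_sup hξ))
  calc ∑ ξ ∈ s, w ξ ^ m
      = ∑ n ∈ range (s.sup shell + 1), ∑ ξ ∈ s with shell ξ = n, w ξ ^ m :=
        (sum_fiberwise_of_maps_to hmaps _).symm
    _ ≤ ∑ n ∈ range (s.sup shell + 1), c₂ * 2 ^ Q * r ^ n := by
        refine sum_le_sum fun n _ ↦ sum_rpow_le_of_forall_mem_dyadic hfin hN (by linarith) n ?_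
        intro ξ hξ
        obtain ⟨-, rfl⟩ := mem_filter.mp hξ
        exact ⟨two_pow_log_floor_le (hw ξ), (lt_two_pow_log_floor_succ (hw ξ)).le⟩
    _ = c₂ * 2 ^ Q * ∑ n ∈ range (s.sup shell + 1), r ^ n := (mul_sum _ _ _).symm
    _ ≤ c₂ * 2 ^ Q * (1 - r)⁻¹ := by
        gcongr
        rw [← tsum_geometric_of_lt_one hr0 hr1]
        exact (summable_geometric_of_lt_one hr0 hr1).sum_le_tsum _ fun n _ ↦ pow_nonneg hr0 n

lemma summable_rpow_of_weyl (hw : ∀ ξ, 1 ≤ w ξ)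
    (hfin : ∀ lam : ℝ, 1 ≤ lam → {ξ | w ξ ≤ lam}.Finite)
    (hN : ∀ lam : ℝ, 1 ≤ lam → (Nat.card {ξ // w ξ ≤ lam} : ℝ) ≤ c₂ * lam ^ Q)
    (hQ : 0 < Q) {m : ℝ} (hm : m < -Q) : Summable fun ξ ↦ w ξ ^ m :=
  summable_of_sum_le (fun ξ ↦ Real.rpow_nonneg (zero_le_one.trans (hw ξ)) m)
    (sum_rpow_le_of_weyl hw hfin hN hQ hm)

lemma tsum_rpow_le_tsum_rpow_of_le (hw : ∀ ξ, 1 ≤ w ξ) {e m : ℝ}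
    (hsum : Summable fun ξ ↦ w ξ ^ m) (he : e ≤ m) : ∑' ξ, w ξ ^ e ≤ ∑' ξ, w ξ ^ m := by
  have hle : ∀ ξ, w ξ ^ e ≤ w ξ ^ m := fun ξ ↦ Real.rpow_le_rpow_of_exponent_le (hw ξ) he
  have hnonneg : ∀ ξ, 0 ≤ w ξ ^ e := fun ξ ↦ Real.rpow_nonneg (zero_le_one.trans (hw ξ)) e
  exact (hsum.of_nonneg_of_le hnonneg hle).tsum_le_tsum hle hsum

end WeylLaw

theorem dixmier_trace_vanishes_below_critical_order_general
    {ι : Type*} (w : ι → ℝ) (hw : ∀ ξ, 1 ≤ w ξ)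
    (hfin : ∀ lam : ℝ, 1 ≤ lam → {ξ | w ξ ≤ lam}.Finite)
    (Q : ℝ) (hQ : 0 < Q) (c₂ : ℝ)
    (hN : ∀ lam : ℝ, 1 ≤ lam → (Nat.card {ξ // w ξ ≤ lam} : ℝ) ≤ c₂ * lam ^ Q)
    (m : ℝ) (hm : m < -Q) :
    Filter.Tendsto (fun p : ℝ => (p - 1) * (∑' ξ, (w ξ) ^ (m * p)))
      (nhdsWithin 1 (Set.Ioi 1)) (nhds 0) := by
  have hsum := summable_rpow_of_weyl hw hfin hN hQ hm
  have hbounded : ∀ᶠ p in 𝓝[>] 1, ‖∑' ξ, w ξ ^ (m * p)‖ ≤ ∑' ξ, w ξ ^ m := by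
    filter_upwards [self_mem_nhdsWithin] with p (hp : 1 < p)
    rw [Real.norm_of_nonneg (tsum_nonneg fun ξ ↦ Real.rpow_nonneg (zero_le_one.trans (hw ξ)) _)]
    exact tsum_rpow_le_tsum_rpow_of_le hw hsum (by nlinarith)
  exact (tendsto_sub_nhds_zero_iff.mpr (tendsto_id.mono_left nhdsWithin_le_nhds))
    |>.zero_mul_isBoundedUnder_le (isBoundedUnder_of_eventually_le hbounded)

theorem dixmier_trace_vanishes_below_critical_order
    {ι : Type*} (w : ι → ℝ) (hw : ∀ ξ, 1 ≤ w ξ)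
    (hfin : ∀ lam : ℝ, 1 ≤ lam → {ξ | w ξ ≤ lam}.Finite)
    (Q : ℝ) (hQ : 0 < Q) (c₂ : ℝ) (hc₂ : 0 < c₂)
    (hN : ∀ lam : ℝ, 1 ≤ lam → (Nat.card {ξ // w ξ ≤ lam} : ℝ) ≤ c₂ * lam ^ Q)
    (m : ℝ) (hm : m < -Q) :
    Filter.Tendsto (fun p : ℝ => (p - 1) * (∑' ξ, (w ξ) ^ (m * p)))
      (nhdsWithin 1 (Set.Ioi 1)) (nhds 0) :=
  dixmier_trace_vanishes_below_critical_order_general w hw hfin Q hQ c₂ hN m hm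
end
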